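/- arXiv:2511.21096 — 10 statements merged into one kernel-verified Lean document; each statement's English description precedes it below -/
import Mathlib

section
/- Let r ≥ 2 and s ≥ 0, and let H be an r-uniform hypergraph on n vertices with matching number ν(H) = s. Then the number of vertices of H whose degree exceeds r(s+1)n^{r−2} is at most s. -/
open Finset
variable {V : Type*}

/-- `H` is an `r`-uniform hypergraph: every edge is an `r`-element set. -/
def IsUniform (r : ℕ) (H : Finset (Finset V)) : Prop := ∀ e ∈ H, e.card = r

/-- The degree of a vertex `v`: the number of edges of `H` containing `v`. -/
def hdeg [DecidableEq V] (H : Finset (Finset V)) (v : V) : ℕ :=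
  (H.filter fun e => v ∈ e).card

/-- The matching number of `H` is at most `s`: every set of pairwise disjoint edges of `H`
has at most `s` elements. -/
def MatchingLE (H : Finset (Finset V)) (s : ℕ) : Prop :=
  ∀ M ⊆ H, ((M : Set (Finset V)).Pairwise fun a b => Disjoint a b) → M.card ≤ s

lemma pair_count [Fintype V] [DecidableEq V] {r n : ℕ}
    {H : Finset (Finset V)} (hunif : IsUniform r H) (hn : Fintype.card V = n)
    {v u : V} (hvu : v ≠ u) :
    (H.filter fun e => v ∈ e ∧ u ∈ e).card ≤ n ^ (r - 2) := by
  calc (H.filter fun e => v ∈ e ∧ u ∈ e).card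
      ≤ ((univ : Finset V).powersetCard (r-2)).card := by
        apply Finset.card_le_card_of_injOn (fun e => e \ {v, u})
        · intro e he
          simp only [mem_coe, mem_filter] at he ⊢
          have hsub : {v, u} ⊆ e := by
            intro x hx; simp at hx; rcases hx with h | h <;> subst h
            exacts [he.2.1, he.2.2]
          rw [mem_powersetCard]
          refine ⟨fun x _ => mem_univ x, ?_⟩
          rw [card_sdiff_of_subset hsub, hunif e he.1, card_insert_of_notMem (by simp [hvu]),
            card_singleton]
        · intro a ha b hb hab
          simp only [coe_filter, Set.mem_setOf_eq] at ha hb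
          have hsa : {v, u} ⊆ a := by
            intro x hx; simp at hx; rcases hx with h | h <;> subst h
            exacts [ha.2.1, ha.2.2]
          have hsb : {v, u} ⊆ b := by
            intro x hx; simp at hx; rcases hx with h | h <;> subst h
            exacts [hb.2.1, hb.2.2]
          simp only [] at hab
          have : a \ {v,u} ∪ {v,u} = b \ {v,u} ∪ {v,u} := by rw [hab]
          rwa [sdiff_union_of_subset hsa, sdiff_union_of_subset hsb] at this
    _ ≤ n ^ (r-2) := by
        rw [card_powersetCard, card_univ, hn]; exact Nat.choose_le_pow n (r-2)

lemma hit_count [Fintype V] [DecidableEq V] {r n : ℕ}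
    {H : Finset (Finset V)} (hunif : IsUniform r H) (hn : Fintype.card V = n)
    {v : V} {A : Finset V} (hv : v ∉ A) :
    (H.filter fun e => v ∈ e ∧ ∃ u ∈ A, u ∈ e).card ≤ A.card * n ^ (r-2) := by
  calc (H.filter fun e => v ∈ e ∧ ∃ u ∈ A, u ∈ e).card
      ≤ (A.biUnion fun u => H.filter fun e => v ∈ e ∧ u ∈ e).card := by
        apply card_le_card
        intro e he
        simp only [mem_filter, mem_biUnion] at *
        obtain ⟨heH, hv', u, hu, hue⟩ := he
        exact ⟨u, hu, heH, hv', hue⟩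
    _ ≤ ∑ u ∈ A, (H.filter fun e => v ∈ e ∧ u ∈ e).card := card_biUnion_le
    _ ≤ ∑ u ∈ A, n^(r-2) :=
        Finset.sum_le_sum fun u hu => pair_count hunif hn (fun h => hv (h ▸ hu))
    _ = A.card * n^(r-2) := by rw [sum_const, smul_eq_mul]

lemma greedy [Fintype V] [DecidableEq V] {r s n : ℕ} (hr : 2 ≤ r)
    {H : Finset (Finset V)} (hunif : IsUniform r H) (hn : Fintype.card V = n)
    {Wh : Finset V} (hWh : ∀ v ∈ Wh, r * (s + 1) * n ^ (r - 2) < hdeg H v)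
    (hWcard : Wh.card = s + 1) :
    ∀ t : ℕ, ∀ W ⊆ Wh, W.card = t →
      ∃ M ⊆ H, ((M : Set (Finset V)).Pairwise fun a b => Disjoint a b) ∧ M.card = t ∧
        ∀ e ∈ M, Disjoint e (Wh \ W) := by
  intro t
  induction t with
  | zero =>
      intro W _ hW
      exact ⟨∅, empty_subset _, by simp, rfl, by simp⟩
  | succ t ih =>
      intro W hWsub hW
      have hne : W.Nonempty := card_pos.mp (by omega)
      obtain ⟨v, hv⟩ := hne
      have hvWh : v ∈ Wh := hWsub hv
      obtain ⟨M, hMH, hMdisj, hMcard, hMav⟩ := ih (W.erase v)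
        ((erase_subset v W).trans hWsub) (by rw [card_erase_of_mem hv, hW]; rfl)
      -- every edge of M avoids v
      have hvM : ∀ f ∈ M, v ∉ f := by
        intro f hf hvf
        have := hMav f hf
        have hvm : v ∈ Wh \ W.erase v := mem_sdiff.mpr ⟨hvWh, fun h => (mem_erase.mp h).1 rfl⟩
        exact (disjoint_right.mp this hvm) hvf
      set A : Finset V := M.biUnion id ∪ (Wh \ W) with hA
      have hvA : v ∉ A := by
        simp only [hA, mem_union, mem_biUnion, mem_sdiff, id] at *
        push_neg
        exact ⟨fun f hf => hvM f hf, fun _ => hv⟩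
      -- card bound on A
      have hAcard : A.card ≤ s * r := by
        have h1 : (M.biUnion id).card ≤ t * r := by
          calc (M.biUnion id).card ≤ ∑ f ∈ M, (id f).card := card_biUnion_le
            _ = ∑ f ∈ M, r := Finset.sum_congr rfl fun f hf => hunif f (hMH hf)
            _ = t * r := by rw [sum_const, hMcard, smul_eq_mul]
        have h2 : (Wh \ W).card ≤ s - t := by
          rw [card_sdiff_of_subset hWsub, hWcard, hW]; omega
        have ht : t ≤ s := by
          have := card_le_card hWsub
          omega
        obtain ⟨d, hd⟩ : ∃ d, s = t + d := ⟨s - t, by omega⟩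
        calc A.card ≤ (M.biUnion id).card + (Wh \ W).card := card_union_le _ _
          _ ≤ t * r + (s - t) := Nat.add_le_add h1 h2
          _ ≤ s * r := by subst hd; have : t + d - t = d := by omega
                          rw [this]; nlinarith
      -- find a good edge through v
      have hnpos : 0 < n := by rw [← hn]; exact Fintype.card_pos_iff.mpr ⟨v⟩
      have hlt : (H.filter fun e => v ∈ e ∧ ∃ u ∈ A, u ∈ e).card
          < (H.filter fun e => v ∈ e).card := by
        calc (H.filter fun e => v ∈ e ∧ ∃ u ∈ A, u ∈ e).card
            ≤ A.card * n ^ (r-2) := hit_count hunif hn hvA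
          _ ≤ s * r * n ^ (r-2) := Nat.mul_le_mul_right _ hAcard
          _ < r * (s+1) * n ^ (r-2) := by
              have : 0 < n ^ (r-2) := Nat.pow_pos hnpos
              nlinarith
          _ < hdeg H v := hWh v hvWh
      obtain ⟨e, he⟩ : ∃ e ∈ H, v ∈ e ∧ ¬ ∃ u ∈ A, u ∈ e := by
        by_contra hcon
        push_neg at hcon
        have : (H.filter fun e => v ∈ e) ⊆ H.filter fun e => v ∈ e ∧ ∃ u ∈ A, u ∈ e := by
          intro e he
          rw [mem_filter] at *
          exact ⟨he.1, he.2, hcon e he.1 he.2⟩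
        exact absurd (card_le_card this) (by omega)
      obtain ⟨heH, hve, heA⟩ := he
      push_neg at heA
      have heAdisj : Disjoint e A := by
        rw [disjoint_left]; intro x hx hxA; exact heA x hxA hx
      have heM : e ∉ M := fun h => hvM e h hve
      refine ⟨insert e M, ?_, ?_, ?_, ?_⟩
      · intro f hf
        rcases mem_insert.mp hf with h | h
        · exact h ▸ heH
        · exact hMH h
      · rw [coe_insert]
        apply Set.Pairwise.insert hMdisj
        intro f hf _
        have hdf : Disjoint e f := by
          apply Disjoint.mono_right _ heAdisj
          intro x hx
          exact mem_union_left _ (mem_biUnion.mpr ⟨f, hf, hx⟩)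
        exact ⟨hdf, hdf.symm⟩
      · rw [card_insert_of_notMem heM, hMcard]
      · intro f hf
        rcases mem_insert.mp hf with h | h
        · subst h
          apply Disjoint.mono_right _ heAdisj
          exact fun x hx => mem_union_right _ hx
        · exact (hMav f h).mono_right (sdiff_subset_sdiff le_rfl (erase_subset v W))

theorem statement1 {V : Type*} [Fintype V] [DecidableEq V] (r s n : ℕ) (hr : 2 ≤ r)
    (H : Finset (Finset V)) (hunif : IsUniform r H) (hn : Fintype.card V = n)
    (hle : MatchingLE H s)
    (hge : ∃ M ⊆ H, ((M : Set (Finset V)).Pairwise fun a b => Disjoint a b) ∧ M.card = s) :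
    (Finset.univ.filter fun v => r * (s + 1) * n ^ (r - 2) < hdeg H v).card ≤ s := by
  by_contra hcon
  push_neg at hcon
  obtain ⟨Wh, hWhsub, hWhcard⟩ := Finset.exists_subset_card_eq (Nat.succ_le_of_lt hcon)
  have hWh : ∀ v ∈ Wh, r * (s + 1) * n ^ (r - 2) < hdeg H v := by
    intro v hv
    exact (mem_filter.mp (hWhsub hv)).2
  obtain ⟨M, hMH, hMdisj, hMcard, _⟩ :=
    greedy hr hunif hn hWh hWhcard (s+1) Wh (Finset.Subset.refl _) hWhcard
  have := hle M hMH hMdisj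
  omega
end

section
/- Let ℓ ≥ r ≥ 3 and let H be an r-uniform hypergraph that is 𝒦_{ℓ+1}^r-free. Then for every vertex v of H, the link L_H(v) (an (r−1)-uniform hypergraph) is 𝒦_ℓ^{r−1}-free. -/
open Finset

variable {V : Type*}

/-- `H` contains a member of the family `𝒦_m^r`: there is an `m`-set `K` of vertices (the core)
and a subhypergraph `S ⊆ H` with at most `C(m,2)` edges such that every pair of distinct
vertices of `K` is contained in some edge of `S`. -/
def HasK (m : ℕ) (H : Finset (Finset V)) : Prop :=
  ∃ K : Finset V, K.card = m ∧ ∃ S ⊆ H, S.card ≤ m.choose 2 ∧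
    ∀ x ∈ K, ∀ y ∈ K, x ≠ y → ∃ e ∈ S, x ∈ e ∧ y ∈ e

/-- The link of a vertex `v` in `H`: the `(r-1)`-sets `A` with `{v} ∪ A ∈ H`. -/
def link [DecidableEq V] (H : Finset (Finset V)) (v : V) : Finset (Finset V) :=
  (H.filter fun e => v ∈ e).image fun e => e.erase v

theorem statement2 {V : Type*} [DecidableEq V] (r ℓ : ℕ) (hr : 3 ≤ r) (hℓ : r ≤ ℓ)
    (H : Finset (Finset V)) (hunif : IsUniform r H) (hfree : ¬ HasK (ℓ + 1) H) :
    ∀ v : V, ¬ HasK ℓ (link H v) := by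
  intro v hK
  obtain ⟨K, hKcard, S, hS, hScard, hcover⟩ := hK
  -- edges of the link don't contain v
  have hvnot : ∀ A ∈ S, v ∉ A := by
    intro A hA
    have := hS hA
    simp only [link, mem_image, mem_filter] at this
    obtain ⟨e, _, rfl⟩ := this
    exact notMem_erase v e
  -- v ∉ K
  have hvK : v ∉ K := by
    intro hvK
    have h2 : 1 < K.card := by omega
    obtain ⟨y, hy, hyv⟩ := exists_mem_ne h2 v
    obtain ⟨A, hA, hvA, _⟩ := hcover v hvK y hy (Ne.symm hyv)
    exact hvnot A hA hvA
  -- lift edges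
  have hlift : ∀ A ∈ S, insert v A ∈ H := by
    intro A hA
    have := hS hA
    simp only [link, mem_image, mem_filter] at this
    obtain ⟨e, ⟨heH, hve⟩, rfl⟩ := this
    rwa [insert_erase hve]
  apply hfree
  refine ⟨insert v K, ?_, S.image (insert v ·), ?_, ?_, ?_⟩
  · rw [card_insert_of_notMem hvK, hKcard]
  · intro e he
    simp only [mem_image] at he
    obtain ⟨A, hA, rfl⟩ := he
    exact hlift A hA
  · calc (S.image (insert v ·)).card ≤ S.card := card_image_le
      _ ≤ ℓ.choose 2 := hScard
      _ ≤ (ℓ + 1).choose 2 := Nat.choose_le_choose 2 (Nat.le_succ ℓ)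
  · intro x hx y hy hxy
    simp only [mem_insert] at hx hy
    -- helper: any vertex of K is in some edge with v
    have hpair : ∀ z ∈ K, ∃ A ∈ S, z ∈ A := by
      intro z hz
      have h2 : 1 < K.card := by omega
      obtain ⟨w, hw, hwz⟩ := exists_mem_ne h2 z
      obtain ⟨A, hA, hwA, hzA⟩ := hcover w hw z hz hwz
      exact ⟨A, hA, hzA⟩
    rcases hx with rfl | hx
    · rcases hy with rfl | hy
      · exact absurd rfl hxy
      · obtain ⟨A, hA, hyA⟩ := hpair y hy
        exact ⟨insert x A, mem_image_of_mem _ hA, mem_insert_self _ _,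
          mem_insert_of_mem hyA⟩
    · rcases hy with rfl | hy
      · obtain ⟨A, hA, hxA⟩ := hpair x hx
        exact ⟨insert y A, mem_image_of_mem _ hA, mem_insert_of_mem hxA,
          mem_insert_self _ _⟩
      · obtain ⟨A, hA, hxA, hyA⟩ := hcover x hx y hy hxy
        exact ⟨insert v A, mem_image_of_mem _ hA, mem_insert_of_mem hxA,
          mem_insert_of_mem hyA⟩
end

section
/- Let ℓ ≥ r ≥ 3 and s ≥ 1 be integers, and let n ≥ s + ℓ. The r-uniform hypergraph 𝒢(n,ℓ,s,r) is 𝒦_{ℓ+1}^r-free, has matching number at most s, and has exactly s · t_{r−1}(n−s, ℓ−1) edges. -/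
open Finset

variable {V : Type*}

/-- `t_r(n,ℓ)`: the number of edges of the generalized Turán hypergraph `T_r(n,ℓ)`, realized
on `Fin n` with the balanced partition into `ℓ` parts given by residues modulo `ℓ` (each part
has size `⌊n/ℓ⌋` or `⌈n/ℓ⌉`); the edges are the `r`-sets meeting each part at most once. -/
def turanCount (r n ℓ : ℕ) : ℕ :=
  ((Finset.univ : Finset (Finset (Fin n))).filter fun e => e.card = r ∧
    ∀ x ∈ e, ∀ y ∈ e, x.val % ℓ = y.val % ℓ → x = y).card

/-- The extremal hypergraph `𝒢(n,ℓ,s,r)` realized on `Fin n`: `V₀ = {0,…,s-1}`, the remaining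
`n - s` vertices are split into `ℓ-1` balanced parts by residues modulo `ℓ-1`, and the edges
are the `r`-sets with exactly one vertex in `V₀` and the other `r-1` vertices in pairwise
distinct parts. -/
def calG (n ℓ s r : ℕ) : Finset (Finset (Fin n)) :=
  Finset.univ.filter fun e => e.card = r ∧
    (e.filter fun v => v.val < s).card = 1 ∧
    ∀ x ∈ e, ∀ y ∈ e, s ≤ x.val → s ≤ y.val →
      (x.val - s) % (ℓ - 1) = (y.val - s) % (ℓ - 1) → x = y

theorem statement5 (r ℓ s n : ℕ) (hr : 3 ≤ r) (hℓ : r ≤ ℓ) (hs : 1 ≤ s) (hn : s + ℓ ≤ n) :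
    IsUniform r (calG n ℓ s r) ∧ ¬ HasK (ℓ + 1) (calG n ℓ s r) ∧
      MatchingLE (calG n ℓ s r) s ∧
      (calG n ℓ s r).card = s * turanCount (r - 1) (n - s) (ℓ - 1) := by
  have hsn : s < n := by omega
  have hmem : ∀ e ∈ calG n ℓ s r, e.card = r ∧ (e.filter fun v => v.val < s).card = 1 ∧
      ∀ x ∈ e, ∀ y ∈ e, s ≤ x.val → s ≤ y.val →
        (x.val - s) % (ℓ - 1) = (y.val - s) % (ℓ - 1) → x = y := by
    intro e he
    exact (mem_filter.mp he).2
  refine ⟨fun e he => (hmem e he).1, ?_, ?_, ?_⟩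
  · -- K_{ℓ+1}-free
    rintro ⟨K, hK, S, hS, -, hcov⟩
    have key : K.card ≤ (Finset.range ℓ).card := by
      apply Finset.card_le_card_of_injOn
        (fun v : Fin n => if v.val < s then ℓ - 1 else (v.val - s) % (ℓ - 1))
      · intro v _
        simp only [mem_coe, mem_range]
        split
        · omega
        · have := Nat.mod_lt (v.val - s) (show 0 < ℓ - 1 by omega)
          omega
      · intro x hx y hy hxy
        by_contra hne
        obtain ⟨e, heS, hxe, hye⟩ := hcov x hx y hy hne
        obtain ⟨-, hc1, hdist⟩ := hmem e (hS heS)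
        by_cases h1 : x.val < s <;> by_cases h2 : y.val < s
        · have hsub : {x, y} ⊆ e.filter fun v => v.val < s := by
            intro z hz
            simp only [mem_insert, mem_singleton] at hz
            rcases hz with rfl | rfl <;> simp [mem_filter, hxe, hye, h1, h2]
          have hcard := Finset.card_le_card hsub
          rw [Finset.card_insert_of_notMem (by simpa using hne), card_singleton] at hcard
          omega
        · simp only [if_pos h1, if_neg h2] at hxy
          have := Nat.mod_lt (y.val - s) (show 0 < ℓ - 1 by omega)
          omega
        · simp only [if_neg h1, if_pos h2] at hxy
          have := Nat.mod_lt (x.val - s) (show 0 < ℓ - 1 by omega)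
          omega
        · simp only [if_neg h1, if_neg h2] at hxy
          exact hne (hdist x hxe y hye (by omega) (by omega) hxy)
    rw [hK, card_range] at key
    omega
  · -- matching number ≤ s
    intro M hM hpair
    classical
    set g : Finset (Fin n) → Fin n := fun e =>
      if h : (e.filter fun v => v.val < s).Nonempty then h.choose else ⟨0, by omega⟩ with hg
    have hge : ∀ e ∈ M, g e ∈ e ∧ (g e).val < s := by
      intro e he
      obtain ⟨-, hc1, -⟩ := hmem e (hM he)
      have hne : (e.filter fun v => v.val < s).Nonempty := card_pos.mp (by omega)
      have := hne.choose_spec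
      rw [mem_filter] at this
      simpa [hg, dif_pos hne] using this
    have key : M.card ≤ ((Finset.univ : Finset (Fin n)).filter fun v => v.val < s).card := by
      apply Finset.card_le_card_of_injOn g
      · intro e he
        simp only [mem_coe, mem_filter, mem_univ, true_and]
        exact (hge e he).2
      · intro a ha b hb hab
        by_contra hne
        have hd := hpair ha hb hne
        exact (Finset.disjoint_left.mp hd (hge a ha).1) (hab ▸ (hge b hb).1)
    have key2 : ((Finset.univ : Finset (Fin n)).filter fun v => v.val < s).card ≤
        (Finset.range s).card := by
      apply Finset.card_le_card_of_injOn Fin.val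
      · intro v hv
        simp only [mem_coe, mem_filter] at hv
        simpa [mem_range] using hv.2
      · exact fun a _ b _ h => Fin.ext h
    rw [card_range] at key2
    omega
  · -- edge count
    classical
    set B := (Finset.univ : Finset (Finset (Fin (n-s)))).filter fun T => T.card = r - 1 ∧
      ∀ x ∈ T, ∀ y ∈ T, x.val % (ℓ-1) = y.val % (ℓ-1) → x = y with hB
    have hsh : ∀ x : Fin (n - s), x.val + s < n := fun x => by have := x.isLt; omega
    set sh : Fin (n-s) → Fin n := fun x => ⟨x.val + s, hsh x⟩ with hshdef
    have hshinj : Function.Injective sh := by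
      intro x y h
      have : x.val + s = y.val + s := congrArg Fin.val h
      exact Fin.ext (by omega)
    set f : Fin s × Finset (Fin (n-s)) → Finset (Fin n) :=
      fun p => insert (Fin.castLE (by omega : s ≤ n) p.1) (p.2.image sh) with hfdef
    have hnotmem : ∀ (v : Fin s) (T : Finset (Fin (n-s))),
        (Fin.castLE (by omega : s ≤ n) v) ∉ T.image sh := by
      intro v T hmem'
      obtain ⟨a, -, ha⟩ := mem_image.mp hmem'
      have := congrArg Fin.val ha
      simp only [Fin.coe_castLE, hshdef] at this
      have := v.isLt
      omega
    have hcard : ((Finset.univ : Finset (Fin s)) ×ˢ B).card = (calG n ℓ s r).card := by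
      apply Finset.card_bij (fun p _ => f p)
      · -- maps into calG
        rintro ⟨v, T⟩ hp
        simp only [mem_product, mem_univ, true_and, hB, mem_filter] at hp
        obtain ⟨hTc, hTd⟩ := hp
        have hv0 : (Fin.castLE (by omega : s ≤ n) v).val < s := by
          simp only [Fin.coe_castLE]; exact v.isLt
        simp only [calG, mem_filter, mem_univ, true_and]
        refine ⟨?_, ?_, ?_⟩
        · rw [hfdef]
          simp only
          rw [Finset.card_insert_of_notMem (hnotmem v T),
            Finset.card_image_of_injective _ hshinj, hTc]
          omega
        · have : ((f (v, T)).filter fun z => z.val < s) =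
              {Fin.castLE (by omega : s ≤ n) v} := by
            ext z
            simp only [mem_filter, hfdef, mem_insert, mem_image, mem_singleton]
            constructor
            · rintro ⟨hz1 | ⟨a, -, rfl⟩, hz2⟩
              · exact hz1
              · simp only [hshdef] at hz2; omega
            · rintro rfl
              exact ⟨Or.inl rfl, hv0⟩
          rw [this, card_singleton]
        · intro x hx y hy hxs hys hxy
          simp only [hfdef, mem_insert, mem_image] at hx hy
          rcases hx with rfl | ⟨a, ha, rfl⟩
          · omega
          rcases hy with rfl | ⟨b, hb, rfl⟩
          · omega
          have hav : (sh a).val - s = a.val := by simp [hshdef]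
          have hbv : (sh b).val - s = b.val := by simp [hshdef]
          rw [hav, hbv] at hxy
          exact congrArg sh (hTd a ha b hb hxy)
      · -- injective
        rintro ⟨v, T⟩ hp ⟨w, U⟩ hq h
        simp only [hfdef] at h
        have hvw : (Fin.castLE (by omega : s ≤ n) v) = (Fin.castLE (by omega : s ≤ n) w) := by
          have hmem1 : (Fin.castLE (by omega : s ≤ n) v) ∈
              insert (Fin.castLE (by omega : s ≤ n) w) (U.image sh) := by
            rw [← h]; exact mem_insert_self _ _
          rcases mem_insert.mp hmem1 with h' | h'
          · exact h'
          · exact absurd h' (by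
              intro hc
              obtain ⟨a, -, ha⟩ := mem_image.mp hc
              have := congrArg Fin.val ha
              simp only [Fin.coe_castLE, hshdef] at this
              have := v.isLt
              omega)
        have hTU : T.image sh = U.image sh := by
          have h1 := Finset.erase_insert (hnotmem v T)
          have h2 := Finset.erase_insert (hnotmem w U)
          rw [← h1, ← h2, h, hvw]
        have : T = U := by
          apply Finset.image_injective hshinj hTU
        have hvw' : v = w := Fin.ext (by
          have := congrArg Fin.val hvw
          simpa using this)
        rw [Prod.mk.injEq]
        exact ⟨hvw', this⟩
      · -- surjective
        intro e he
        obtain ⟨hec, hc1, hdist⟩ := hmem e he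
        obtain ⟨v₀, hv₀⟩ := Finset.card_eq_one.mp hc1
        have hv₀e : v₀ ∈ e ∧ v₀.val < s := by
          have : v₀ ∈ e.filter fun v => v.val < s := by rw [hv₀]; exact mem_singleton_self _
          exact mem_filter.mp this
        set E := e.filter fun z => ¬ z.val < s with hEdef
        have hEcard : E.card = r - 1 := by
          have h2 : E.card = e.card - (e.filter fun v => v.val < s).card := by
            rw [hEdef, Finset.filter_not, Finset.card_sdiff_of_subset (Finset.filter_subset _ _)]
          rw [h2, hc1, hec]
        set un : Fin n → Fin (n - s) := fun z => ⟨z.val - s, by have := z.isLt; omega⟩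
          with hundef
        set T := E.image un with hTdef
        have huninj : Set.InjOn un E := by
          intro a ha b hb hab
          simp only [hEdef, mem_filter, coe_filter, Set.mem_setOf_eq] at ha hb
          have := congrArg Fin.val hab
          simp only [hundef] at this
          exact Fin.ext (by omega)
        have hTcard : T.card = r - 1 := by
          rw [hTdef, Finset.card_image_of_injOn huninj, hEcard]
        have hTmem : (v₀.val, T).1 < s := hv₀e.2
        refine ⟨(⟨v₀.val, hv₀e.2⟩, T), ?_, ?_⟩
        · simp only [mem_product, mem_univ, true_and, hB, mem_filter]
          refine ⟨hTcard, ?_⟩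
          intro x hx y hy hxy
          obtain ⟨a, ha, rfl⟩ := mem_image.mp (hTdef ▸ hx)
          obtain ⟨b, hb, rfl⟩ := mem_image.mp (hTdef ▸ hy)
          simp only [hEdef, mem_filter] at ha hb
          simp only [hundef] at hxy
          have hab := hdist a ha.1 b hb.1 (by omega) (by omega) hxy
          rw [hab]
        · simp only [hfdef]
          have hcast : (Fin.castLE (by omega : s ≤ n) (⟨v₀.val, hv₀e.2⟩ : Fin s)) = v₀ :=
            Fin.ext rfl
          rw [hcast]
          have himg : T.image sh = E := by
            rw [hTdef, Finset.image_image]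
            have : ∀ z ∈ E, (sh ∘ un) z = z := by
              intro z hz
              simp only [hEdef, mem_filter] at hz
              exact Fin.ext (by simp [hshdef, hundef]; omega)
            rw [Finset.image_congr this, Finset.image_id']
          rw [himg]
          ext z
          simp only [mem_insert, hEdef, mem_filter]
          constructor
          · rintro (rfl | ⟨hz, -⟩)
            · exact hv₀e.1
            · exact hz
          · intro hz
            by_cases hzs : z.val < s
            · left
              have : z ∈ e.filter fun v => v.val < s := mem_filter.mpr ⟨hz, hzs⟩
              rw [hv₀] at this
              exact mem_singleton.mp this
            · exact Or.inr ⟨hz, hzs⟩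
    rw [← hcard, Finset.card_product, card_univ, Fintype.card_fin]
    rfl
end

section
/- Let ℓ ≥ r ≥ 3, s ≥ 1, and let n be sufficiently large. If H is an n-vertex 𝒦_{ℓ+1}^r-free r-uniform hypergraph with matching number at most s and with at least s · t_{r−1}(n−s, ℓ−1) edges, then the set V_0 of vertices of H with degree at least r(s+1)n^{r−2} + 1 has size exactly s. -/
open Finset

variable {V : Type*}

lemma choose_le_pow' (n k : ℕ) : n.choose k ≤ n ^ k := by
  calc n.choose k ≤ k.factorial * n.choose k :=
        Nat.le_mul_of_pos_left _ (Nat.factorial_pos k)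
    _ = n.descFactorial k := (Nat.descFactorial_eq_factorial_mul_choose n k).symm
    _ ≤ n ^ k := Nat.descFactorial_le_pow n k

lemma pair_deg_bound [DecidableEq V] [Fintype V] {H : Finset (Finset V)} {r : ℕ}
    (hu : IsUniform r H) {v u : V} (hvu : v ≠ u) :
    (H.filter (fun e => v ∈ e ∧ u ∈ e)).card ≤ (Fintype.card V) ^ (r-2) := by
  classical
  have hsub : ∀ e ∈ H.filter (fun e => v ∈ e ∧ u ∈ e), {v, u} ⊆ e := by
    intro e he
    rw [mem_filter] at he
    intro x hx
    rcases mem_insert.1 hx with rfl | hx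
    · exact he.2.1
    · rw [mem_singleton] at hx; exact hx ▸ he.2.2
  have hvu2 : ({v, u} : Finset V).card = 2 := by
    rw [card_insert_of_notMem (by simpa using hvu), card_singleton]
  have h1 : (H.filter (fun e => v ∈ e ∧ u ∈ e)).card
      ≤ ((univ : Finset V).powersetCard (r-2)).card := by
    apply Finset.card_le_card_of_injOn (fun e => e \ {v, u})
    · intro e he
      simp only [mem_coe] at he ⊢
      rw [mem_powersetCard]
      refine ⟨subset_univ _, ?_⟩
      rw [card_sdiff_of_subset (hsub e he), hu e (mem_filter.1 he).1, hvu2]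
    · intro e he f hf h
      have he' := Finset.sdiff_union_of_subset (hsub e he)
      have hf' := Finset.sdiff_union_of_subset (hsub f hf)
      have h' : e \ {v, u} = f \ {v, u} := h
      calc e = e \ {v, u} ∪ {v, u} := he'.symm
        _ = f \ {v, u} ∪ {v, u} := by rw [h']
        _ = f := hf'
  calc (H.filter (fun e => v ∈ e ∧ u ∈ e)).card
      ≤ ((univ : Finset V).powersetCard (r-2)).card := h1
    _ = (Fintype.card V).choose (r-2) := by rw [card_powersetCard, card_univ]
    _ ≤ (Fintype.card V) ^ (r-2) := choose_le_pow' _ _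

lemma exists_big_matching [DecidableEq V] [Fintype V] (H : Finset (Finset V)) (r s : ℕ)
    (hr : 1 ≤ r) (hu : IsUniform r H) (W : Finset V) (hWcard : W.card = s + 1)
    (hdegW : ∀ w ∈ W, s * r * (Fintype.card V)^(r-2) < hdeg H w) :
    ∃ M ⊆ H, ((M : Set (Finset V)).Pairwise fun a b => Disjoint a b) ∧ M.card = s + 1 := by
  classical
  have key : ∀ k, k ≤ s + 1 → ∃ M ⊆ H,
      ((M : Set (Finset V)).Pairwise fun a b => Disjoint a b) ∧ M.card = k ∧
      (W \ M.biUnion id).card = s + 1 - k ∧ (M.biUnion id).card ≤ k * r := by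
    intro k
    induction k with
    | zero =>
      intro _
      exact ⟨∅, empty_subset _, by simp, by simp, by simp [hWcard], by simp⟩
    | succ k ih =>
      intro hk
      obtain ⟨M, hMH, hMp, hMc, hWU, hUc⟩ := ih (by omega)
      set U := M.biUnion id with hU
      have hWU' : (W \ U).card = s + 1 - k := hWU
      have hUc' : U.card ≤ k * r := hUc
      have hWUne : (W \ U).Nonempty := by
        rw [← card_pos, hWU]; omega
      obtain ⟨w, hw⟩ := hWUne
      have hwW : w ∈ W := (mem_sdiff.1 hw).1
      have hwU : w ∉ U := (mem_sdiff.1 hw).2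
      set Fs := (U ∪ W).erase w with hFs
      have hFc : Fs.card ≤ s * r := by
        have h1 : (U ∪ W).card = U.card + (W \ U).card := by
          rw [← Finset.union_sdiff_self_eq_union]
          exact card_union_of_disjoint disjoint_sdiff
        have h2 : Fs.card = (U ∪ W).card - 1 := by
          rw [hFs, card_erase_of_mem (mem_union_right _ hwW)]
        have h3 : Fs.card ≤ k * r + (s - k) := by omega
        have h4 : s - k ≤ (s - k) * r := Nat.le_mul_of_pos_right _ hr
        have h5 : k * r + (s - k) * r = s * r := by
          have h6 : k + (s - k) = s := by omega
          calc k * r + (s - k) * r = (k + (s - k)) * r := by rw [add_mul]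
            _ = s * r := by rw [h6]
        omega
      -- bad edges through w
      have hbad : ((H.filter (fun e => w ∈ e)).filter
          (fun e => ∃ u ∈ Fs, u ∈ e)).card ≤ s * r * (Fintype.card V)^(r-2) := by
        have hsub : (H.filter (fun e => w ∈ e)).filter (fun e => ∃ u ∈ Fs, u ∈ e)
            ⊆ Fs.biUnion (fun u => H.filter (fun e => w ∈ e ∧ u ∈ e)) := by
          intro e he
          simp only [mem_filter] at he
          obtain ⟨⟨heH, hwe⟩, u, huF, hue⟩ := he
          exact mem_biUnion.2 ⟨u, huF, mem_filter.2 ⟨heH, hwe, hue⟩⟩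
        calc ((H.filter (fun e => w ∈ e)).filter (fun e => ∃ u ∈ Fs, u ∈ e)).card
            ≤ ∑ u ∈ Fs, (H.filter (fun e => w ∈ e ∧ u ∈ e)).card :=
              le_trans (card_le_card hsub) card_biUnion_le
          _ ≤ ∑ _u ∈ Fs, (Fintype.card V)^(r-2) := by
              apply sum_le_sum
              intro u huF
              exact pair_deg_bound hu (Ne.symm (mem_erase.1 huF).1)
          _ = Fs.card * (Fintype.card V)^(r-2) := by rw [sum_const, smul_eq_mul]
          _ ≤ s * r * (Fintype.card V)^(r-2) := Nat.mul_le_mul_right _ hFc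
      -- find a good edge
      have hgood : ∃ e ∈ H, w ∈ e ∧ ∀ u ∈ Fs, u ∉ e := by
        have h1 : ((H.filter (fun e => w ∈ e)).filter
            (fun e => ∃ u ∈ Fs, u ∈ e)).card < (H.filter (fun e => w ∈ e)).card :=
          lt_of_le_of_lt hbad (hdegW w hwW)
        have h2 : ((H.filter (fun e => w ∈ e)).filter
            (fun e => ¬ ∃ u ∈ Fs, u ∈ e)).Nonempty := by
          rw [← card_pos]
          have := card_filter_add_card_filter_not
            (s := H.filter (fun e => w ∈ e)) (fun e => ∃ u ∈ Fs, u ∈ e)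
          omega
        obtain ⟨e, he⟩ := h2
        simp only [mem_filter] at he
        push_neg at he
        exact ⟨e, he.1.1, he.1.2, he.2⟩
      obtain ⟨e, heH, hwe, heF⟩ := hgood
      have heM : e ∉ M := by
        intro heM
        exact hwU (mem_biUnion.2 ⟨e, heM, hwe⟩)
      have hdisj : ∀ f ∈ M, Disjoint e f := by
        intro f hf
        rw [Finset.disjoint_left]
        intro x hxe hxf
        have hxU : x ∈ U := mem_biUnion.2 ⟨f, hf, hxf⟩
        have hxw : x ≠ w := by rintro rfl; exact hwU hxU
        exact heF x (mem_erase.2 ⟨hxw, mem_union_left _ hxU⟩) hxe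
      refine ⟨insert e M, insert_subset heH hMH, ?_, ?_, ?_, ?_⟩
      · rw [coe_insert]
        apply hMp.insert
        intro f hf _
        exact ⟨hdisj f hf, (hdisj f hf).symm⟩
      · rw [card_insert_of_notMem heM, hMc]
      · rw [biUnion_insert]
        simp only [id_eq]
        have hint : W \ (e ∪ U) = (W \ U).erase w := by
          ext x
          simp only [mem_sdiff, mem_union, mem_erase]
          constructor
          · rintro ⟨hxW, hx⟩
            push_neg at hx
            exact ⟨by rintro rfl; exact hx.1 hwe, hxW, hx.2⟩
          · rintro ⟨hxw, hxW, hxU⟩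
            refine ⟨hxW, ?_⟩
            push_neg
            refine ⟨fun hxe => heF x (mem_erase.2 ⟨hxw, mem_union_right _ hxW⟩) hxe, hxU⟩
        rw [hint, card_erase_of_mem (mem_sdiff.2 ⟨hwW, hwU⟩), hWU]
        omega
      · rw [biUnion_insert]
        simp only [id_eq]
        calc (e ∪ U).card ≤ e.card + U.card := card_union_le e U
          _ ≤ r + k * r := by rw [hu e heH]; exact Nat.add_le_add_left hUc _
          _ = (k+1) * r := by ring
  obtain ⟨M, hMH, hMp, hMc, -, -⟩ := key (s+1) le_rfl
  exact ⟨M, hMH, hMp, hMc⟩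

lemma pow_sub_bound : ∀ (k c n : ℕ), n^(k+1) ≤ (n-c)^(k+1) + (k+1)*c*n^k := by
  intro k
  induction k with
  | zero =>
    intro c n
    simpa using by omega
  | succ k ih =>
    intro c n
    by_cases hcn : c ≤ n
    · have h1 : n^(k+2) = n * n^(k+1) := by ring
      have h2 : n * n^(k+1) ≤ n * ((n-c)^(k+1) + (k+1)*c*n^k) :=
        Nat.mul_le_mul_left _ (ih c n)
      have h3 : n * ((n-c)^(k+1) + (k+1)*c*n^k)
          = n * (n-c)^(k+1) + (k+1)*c*n^(k+1) := by ring
      have h4 : n * (n-c)^(k+1) = (n-c)^(k+2) + c*(n-c)^(k+1) := by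
        have : n = (n-c) + c := by omega
        calc n * (n-c)^(k+1) = ((n-c) + c) * (n-c)^(k+1) := by rw [← this]
          _ = (n-c)^(k+2) + c*(n-c)^(k+1) := by ring
      have h5 : c*(n-c)^(k+1) ≤ c*n^(k+1) :=
        Nat.mul_le_mul_left _ (Nat.pow_le_pow_left (by omega) _)
      calc n^(k+2) ≤ n * (n-c)^(k+1) + (k+1)*c*n^(k+1) := by omega
        _ = (n-c)^(k+2) + c*(n-c)^(k+1) + (k+1)*c*n^(k+1) := by rw [h4]
        _ ≤ (n-c)^(k+2) + c*n^(k+1) + (k+1)*c*n^(k+1) := by omega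
        _ = (n-c)^(k+2) + (k+2)*c*n^(k+1) := by ring
    · have h0 : n - c = 0 := by omega
      rw [h0]
      have h1 : n^(k+2) = n * n^(k+1) := by ring
      have h2 : n * n^(k+1) ≤ c * n^(k+1) := Nat.mul_le_mul_right _ (by omega)
      have h3 : c * n^(k+1) ≤ (k+2)*c*n^(k+1) := by
        have : c * n^(k+1) ≤ (k+2) * (c * n^(k+1)) := Nat.le_mul_of_pos_left _ (by omega)
        calc c * n^(k+1) ≤ (k+2) * (c * n^(k+1)) := this
          _ = (k+2)*c*n^(k+1) := by ring
      calc n^(k+2) = n * n^(k+1) := h1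
        _ ≤ c * n^(k+1) := h2
        _ ≤ (k+2)*c*n^(k+1) := h3
        _ ≤ 0^(k+2) + (k+2)*c*n^(k+1) := Nat.le_add_left _ _

lemma card_le_of_small_deg [DecidableEq V] (G : Finset (Finset V)) (s r D : ℕ)
    (hr : 1 ≤ r) (hm : MatchingLE G s) (hu : ∀ e ∈ G, e.card = r)
    (hd : ∀ e ∈ G, ∀ v ∈ e, hdeg G v ≤ D) :
    G.card ≤ s * r * D := by
  classical
  set P := G.powerset.filter
    (fun M : Finset (Finset V) => (M : Set (Finset V)).Pairwise fun a b => Disjoint a b)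
    with hP
  have hPne : P.Nonempty := ⟨∅, by simp [hP]⟩
  obtain ⟨M, hMP, hmax⟩ := Finset.exists_max_image P (fun M => M.card) hPne
  rw [hP, mem_filter, mem_powerset] at hMP
  obtain ⟨hMG, hMp⟩ := hMP
  set U := M.biUnion id with hU
  have hUc : U.card ≤ s * r := by
    calc U.card ≤ ∑ e ∈ M, (id e).card := card_biUnion_le
      _ = ∑ e ∈ M, r := by
          apply Finset.sum_congr rfl; intro e he; exact hu e (hMG he)
      _ = M.card * r := by rw [sum_const, smul_eq_mul]
      _ ≤ s * r := Nat.mul_le_mul_right _ (hm M hMG hMp)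
  have hmeet : ∀ e ∈ G, ∃ v ∈ U, v ∈ e := by
    intro e heG
    by_contra hno
    push_neg at hno
    have heM : e ∉ M := by
      intro heM
      have hecard : 0 < e.card := by rw [hu e heG]; omega
      obtain ⟨x, hx⟩ := card_pos.1 hecard
      exact hno x (mem_biUnion.2 ⟨e, heM, hx⟩) hx
    have hdisj : ∀ f ∈ M, Disjoint e f := by
      intro f hf
      rw [Finset.disjoint_left]
      intro x hxe hxf
      exact hno x (mem_biUnion.2 ⟨f, hf, hxf⟩) hxe
    have hins : insert e M ∈ P := by
      rw [hP, mem_filter, mem_powerset]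
      refine ⟨insert_subset heG hMG, ?_⟩
      rw [coe_insert]
      apply hMp.insert
      intro f hf _
      exact ⟨hdisj f hf, (hdisj f hf).symm⟩
    have := hmax _ hins
    rw [card_insert_of_notMem heM] at this
    omega
  have hsub : G ⊆ U.biUnion (fun v => G.filter (fun e => v ∈ e)) := by
    intro e heG
    obtain ⟨v, hvU, hve⟩ := hmeet e heG
    exact mem_biUnion.2 ⟨v, hvU, mem_filter.2 ⟨heG, hve⟩⟩
  calc G.card ≤ ∑ v ∈ U, (G.filter (fun e => v ∈ e)).card :=
        le_trans (card_le_card hsub) card_biUnion_le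
    _ ≤ ∑ _v ∈ U, D := by
        apply sum_le_sum
        intro v hvU
        obtain ⟨f, hfM, hvf⟩ := mem_biUnion.1 hvU
        exact hd f (hMG hfM) v hvf
    _ = U.card * D := by rw [sum_const, smul_eq_mul]
    _ ≤ s * r * D := Nat.mul_le_mul_right _ hUc

section Cliques
variable {V : Type*} [DecidableEq V] [Fintype V]
variable (adj : V → V → Prop) [DecidableRel adj]

def cliq (t : ℕ) : Finset (Finset V) :=
  univ.filter (fun c => c.card = t ∧ ∀ x ∈ c, ∀ y ∈ c, x ≠ y → adj x y)

def extV (W : Finset V) : Finset V :=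
  univ.filter (fun v => v ∉ W ∧ ∀ x ∈ W, adj v x)

lemma mem_cliq {t : ℕ} {c : Finset V} :
    c ∈ cliq adj t ↔ c.card = t ∧ ∀ x ∈ c, ∀ y ∈ c, x ≠ y → adj x y := by
  simp [cliq]

lemma mem_extV {W : Finset V} {v : V} :
    v ∈ extV adj W ↔ v ∉ W ∧ ∀ x ∈ W, adj v x := by simp [extV]

lemma cliq_zero : cliq adj 0 = {∅} := by
  ext c
  simp only [mem_cliq, mem_singleton, card_eq_zero]
  constructor
  · rintro ⟨h, -⟩; exact h
  · rintro rfl; simp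

/-- E1 : extensions of a clique -/
lemma card_ext_eq (hsymm : ∀ x y, adj x y → adj y x) {t : ℕ} {W : Finset V} (hW : W ∈ cliq adj t) :
    ((cliq adj (t+1)).filter (fun S => W ⊆ S)).card = (extV adj W).card := by
  obtain ⟨hWc, hWa⟩ := (mem_cliq adj).1 hW
  symm
  apply Finset.card_bij (fun v _ => insert v W)
  · intro v hv
    rw [mem_extV] at hv
    rw [mem_filter, mem_cliq]
    refine ⟨⟨by rw [card_insert_of_notMem hv.1, hWc], ?_⟩, subset_insert _ _⟩
    intro x hx y hy hxy
    rcases mem_insert.1 hx with hx' | hx'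
    · rcases mem_insert.1 hy with hy' | hy'
      · exact absurd (hx'.trans hy'.symm) hxy
      · exact hx' ▸ hv.2 y hy'
    · rcases mem_insert.1 hy with hy' | hy'
      · exact hy' ▸ hsymm _ _ (hv.2 x hx')
      · exact hWa x hx' y hy' hxy
  · intro a ha b hb hab
    rw [mem_extV] at ha hb
    have : a ∈ insert b W := hab ▸ mem_insert_self a W
    rcases mem_insert.1 this with rfl | h
    · rfl
    · exact absurd h ha.1
  · intro S hS
    rw [mem_filter, mem_cliq] at hS
    obtain ⟨⟨hSc, hSa⟩, hWS⟩ := hS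
    have hcard : (S \ W).card = 1 := by
      rw [card_sdiff_of_subset hWS, hSc, hWc]; omega
    obtain ⟨v, hv⟩ := card_eq_one.1 hcard
    have hvS : v ∈ S \ W := hv ▸ mem_singleton_self v
    rw [mem_sdiff] at hvS
    refine ⟨v, ?_, ?_⟩
    · rw [mem_extV]
      refine ⟨hvS.2, fun x hx => hSa v hvS.1 x (hWS hx) ?_⟩
      rintro rfl; exact hvS.2 hx
    · apply Finset.Subset.antisymm (insert_subset hvS.1 hWS)
      intro x hx
      by_cases hxW : x ∈ W
      · exact mem_insert_of_mem hxW
      · have : x ∈ S \ W := mem_sdiff.2 ⟨hx, hxW⟩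
        rw [hv, mem_singleton] at this
        exact this ▸ mem_insert_self _ _

/-- E3 -/
lemma card_sub_cliques {t : ℕ} {S : Finset V} (hS : S ∈ cliq adj (t+1)) :
    ((cliq adj t).filter (fun W => W ⊆ S)).card = t + 1 := by
  obtain ⟨hSc, hSa⟩ := (mem_cliq adj).1 hS
  have : (cliq adj t).filter (fun W => W ⊆ S) = S.powersetCard t := by
    ext W
    rw [mem_filter, mem_cliq, mem_powersetCard]
    constructor
    · rintro ⟨⟨h1, -⟩, h2⟩; exact ⟨h2, h1⟩
    · rintro ⟨h2, h1⟩
      exact ⟨⟨h1, fun x hx y hy hxy => hSa x (h2 hx) y (h2 hy) hxy⟩, h2⟩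
  rw [this, card_powersetCard, hSc, Nat.choose_succ_self_right]

/-- generic double-count swap -/
lemma cliq_swap (A B : Finset (Finset V)) (f : Finset V → ℕ) :
    ∑ W ∈ A, ∑ _S ∈ B.filter (fun S => W ⊆ S), f W
      = ∑ S ∈ B, ∑ W ∈ A.filter (fun W => W ⊆ S), f W := by
  simp only [sum_filter]
  rw [Finset.sum_comm]

/-- Σ_{W ∈ cliq t} |ext W| = (t+1) * k_{t+1} -/
lemma sum_ext (hsymm : ∀ x y, adj x y → adj y x) (t : ℕ) :
    ∑ W ∈ cliq adj t, (extV adj W).card = (t+1) * (cliq adj (t+1)).card := by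
  have h1 : ∀ W ∈ cliq adj t, (extV adj W).card
      = ∑ _S ∈ (cliq adj (t+1)).filter (fun S => W ⊆ S), 1 := by
    intro W hW
    rw [sum_const, smul_eq_mul, mul_one, card_ext_eq adj hsymm hW]
  rw [Finset.sum_congr rfl h1, cliq_swap]
  have h2 : ∀ S ∈ cliq adj (t+1),
      ∑ W ∈ (cliq adj t).filter (fun W => W ⊆ S), 1 = t + 1 := by
    intro S hS
    rw [sum_const, smul_eq_mul, mul_one, card_sub_cliques adj hS]
  rw [Finset.sum_congr rfl h2, sum_const, smul_eq_mul, mul_comm]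

/-- E4 : per-clique bound -/
lemma per_clique_bound (t : ℕ) {S : Finset V} (hS : S ∈ cliq adj (t+1)) :
    ∑ W ∈ (cliq adj t).filter (fun W => W ⊆ S), (extV adj W).card
      ≤ Fintype.card V + t * (extV adj S).card := by
  obtain ⟨hSc, hSa⟩ := (mem_cliq adj).1 hS
  -- swap to sum over vertices
  have h1 : ∑ W ∈ (cliq adj t).filter (fun W => W ⊆ S), (extV adj W).card
      = ∑ v : V, (((cliq adj t).filter (fun W => W ⊆ S)).filter
          (fun W => v ∈ extV adj W)).card := by
    simp only [extV, card_filter]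
    rw [Finset.sum_comm]
    simp [Finset.sum_filter]
  rw [h1]
  have h2 : ∀ v : V, (((cliq adj t).filter (fun W => W ⊆ S)).filter
      (fun W => v ∈ extV adj W)).card ≤ 1 + t * (if v ∈ extV adj S then 1 else 0) := by
    intro v
    by_cases hv : v ∈ extV adj S
    · simp only [hv, if_true, mul_one]
      calc (((cliq adj t).filter (fun W => W ⊆ S)).filter (fun W => v ∈ extV adj W)).card
          ≤ ((cliq adj t).filter (fun W => W ⊆ S)).card := card_filter_le _ _
        _ = t + 1 := card_sub_cliques adj hS
        _ = 1 + t := by omega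
    · simp only [hv, if_false, mul_zero, add_zero]
      apply Finset.card_le_one.2
      intro W1 h1' W2 h2'
      simp only [mem_filter] at h1' h2'
      obtain ⟨⟨hW1c, hW1S⟩, hvW1⟩ := h1'
      obtain ⟨⟨hW2c, hW2S⟩, hvW2⟩ := h2'
      by_contra hne
      rw [mem_extV] at hvW1 hvW2
      rw [mem_cliq] at hW1c hW2c
      -- W1 ∪ W2 = S
      have hsub : W1 ∪ W2 ⊆ S := union_subset hW1S hW2S
      have hcard : t + 1 ≤ (W1 ∪ W2).card := by
        have h5 : ¬ (W2 ⊆ W1) := by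
          intro hsub2
          exact hne (Finset.eq_of_subset_of_card_le hsub2 (by omega)).symm
        obtain ⟨x, hx2, hx1⟩ := not_subset.1 h5
        have : insert x W1 ⊆ W1 ∪ W2 :=
          insert_subset (mem_union_right _ hx2) subset_union_left
        calc t + 1 = (insert x W1).card := by rw [card_insert_of_notMem hx1, hW1c.1]
          _ ≤ (W1 ∪ W2).card := card_le_card this
      have hUS : W1 ∪ W2 = S := Finset.eq_of_subset_of_card_le hsub (by omega)
      apply hv
      rw [mem_extV]
      constructor
      · rw [← hUS]
        simp only [mem_union]
        rintro (h | h)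
        · exact hvW1.1 h
        · exact hvW2.1 h
      · intro x hx
        rw [← hUS, mem_union] at hx
        rcases hx with h | h
        · exact hvW1.2 x h
        · exact hvW2.2 x h
  calc ∑ v : V, (((cliq adj t).filter (fun W => W ⊆ S)).filter
          (fun W => v ∈ extV adj W)).card
      ≤ ∑ v : V, (1 + t * (if v ∈ extV adj S then 1 else 0)) := Finset.sum_le_sum (fun v _ => h2 v)
    _ = Fintype.card V + t * (extV adj S).card := by
        rw [Finset.sum_add_distrib, ← Finset.mul_sum]
        congr 1
        · rw [sum_const, smul_eq_mul, mul_one, card_univ]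
        · congr 1
          rw [Finset.sum_ite_mem, univ_inter, sum_const, smul_eq_mul, mul_one]

/-- Σ dW² = Σ_S Σ_{W⊆S} dW -/
lemma sum_sq_ext (hsymm : ∀ x y, adj x y → adj y x) (t : ℕ) :
    ∑ W ∈ cliq adj t, (extV adj W).card * (extV adj W).card
      = ∑ S ∈ cliq adj (t+1), ∑ W ∈ (cliq adj t).filter (fun W => W ⊆ S),
          (extV adj W).card := by
  rw [← cliq_swap]
  apply Finset.sum_congr rfl
  intro W hW
  rw [sum_const, smul_eq_mul, card_ext_eq adj hsymm hW]

/-- Moon–Moser inequality -/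
lemma moon_moser (hsymm : ∀ x y, adj x y → adj y x) (t : ℕ) :
    ((t+1) * (cliq adj (t+1)).card)^2
      ≤ (cliq adj t).card * (Fintype.card V * (cliq adj (t+1)).card
          + t * ((t+2) * (cliq adj (t+2)).card)) := by
  have cs : (∑ W ∈ cliq adj t, (extV adj W).card)^2
      ≤ (cliq adj t).card * ∑ W ∈ cliq adj t, ((extV adj W).card)^2 :=
    sq_sum_le_card_mul_sum_sq
  rw [sum_ext adj hsymm t] at cs
  have e2 : ∑ W ∈ cliq adj t, ((extV adj W).card)^2
      = ∑ S ∈ cliq adj (t+1), ∑ W ∈ (cliq adj t).filter (fun W => W ⊆ S),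
          (extV adj W).card := by
    rw [← sum_sq_ext adj hsymm t]
    apply Finset.sum_congr rfl; intro W _; rw [sq]
  rw [e2] at cs
  have e3 : ∑ S ∈ cliq adj (t+1), ∑ W ∈ (cliq adj t).filter (fun W => W ⊆ S),
      (extV adj W).card ≤ Fintype.card V * (cliq adj (t+1)).card
        + t * ((t+2) * (cliq adj (t+2)).card) := by
    calc ∑ S ∈ cliq adj (t+1), ∑ W ∈ (cliq adj t).filter (fun W => W ⊆ S), (extV adj W).card
        ≤ ∑ S ∈ cliq adj (t+1), (Fintype.card V + t * (extV adj S).card) :=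
          Finset.sum_le_sum (fun S hS => per_clique_bound adj t hS)
      _ = Fintype.card V * (cliq adj (t+1)).card
            + t * ∑ S ∈ cliq adj (t+1), (extV adj S).card := by
          rw [Finset.sum_add_distrib, sum_const, smul_eq_mul, mul_comm, ← Finset.mul_sum]
      _ = _ := by rw [sum_ext adj hsymm (t+1)]
  calc ((t+1) * (cliq adj (t+1)).card)^2
      ≤ (cliq adj t).card * ∑ S ∈ cliq adj (t+1), ∑ W ∈ (cliq adj t).filter (fun W => W ⊆ S),
          (extV adj W).card := cs
    _ ≤ _ := Nat.mul_le_mul_left _ e3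

/-- downward induction: if no L-clique then (L-1)·s·k_s ≤ n·(L-s)·k_{s-1} -/
lemma zykov_step (hsymm : ∀ x y, adj x y → adj y x) (L : ℕ)
    (hfree : cliq adj L = ∅) :
    ∀ d s : ℕ, 1 ≤ s → s + d = L →
      (L-1) * s * (cliq adj s).card ≤ Fintype.card V * (L-s) * (cliq adj (s-1)).card := by
  intro d
  induction d with
  | zero =>
    intro s hs1 hsL
    simp only [Nat.add_zero] at hsL
    subst hsL
    rw [hfree]
    simp
  | succ d ih =>
    intro s hs1 hsL
    have ihs : (L-1) * (s+1) * (cliq adj (s+1)).card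
        ≤ Fintype.card V * (L-(s+1)) * (cliq adj s).card := ih (s+1) (by omega) (by omega)
    have mm := moon_moser adj hsymm (s-1)
    have hs' : s - 1 + 1 = s := by omega
    have hs'' : s - 1 + 2 = s + 1 := by omega
    rw [hs', hs''] at mm
    -- multiply mm by (L-1)
    set n := Fintype.card V
    set ks := (cliq adj s).card
    set ksm := (cliq adj (s-1)).card
    set ksp := (cliq adj (s+1)).card
    have key : (L-1) * (s * ks)^2 ≤ n * (s * (L - s)) * (ks * ksm) := by
      have h1 : (L-1) * (s * ks)^2 ≤ (L-1) * (ksm * (n * ks + (s-1) * ((s+1) * ksp))) :=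
        Nat.mul_le_mul_left _ mm
      have h2 : (L-1) * (ksm * (n * ks + (s-1) * ((s+1) * ksp)))
          = (L-1) * n * ks * ksm + (s-1) * ksm * ((L-1) * (s+1) * ksp) := by ring
      have h3 : (s-1) * ksm * ((L-1) * (s+1) * ksp)
          ≤ (s-1) * ksm * (n * (L-(s+1)) * ks) := Nat.mul_le_mul_left _ ihs
      have h4 : (L-1) * n * ks * ksm + (s-1) * ksm * (n * (L-(s+1)) * ks)
          = n * ((L-1) + (s-1) * (L-(s+1))) * (ks * ksm) := by ring
      have h5 : (L-1) + (s-1) * (L-(s+1)) = s * (L-s) := by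
        have : L = s + 1 + d := by omega
        subst this
        have e1 : s + 1 + d - 1 = s + d := by omega
        have e2 : s + 1 + d - (s+1) = d := by omega
        have e3 : s + 1 + d - s = d + 1 := by omega
        rw [e1, e2, e3]
        cases s with
        | zero => omega
        | succ m =>
          simp only [Nat.succ_sub_one]
          ring
      calc (L-1) * (s * ks)^2 ≤ (L-1) * n * ks * ksm + (s-1) * ksm * ((L-1) * (s+1) * ksp) := by
            rw [← h2]; exact h1
        _ ≤ (L-1) * n * ks * ksm + (s-1) * ksm * (n * (L-(s+1)) * ks) :=
            Nat.add_le_add_left h3 _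
        _ = n * ((L-1) + (s-1) * (L-(s+1))) * (ks * ksm) := h4
        _ = n * (s * (L-s)) * (ks * ksm) := by rw [h5]
    -- cancel s * ks
    by_cases hks : ks = 0
    · rw [hks]; simp
    · have hpos : 0 < s * ks := Nat.mul_pos (by omega) (Nat.pos_of_ne_zero hks)
      have key' : (s * ks) * ((L-1) * s * ks) ≤ (s * ks) * (n * (L-s) * ksm) := by
        calc (s * ks) * ((L-1) * s * ks) = (L-1) * (s * ks)^2 := by ring
          _ ≤ n * (s * (L-s)) * (ks * ksm) := key
          _ = (s * ks) * (n * (L-s) * ksm) := by ring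
      exact Nat.le_of_mul_le_mul_left key' hpos

/-- the clique count bound: (L-1)^t·t!·k_t ≤ n^t·descFactorial(L-1,t) -/
lemma clique_count_bound (hsymm : ∀ x y, adj x y → adj y x) (L : ℕ) (hL : 2 ≤ L)
    (hfree : cliq adj L = ∅) :
    ∀ t : ℕ, t ≤ L - 1 →
      (L-1)^t * t.factorial * (cliq adj t).card
        ≤ (Fintype.card V)^t * (L-1).descFactorial t := by
  intro t
  induction t with
  | zero =>
    intro _
    simp [cliq_zero]
  | succ t ih =>
    intro ht
    have iht := ih (by omega)
    have q := zykov_step adj hsymm L hfree (L - (t+1)) (t+1) (by omega) (by omega)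
    calc (L-1)^(t+1) * (t+1).factorial * (cliq adj (t+1)).card
        = (L-1)^t * t.factorial * ((L-1) * (t+1) * (cliq adj (t+1)).card) := by
          rw [Nat.factorial_succ]; ring
      _ ≤ (L-1)^t * t.factorial * (Fintype.card V * (L-(t+1)) * (cliq adj t).card) :=
          Nat.mul_le_mul_left _ (by simpa using q)
      _ = (Fintype.card V * (L-(t+1))) * ((L-1)^t * t.factorial * (cliq adj t).card) := by ring
      _ ≤ (Fintype.card V * (L-(t+1))) * ((Fintype.card V)^t * (L-1).descFactorial t) :=
          Nat.mul_le_mul_left _ iht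
      _ = (Fintype.card V)^(t+1) * ((L-1-t) * (L-1).descFactorial t) := by
          have : L - (t+1) = L - 1 - t := by omega
          rw [this]; ring
      _ = (Fintype.card V)^(t+1) * (L-1).descFactorial (t+1) := by
          rw [Nat.descFactorial_succ]

end Cliques

lemma turan_lower (t m P : ℕ) (hP : 1 ≤ P) :
    P.choose t * (m / P)^t ≤ turanCount t m P := by
  classical
  set q := m / P with hq
  -- the embedding of the grid
  have hval : ∀ (p : Fin P) (i : Fin q), p.val + P * i.val < m := by
    intro p i
    have h1 : p.val + P * i.val < P * (i.val + 1) := by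
      have h0 : P * (i.val + 1) = P * i.val + P := by ring
      have := p.isLt; omega
    have h2 : P * (i.val + 1) ≤ P * q := Nat.mul_le_mul_left _ i.isLt
    have h3 : P * q ≤ m := by rw [hq, mul_comm]; exact Nat.div_mul_le_self m P
    omega
  let val : Fin P → Fin q → Fin m := fun p i => ⟨p.val + P * i.val, hval p i⟩
  have valmod : ∀ (p : Fin P) (i : Fin q), (val p i).val % P = p.val := by
    intro p i
    show (p.val + P * i.val) % P = p.val
    rw [Nat.add_mul_mod_self_left, Nat.mod_eq_of_lt p.isLt]
  have valinj : ∀ (p p' : Fin P) (i i' : Fin q),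
      val p i = val p' i' → p = p' ∧ i = i' := by
    intro p p' i i' h
    have h1 : (val p i).val % P = (val p' i').val % P := by rw [h]
    rw [valmod, valmod] at h1
    have hp : p = p' := Fin.ext h1
    subst hp
    have h2 : (val p i).val = (val p i').val := by rw [h]
    have h3 : p.val + P * i.val = p.val + P * i'.val := h2
    have : i.val = i'.val := by
      have := Nat.eq_of_mul_eq_mul_left hP (by omega : P * i.val = P * i'.val)
      exact this
    exact ⟨rfl, Fin.ext this⟩
  set Dom := (univ.powersetCard t : Finset (Finset (Fin P))).sigma
      (fun C => C.pi (fun _ => (univ : Finset (Fin q)))) with hDom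
  have hcard : Dom.card = P.choose t * q^t := by
    rw [hDom, card_sigma]
    have : ∀ C ∈ (univ.powersetCard t : Finset (Finset (Fin P))),
        (C.pi (fun _ => (univ : Finset (Fin q)))).card = q^t := by
      intro C hC
      rw [card_pi]
      have hCc : C.card = t := (mem_powersetCard.1 hC).2
      rw [Finset.prod_const]
      simp [hCc]
    rw [Finset.sum_congr rfl this, sum_const, smul_eq_mul, card_powersetCard]
    simp
  let F : (Σ C : Finset (Fin P), (a : Fin P) → a ∈ C → Fin q) → Finset (Fin m) :=
    fun x => x.1.attach.image (fun c => val c.1 (x.2 c.1 c.2))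
  have hmemF : ∀ (x : Σ C : Finset (Fin P), (a : Fin P) → a ∈ C → Fin q) (y : Fin m),
      y ∈ F x ↔ ∃ (c : Fin P) (hc : c ∈ x.1), val c (x.2 c hc) = y := by
    intro x y
    simp only [F, mem_image, mem_attach, true_and, Subtype.exists]
  have hmaps : ∀ x ∈ Dom, F x ∈ ((Finset.univ : Finset (Finset (Fin m))).filter
      fun e => e.card = t ∧ ∀ a ∈ e, ∀ b ∈ e, a.val % P = b.val % P → a = b) := by
    rintro ⟨C, g⟩ hx
    rw [mem_filter]
    have hCc : C.card = t := by
      rw [hDom, Finset.mem_sigma] at hx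
      exact (mem_powersetCard.1 hx.1).2
    refine ⟨mem_univ _, ?_, ?_⟩
    · rw [Finset.card_image_of_injOn, card_attach, hCc]
      intro c _ c' _ h
      exact Subtype.ext (valinj _ _ _ _ h).1
    · intro a ha b hb hab
      obtain ⟨c, hc, rfl⟩ := (hmemF ⟨C, g⟩ a).1 ha
      obtain ⟨c', hc', rfl⟩ := (hmemF ⟨C, g⟩ b).1 hb
      rw [valmod, valmod] at hab
      have : c = c' := Fin.ext hab
      subst this
      rfl
  have hinj : Set.InjOn F Dom := by
    rintro ⟨C, g⟩ hx ⟨C', g'⟩ hx' heq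
    have hCC : C = C' := by
      ext c
      constructor
      · intro hc
        have : val c (g c hc) ∈ F ⟨C', g'⟩ := by
          rw [← heq, hmemF]; exact ⟨c, hc, rfl⟩
        obtain ⟨c', hc', h⟩ := (hmemF ⟨C', g'⟩ _).1 this
        have := (valinj _ _ _ _ h).1
        exact this ▸ hc'
      · intro hc
        have : val c (g' c hc) ∈ F ⟨C, g⟩ := by
          rw [heq, hmemF]; exact ⟨c, hc, rfl⟩
        obtain ⟨c', hc', h⟩ := (hmemF ⟨C, g⟩ _).1 this
        have := (valinj _ _ _ _ h).1
        exact this ▸ hc'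
    subst hCC
    have hgg : g = g' := by
      funext c hc
      have : val c (g c hc) ∈ F ⟨C, g'⟩ := by
        rw [← heq, hmemF]; exact ⟨c, hc, rfl⟩
      obtain ⟨c', hc', h⟩ := (hmemF ⟨C, g'⟩ _).1 this
      obtain ⟨h1, h2⟩ := valinj _ _ _ _ h
      subst h1
      exact h2.symm
    rw [hgg]
  calc P.choose t * q^t = Dom.card := hcard.symm
    _ ≤ _ := Finset.card_le_card_of_injOn F hmaps hinj

section Link
variable [DecidableEq V] [Fintype V]

def linkAdj (H : Finset (Finset V)) (v : V) (x y : V) : Prop :=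
  x ≠ y ∧ x ≠ v ∧ y ≠ v ∧ ∃ e ∈ H, v ∈ e ∧ x ∈ e ∧ y ∈ e

instance (H : Finset (Finset V)) (v : V) : DecidableRel (linkAdj H v) := fun x y => by
  unfold linkAdj; infer_instance

lemma linkAdj_symm (H : Finset (Finset V)) (v : V) :
    ∀ x y, linkAdj H v x y → linkAdj H v y x := by
  rintro x y ⟨h1, h2, h3, e, he, hv, hx, hy⟩
  exact ⟨h1.symm, h3, h2, e, he, hv, hy, hx⟩

lemma link_free (H : Finset (Finset V)) (v : V) (m : ℕ) (hm : 2 ≤ m)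
    (hK : ¬ HasK (m+1) H) : cliq (linkAdj H v) m = ∅ := by
  rw [← Finset.not_nonempty_iff_eq_empty]
  rintro ⟨c, hc⟩
  rw [mem_cliq] at hc
  obtain ⟨hcc, hca⟩ := hc
  have hone : 1 < c.card := by omega
  have hvc : v ∉ c := by
    intro hvcmem
    obtain ⟨y, hy, hyne⟩ := Finset.exists_mem_ne hone v
    exact ((hca y hy v hvcmem hyne).2.2.1) rfl
  have hch : ∀ p ∈ c.powersetCard 2, ∃ e, e ∈ H ∧ v ∈ e ∧ ∀ z ∈ p, z ∈ e := by
    intro p hp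
    rw [mem_powersetCard] at hp
    obtain ⟨x, y, hxy, rfl⟩ := Finset.card_eq_two.1 hp.2
    have hx : x ∈ c := hp.1 (mem_insert_self _ _)
    have hy : y ∈ c := hp.1 (mem_insert_of_mem (mem_singleton_self _))
    obtain ⟨-, -, -, e, he, hv, hxe, hye⟩ := hca x hx y hy hxy
    refine ⟨e, he, hv, ?_⟩
    intro z hz
    rcases mem_insert.1 hz with rfl | hz
    · exact hxe
    · rw [mem_singleton] at hz; exact hz ▸ hye
  choose f hf using hch
  apply hK
  have hSmem : ∀ p (hp : p ∈ c.powersetCard 2),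
      f p hp ∈ (c.powersetCard 2).attach.image (fun p => f p.1 p.2) :=
    fun p hp => mem_image.2 ⟨⟨p, hp⟩, mem_attach _ _, rfl⟩
  refine ⟨insert v c, by rw [card_insert_of_notMem hvc, hcc],
    (c.powersetCard 2).attach.image (fun p => f p.1 p.2), ?_, ?_, ?_⟩
  · intro e he
    obtain ⟨p, -, rfl⟩ := mem_image.1 he
    exact (hf p.1 p.2).1
  · calc ((c.powersetCard 2).attach.image (fun p => f p.1 p.2)).card
        ≤ (c.powersetCard 2).attach.card := card_image_le
      _ = m.choose 2 := by rw [card_attach, card_powersetCard, hcc]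
      _ ≤ (m+1).choose 2 := Nat.choose_le_choose _ (by omega)
  · intro x hx y hy hxy
    have pairmem : ∀ {a b : V}, a ∈ c → b ∈ c → a ≠ b →
        ({a, b} : Finset V) ∈ c.powersetCard 2 := by
      intro a b ha hb hab
      rw [mem_powersetCard]
      refine ⟨insert_subset ha (singleton_subset_iff.2 hb), ?_⟩
      rw [card_insert_of_notMem (fun h => hab (mem_singleton.1 h)), card_singleton]
    rcases mem_insert.1 hx with rfl | hxc
    · rcases mem_insert.1 hy with rfl | hyc
      · exact absurd rfl hxy
      · obtain ⟨y', hy', hyy'⟩ := Finset.exists_mem_ne hone y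
        have hp := pairmem hyc hy' (Ne.symm hyy')
        refine ⟨f _ hp, hSmem _ hp, (hf _ hp).2.1, (hf _ hp).2.2 y (mem_insert_self _ _)⟩
    · rcases mem_insert.1 hy with rfl | hyc
      · obtain ⟨x', hx', hxx'⟩ := Finset.exists_mem_ne hone x
        have hp := pairmem hxc hx' (Ne.symm hxx')
        refine ⟨f _ hp, hSmem _ hp, (hf _ hp).2.2 x (mem_insert_self _ _), (hf _ hp).2.1⟩
      · have hp := pairmem hxc hyc hxy
        refine ⟨f _ hp, hSmem _ hp, (hf _ hp).2.2 x (mem_insert_self _ _),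
          (hf _ hp).2.2 y (mem_insert_of_mem (mem_singleton_self _))⟩

lemma hdeg_le_cliq (H : Finset (Finset V)) (v : V) (r : ℕ) (hr : 2 ≤ r)
    (hu : IsUniform r H) :
    hdeg H v ≤ (cliq (linkAdj H v) (r-1)).card := by
  apply Finset.card_le_card_of_injOn (fun e => e.erase v)
  · intro e he
    simp only [mem_coe, mem_filter] at he ⊢
    rw [mem_cliq]
    constructor
    · rw [card_erase_of_mem he.2, hu e he.1]
    · intro x hx y hy hxy
      exact ⟨hxy, (mem_erase.1 hx).1, (mem_erase.1 hy).1, e, he.1, he.2,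
        mem_of_mem_erase hx, mem_of_mem_erase hy⟩
  · intro e he f hf h
    rw [coe_filter, Set.mem_setOf_eq] at he hf
    have h' : e.erase v = f.erase v := h
    calc e = insert v (e.erase v) := (insert_erase he.2).symm
      _ = insert v (f.erase v) := by rw [h']
      _ = f := insert_erase hf.2
end Link


theorem statement6 (r ℓ s : ℕ) (hr : 3 ≤ r) (hℓ : r ≤ ℓ) (hs : 1 ≤ s) :
    ∃ n₀ : ℕ, ∀ n ≥ n₀, ∀ H : Finset (Finset (Fin n)),
      IsUniform r H → ¬ HasK (ℓ + 1) H → MatchingLE H s →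
      s * turanCount (r - 1) (n - s) (ℓ - 1) ≤ H.card →
      (Finset.univ.filter fun v => r * (s + 1) * n ^ (r - 2) + 1 ≤ hdeg H v).card = s := by
  classical
  set Ac := (ℓ-1)^(r-1) * (r-1).factorial with hAc
  set Bc := (ℓ-1).descFactorial (r-1) with hBc
  set c₀ := s + ℓ - 2 with hc₀
  set Cbig := Ac * (s*r*(r*(s+1))) + s * (Bc * ((r-1)*c₀)) with hCbig
  refine ⟨Cbig + c₀ + s + ℓ + r + 3, ?_⟩
  intro n hn H huni hK hmat hcount
  have hn0 : 0 < n := by omega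
  have hBc1 : 1 ≤ Bc := by
    rw [hBc, Nat.descFactorial_eq_factorial_mul_choose]
    have h1 := Nat.choose_pos (show r-1 ≤ ℓ-1 by omega)
    have h2 := Nat.factorial_pos (r-1)
    exact Nat.one_le_iff_ne_zero.2 (Nat.mul_ne_zero h2.ne' h1.ne')
  set V₀ := univ.filter (fun v : Fin n => r * (s+1) * n^(r-2) + 1 ≤ hdeg H v) with hV₀
  have hupper : V₀.card ≤ s := by
    by_contra hub
    push_neg at hub
    obtain ⟨W, hWsub, hWcard⟩ := Finset.exists_subset_card_eq (show s+1 ≤ V₀.card by omega)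
    have hdegW : ∀ w ∈ W, s * r * (Fintype.card (Fin n))^(r-2) < hdeg H w := by
      intro w hwW
      have hw := hWsub hwW
      rw [hV₀, mem_filter] at hw
      have hsr : s * r ≤ r * (s+1) := by
        have e1 : r*(s+1) = r*s + r := by ring
        have e2 : s*r = r*s := by ring
        omega
      have hle : s * r * (Fintype.card (Fin n))^(r-2) < r*(s+1)*n^(r-2) + 1 := by
        rw [Fintype.card_fin]
        exact Nat.lt_succ_of_le (Nat.mul_le_mul_right _ hsr)
      exact lt_of_lt_of_le hle hw.2
    obtain ⟨M, hMH, hMp, hMc⟩ := exists_big_matching H r s (by omega) huni W hWcard hdegW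
    have := hmat M hMH hMp
    omega
  have hlower : s ≤ V₀.card := by
    by_contra hlb
    push_neg at hlb
    set T := turanCount (r-1) (n-s) (ℓ-1) with hT
    have hq := turan_lower (r-1) (n-s) (ℓ-1) (by omega)
    have hdm := Nat.div_add_mod (n-s) (ℓ-1)
    have hmod : (n-s) % (ℓ-1) < ℓ-1 := Nat.mod_lt _ (by omega)
    have hlq : n - c₀ ≤ (ℓ-1) * ((n-s)/(ℓ-1)) := by omega
    have hF3 : Bc * (n - c₀)^(r-1) ≤ Ac * T := by
      calc Bc * (n-c₀)^(r-1)
          ≤ Bc * ((ℓ-1)*((n-s)/(ℓ-1)))^(r-1) := Nat.mul_le_mul_left _ (Nat.pow_le_pow_left hlq _)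
        _ = (ℓ-1)^(r-1) * Bc * ((n-s)/(ℓ-1))^(r-1) := by rw [mul_pow]; ring
        _ = Ac * ((ℓ-1).choose (r-1)) * ((n-s)/(ℓ-1))^(r-1) := by
            rw [hBc, Nat.descFactorial_eq_factorial_mul_choose, hAc]; ring
        _ = Ac * ((ℓ-1).choose (r-1) * ((n-s)/(ℓ-1))^(r-1)) := by ring
        _ ≤ Ac * T := Nat.mul_le_mul_left _ hq
    have hdegbound : ∀ v : Fin n, Ac * hdeg H v ≤ Bc * n^(r-1) := by
      intro v
      have h1 := hdeg_le_cliq H v r (by omega) huni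
      have h2 := clique_count_bound (linkAdj H v) (linkAdj_symm H v) ℓ (by omega)
        (link_free H v ℓ (by omega) hK) (r-1) (by omega)
      rw [Fintype.card_fin] at h2
      calc Ac * hdeg H v
          ≤ Ac * (cliq (linkAdj H v) (r-1)).card := Nat.mul_le_mul_left _ h1
        _ = (ℓ-1)^(r-1) * (r-1).factorial * (cliq (linkAdj H v) (r-1)).card := by rw [hAc]
        _ ≤ n^(r-1) * (ℓ-1).descFactorial (r-1) := h2
        _ = Bc * n^(r-1) := by rw [hBc]; ring
    set FP := H.filter (fun e => ∃ v ∈ V₀, v ∈ e) with hFP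
    set FN := H.filter (fun e => ¬ ∃ v ∈ V₀, v ∈ e) with hFN
    have hsplit : FP.card + FN.card = H.card :=
      card_filter_add_card_filter_not (fun e => ∃ v ∈ V₀, v ∈ e)
    have hmeet : FP.card ≤ ∑ v ∈ V₀, hdeg H v := by
      have hsub : FP ⊆ V₀.biUnion (fun v => H.filter (fun e => v ∈ e)) := by
        intro e he
        rw [hFP, mem_filter] at he
        obtain ⟨heH, v, hvV, hve⟩ := he
        exact mem_biUnion.2 ⟨v, hvV, mem_filter.2 ⟨heH, hve⟩⟩
      exact le_trans (card_le_card hsub) card_biUnion_le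
    have hmeet2 : Ac * FP.card ≤ (s-1) * (Bc * n^(r-1)) := by
      calc Ac * FP.card ≤ Ac * ∑ v ∈ V₀, hdeg H v := Nat.mul_le_mul_left _ hmeet
        _ = ∑ v ∈ V₀, Ac * hdeg H v := by rw [Finset.mul_sum]
        _ ≤ ∑ _v ∈ V₀, Bc * n^(r-1) := Finset.sum_le_sum (fun v _ => hdegbound v)
        _ = V₀.card * (Bc * n^(r-1)) := by rw [sum_const, smul_eq_mul]
        _ ≤ (s-1) * (Bc * n^(r-1)) := Nat.mul_le_mul_right _ (by omega)
    have havoid : FN.card ≤ s * r * (r*(s+1)*n^(r-2)) := by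
      apply card_le_of_small_deg FN s r _ (by omega)
      · intro M hM hMp
        exact hmat M (hM.trans (filter_subset _ _)) hMp
      · intro e he
        exact huni e (mem_filter.1 he).1
      · intro e he x hxe
        have he' := mem_filter.1 he
        have hx : x ∉ V₀ := fun hxV => he'.2 ⟨x, hxV, hxe⟩
        rw [hV₀, mem_filter] at hx
        push_neg at hx
        have hxd : hdeg H x ≤ r*(s+1)*n^(r-2) := by
          have := hx (mem_univ x); omega
        calc hdeg FN x ≤ hdeg H x :=
              card_le_card (filter_subset_filter _ (filter_subset _ _))
          _ ≤ r*(s+1)*n^(r-2) := hxd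
    set Y := n^(r-2) with hY
    have hYpos : 0 < Y := by rw [hY]; exact Nat.pow_pos hn0
    have hnr1 : n^(r-1) = n * Y := by
      rw [hY]
      have he : r-1 = (r-2)+1 := by omega
      rw [he, pow_succ]; ring
    have hpow : n^(r-1) ≤ (n-c₀)^(r-1) + (r-1)*c₀*Y := by
      have hb := pow_sub_bound (r-2) c₀ n
      have he : r-2+1 = r-1 := by omega
      rw [he] at hb
      rw [hY]
      exact hb
    have hE1 : s * (Bc * (n-c₀)^(r-1)) ≤ Ac * H.card := by
      calc s * (Bc * (n-c₀)^(r-1)) ≤ s * (Ac * T) := Nat.mul_le_mul_left _ hF3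
        _ = Ac * (s * T) := by ring
        _ ≤ Ac * H.card := Nat.mul_le_mul_left _ hcount
    have hE2 : Ac * H.card ≤ (s-1)*(Bc*n^(r-1)) + Ac * (s*r*(r*(s+1)*Y)) := by
      calc Ac * H.card = Ac * (FP.card + FN.card) := by rw [hsplit]
        _ = Ac * FP.card + Ac * FN.card := by ring
        _ ≤ (s-1)*(Bc*n^(r-1)) + Ac * (s*r*(r*(s+1)*Y)) := by
            apply add_le_add hmeet2
            apply Nat.mul_le_mul_left
            rw [hY]
            exact havoid
    have hkey : s * (Bc * n^(r-1)) ≤ (s-1)*(Bc*n^(r-1)) + Ac*(s*r*(r*(s+1)*Y))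
        + s*(Bc*((r-1)*c₀*Y)) := by
      calc s * (Bc * n^(r-1))
          ≤ s * (Bc * ((n-c₀)^(r-1) + (r-1)*c₀*Y)) :=
            Nat.mul_le_mul_left _ (Nat.mul_le_mul_left _ hpow)
        _ = s * (Bc * (n-c₀)^(r-1)) + s*(Bc*((r-1)*c₀*Y)) := by ring
        _ ≤ Ac * H.card + s*(Bc*((r-1)*c₀*Y)) := Nat.add_le_add_right hE1 _
        _ ≤ (s-1)*(Bc*n^(r-1)) + Ac*(s*r*(r*(s+1)*Y)) + s*(Bc*((r-1)*c₀*Y)) :=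
            Nat.add_le_add_right hE2 _
    have hsplit2 : s * (Bc * n^(r-1)) = (s-1)*(Bc*n^(r-1)) + Bc * n^(r-1) := by
      have hss : s = (s-1)+1 := by omega
      calc s * (Bc*n^(r-1)) = ((s-1)+1)*(Bc*n^(r-1)) := by rw [← hss]
        _ = (s-1)*(Bc*n^(r-1)) + Bc*n^(r-1) := by ring
    have hcb : Ac*(s*r*(r*(s+1)*Y)) + s*(Bc*((r-1)*c₀*Y)) = Cbig * Y := by
      rw [hCbig]; ring
    have hred : Bc * n^(r-1) ≤ Cbig * Y := by omega
    have hcontra : Cbig * Y < Bc * n^(r-1) := by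
      rw [hnr1]
      calc Cbig * Y < n * Y := mul_lt_mul_of_pos_right (by omega) hYpos
        _ ≤ Bc * (n*Y) := Nat.le_mul_of_pos_left _ (by omega)
    omega
  omega
end

section
/- Let ℓ ≥ r ≥ 3, s ≥ 1, and let n be sufficiently large. Let H be an n-vertex 𝒦_{ℓ+1}^r-free r-uniform hypergraph with matching number at most s that has the maximum number of edges among all such hypergraphs. Let V_0 be the set of vertices of degree at least r(s+1)n^{r−2} + 1 and U = V(H) ∖ V_0. Then U is a weakly independent set, i.e., no edge of H is entirely contained in U. -/
open Finset

variable {V : Type*}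

lemma arith_main (r s n : ℕ) (hr : 3 ≤ r) (hs : 1 ≤ s)
    (hn : 2*(r-1) * ((r^2*s*(r*s+r+1)) * (4*(r-1))^(r-2) + 1) + 4*r ≤ n) :
    r^2*s*(r*s+r+1) * n^(r-2) < ((n-1)/(r-1))^(r-1) := by
  set C := r^2*s*(r*s+r+1) with hC
  set k := 2*(r-1) with hk
  have hkpos : 0 < k := by omega
  set p := n / k with hp
  have h1 : C * (4*(r-1))^(r-2) + 1 ≤ p := by
    rw [hp, Nat.le_div_iff_mul_le hkpos]
    calc (C * (4*(r-1))^(r-2) + 1) * k = k * (C*(4*(r-1))^(r-2) + 1) := by ring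
    _ ≤ n := by omega
  have hppos : 1 ≤ p := le_trans (by omega) h1
  have h2 : p ≤ (n-1)/(r-1) := by
    have hn2 : 2 ≤ n := by omega
    have e1 : p = n/2/(r-1) := by rw [hp, Nat.div_div_eq_div_mul, hk]
    rw [e1]
    exact Nat.div_le_div_right (by omega)
  have h3 : n ≤ 2*k*p := by
    have h4 := Nat.div_add_mod n k
    have h5 : n % k < k := Nat.mod_lt _ hkpos
    have h6 : k ≤ k * p := by
      calc k = k*1 := by ring
      _ ≤ k*p := Nat.mul_le_mul_left k hppos
    rw [← hp] at h4
    have h7 : n ≤ 2*(k*p) := by omega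
    calc n ≤ 2*(k*p) := h7
    _ = 2*k*p := by ring
  have h4 : n^(r-2) ≤ (2*k)^(r-2) * p^(r-2) := by
    calc n^(r-2) ≤ (2*k*p)^(r-2) := Nat.pow_le_pow_left h3 _
    _ = (2*k)^(r-2) * p^(r-2) := by rw [mul_pow]
  have h5 : 2*k = 4*(r-1) := by omega
  have hpp : 0 < p^(r-2) := Nat.pow_pos hppos
  have h6 : C * n^(r-2) < p^(r-1) := by
    have e1 : p^(r-1) = p * p^(r-2) := by
      have e2 : r - 1 = (r-2) + 1 := by omega
      rw [e2, pow_succ]; ring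
    calc C * n^(r-2) ≤ C * ((2*k)^(r-2) * p^(r-2)) := Nat.mul_le_mul_left _ h4
    _ = (C * (4*(r-1))^(r-2)) * p^(r-2) := by rw [h5]; ring
    _ < p * p^(r-2) := Nat.mul_lt_mul_of_lt_of_le (by omega) (le_refl _) hpp
    _ = p^(r-1) := e1.symm
  exact lt_of_lt_of_le h6 (Nat.pow_le_pow_left h2 _)

lemma construction (n q r ℓ s : ℕ) (hr : 3 ≤ r) (hrl : r ≤ ℓ) (hs : 1 ≤ s)
    (hq1 : 1 ≤ q) (hqn : (r-1)*q ≤ n-1) (hn : 1 ≤ n) :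
    ∃ H₀ : Finset (Finset (Fin n)), IsUniform r H₀ ∧ ¬ HasK (ℓ+1) H₀ ∧ MatchingLE H₀ s ∧
      H₀.card = q^(r-1) := by
  classical
  have hψb : ∀ (i : Fin (r-1)) (a : Fin q), 1 + i.val*q + a.val < n := by
    intro i a
    have hi : i.val + 1 ≤ r - 1 := i.isLt
    have ha : a.val + 1 ≤ q := a.isLt
    have e1 : 1 + i.val*q + a.val ≤ i.val*q + q := by omega
    have e2 : i.val*q + q = (i.val+1)*q := by ring
    have e3 : (i.val+1)*q ≤ (r-1)*q := Nat.mul_le_mul_right _ hi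
    omega
  set ψ : Fin (r-1) → Fin q → Fin n := fun i a => ⟨1 + i.val*q + a.val, hψb i a⟩ with hψ
  have hnpos : 0 < n := hn
  set v₀ : Fin n := ⟨0, hnpos⟩ with hv₀
  have hψv₀ : ∀ i a, ψ i a ≠ v₀ := by
    intro i a h
    have := congrArg Fin.val h
    simp [hψ, hv₀] at this
  have hval : ∀ i a, (ψ i a).val = 1 + i.val*q + a.val := fun i a => rfl
  have hidx : ∀ i a, ((ψ i a).val - 1)/q = i.val := by
    intro i a
    have hc : q * i.val = i.val * q := Nat.mul_comm _ _
    have h0 : (ψ i a).val - 1 = q * i.val + a.val := by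
      rw [hval]; omega
    rw [h0, Nat.mul_add_div (by omega), Nat.div_eq_of_lt a.isLt, add_zero]
  have hrem : ∀ i a, ((ψ i a).val - 1) % q = a.val := by
    intro i a
    have hc : q * i.val = i.val * q := Nat.mul_comm _ _
    have h0 : (ψ i a).val - 1 = q * i.val + a.val := by
      rw [hval]; omega
    rw [h0, Nat.mul_add_mod, Nat.mod_eq_of_lt a.isLt]
  have hψinj : ∀ i a i' a', ψ i a = ψ i' a' → i = i' ∧ a = a' := by
    intro i a i' a' h
    have h1 : i.val = i'.val := by
      have := hidx i a; rw [h, hidx i' a'] at this; omega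
    have h2 : a.val = a'.val := by
      have := hrem i a; rw [h, hrem i' a'] at this; omega
    exact ⟨Fin.ext h1, Fin.ext h2⟩
  set edge : (Fin (r-1) → Fin q) → Finset (Fin n) :=
    fun t => insert v₀ ((univ : Finset (Fin (r-1))).image (fun i => ψ i (t i))) with hedge
  have hmemedge : ∀ t x, x ∈ edge t ↔ x = v₀ ∨ ∃ i, x = ψ i (t i) := by
    intro t x
    simp only [hedge, mem_insert, mem_image, mem_univ, true_and]
    constructor
    · rintro (h | ⟨i, hi⟩)
      · exact Or.inl h
      · exact Or.inr ⟨i, hi.symm⟩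
    · rintro (h | ⟨i, hi⟩)
      · exact Or.inl h
      · exact Or.inr ⟨i, hi.symm⟩
  have hv₀mem : ∀ t, v₀ ∈ edge t := fun t => mem_insert_self _ _
  have hedgecard : ∀ t, (edge t).card = r := by
    intro t
    have h1 : ((univ : Finset (Fin (r-1))).image (fun i => ψ i (t i))).card = r - 1 := by
      rw [card_image_of_injOn]
      · simp
      · intro i _ j _ h
        exact (hψinj i (t i) j (t j) h).1
    have h2 : v₀ ∉ (univ : Finset (Fin (r-1))).image (fun i => ψ i (t i)) := by
      rw [mem_image]
      rintro ⟨i, _, h⟩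
      exact hψv₀ i (t i) h
    rw [hedge]
    rw [card_insert_of_notMem h2, h1]
    omega
  refine ⟨(univ : Finset (Fin (r-1) → Fin q)).image edge, ?_, ?_, ?_, ?_⟩
  · intro f hf
    obtain ⟨t, _, rfl⟩ := mem_image.mp hf
    exact hedgecard t
  · rintro ⟨K, hK, S, hSsub, -, hcov⟩
    set J := K.erase v₀ with hJdef
    have hJ : ℓ ≤ J.card := by
      by_cases hv : v₀ ∈ K
      · rw [hJdef, card_erase_of_mem hv, hK]; omega
      · rw [hJdef, erase_eq_of_notMem hv, hK]; omega
    have hJK : J ⊆ K := erase_subset _ _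
    have claim : ∀ x ∈ J, ∀ y ∈ J, x ≠ y →
        ∃ (t : Fin (r-1) → Fin q) (i j : Fin (r-1)), x = ψ i (t i) ∧ y = ψ j (t j) := by
      intro x hx y hy hxy
      obtain ⟨E, hE, hxE, hyE⟩ := hcov x (hJK hx) y (hJK hy) hxy
      obtain ⟨t, _, rfl⟩ := mem_image.mp (hSsub hE)
      rcases (hmemedge t x).mp hxE with h | ⟨i, hi⟩
      · exact absurd h (ne_of_mem_erase hx)
      rcases (hmemedge t y).mp hyE with h | ⟨j, hj⟩
      · exact absurd h (ne_of_mem_erase hy)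
      exact ⟨t, i, j, hi, hj⟩
    have hJ2 : 1 < J.card := by omega
    have hrange : ∀ x ∈ J, (x.val - 1)/q < r - 1 := by
      intro x hx
      obtain ⟨y, hy, hyx⟩ := Finset.exists_mem_ne hJ2 x
      obtain ⟨t, i, j, hxe, _⟩ := claim x hx y hy (Ne.symm hyx)
      rw [hxe, hidx]
      exact i.isLt
    have hinj : Set.InjOn (fun x : Fin n => (x.val - 1)/q) J := by
      intro x hx y hy hxy
      by_contra hne
      obtain ⟨t, i, j, hxe, hye⟩ := claim x (mem_coe.mp hx) y (mem_coe.mp hy) hne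
      simp only [hxe, hye, hidx] at hxy
      have hij : i = j := Fin.ext hxy
      rw [hxe, hye, hij] at hne
      exact hne rfl
    have hcard1 : J.card = (J.image (fun x : Fin n => (x.val - 1)/q)).card :=
      (card_image_of_injOn hinj).symm
    have hcard2 : (J.image (fun x : Fin n => (x.val - 1)/q)) ⊆ Finset.range (r-1) := by
      intro m hm
      obtain ⟨x, hx, rfl⟩ := mem_image.mp hm
      exact mem_range.mpr (hrange x hx)
    have hcard3 : J.card ≤ r - 1 := by
      rw [hcard1]
      calc _ ≤ (Finset.range (r-1)).card := card_le_card hcard2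
      _ = r - 1 := card_range _
    omega
  · intro M hM hpair
    have h1 : M.card ≤ 1 := by
      rw [card_le_one]
      intro a ha b hb
      by_contra hne
      have hd := hpair (mem_coe.mpr ha) (mem_coe.mpr hb) hne
      obtain ⟨ta, _, rfl⟩ := mem_image.mp (hM ha)
      obtain ⟨tb, _, rfl⟩ := mem_image.mp (hM hb)
      exact (Finset.disjoint_left.mp hd (hv₀mem ta)) (hv₀mem tb)
    omega
  · rw [card_image_of_injOn]
    · rw [card_univ, Fintype.card_fun]
      simp
    · intro t _ t' _ h
      funext i
      have h1 : ψ i (t i) ∈ edge t' := by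
        rw [← h, hmemedge]
        exact Or.inr ⟨i, rfl⟩
      rcases (hmemedge t' _).mp h1 with h2 | ⟨j, h2⟩
      · exact absurd h2 (hψv₀ i (t i))
      · obtain ⟨hij, hab⟩ := hψinj j (t' j) i (t i) h2.symm
        rw [← hij] at hab ⊢
        exact hab.symm

theorem statement7 (r ℓ s : ℕ) (hr : 3 ≤ r) (hℓ : r ≤ ℓ) (hs : 1 ≤ s) :
    ∃ n₀ : ℕ, ∀ n ≥ n₀, ∀ H : Finset (Finset (Fin n)),
      IsUniform r H → ¬ HasK (ℓ + 1) H → MatchingLE H s →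
      (∀ H' : Finset (Finset (Fin n)),
        IsUniform r H' → ¬ HasK (ℓ + 1) H' → MatchingLE H' s → H'.card ≤ H.card) →
      ∀ e ∈ H, ¬ (e ⊆ Finset.univ.filter fun v => hdeg H v < r * (s + 1) * n ^ (r - 2) + 1) := by
  classical
  refine ⟨2*(r-1) * ((r^2*s*(r*s+r+1)) * (4*(r-1))^(r-2) + 1) + 4*r, ?_⟩
  intro n hn H hunif hfree hmatch hmax e he hsub
  have hn4r : 4*r ≤ n := le_trans (Nat.le_add_left _ _) hn
  have hnpos : 1 ≤ n := by omega
  set D := r*(s+1)*n^(r-2) with hD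
  have hdegE : ∀ x ∈ e, hdeg H x ≤ D := by
    intro x hx
    have h := hsub hx
    simp only [mem_filter] at h
    omega
  set q := (n-1)/(r-1) with hq
  have hqn : (r-1)*q ≤ n-1 := by
    rw [hq, mul_comm]
    exact Nat.div_mul_le_self _ _
  have hMI : r^2*s*(r*s+r+1) * n^(r-2) < q^(r-1) := arith_main r s n hr hs hn
  have hq1 : 1 ≤ q := by
    rcases Nat.eq_zero_or_pos q with h | h
    · rw [h, zero_pow (by omega : r - 1 ≠ 0)] at hMI
      exact absurd hMI (Nat.not_lt_zero _)
    · exact h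
  obtain ⟨H₀, hH₀u, hH₀f, hH₀m, hH₀c⟩ := construction n q r ℓ s hr hℓ hs hq1 hqn hnpos
  have hHbig : r^2*s*(r*s+r+1) * n^(r-2) < H.card := by
    have := hmax H₀ hH₀u hH₀f hH₀m
    rw [hH₀c] at this
    omega
  -- a maximal matching
  set 𝒮 := H.powerset.filter
    (fun M : Finset (Finset (Fin n)) =>
      ((M : Set (Finset (Fin n))).Pairwise fun a b => Disjoint a b)) with h𝒮
  have h𝒮ne : 𝒮.Nonempty := by
    refine ⟨∅, ?_⟩
    rw [h𝒮, mem_filter, mem_powerset]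
    exact ⟨empty_subset _, by simp⟩
  obtain ⟨M, hM𝒮, hMmax⟩ := Finset.exists_max_image 𝒮 Finset.card h𝒮ne
  rw [h𝒮, mem_filter, mem_powerset] at hM𝒮
  obtain ⟨hMsub, hMpair⟩ := hM𝒮
  have hMcard : M.card ≤ s := hmatch M hMsub hMpair
  set VM := M.biUnion id with hVM
  have hVMcard : VM.card ≤ r * s := by
    calc VM.card ≤ ∑ m ∈ M, (id m).card := card_biUnion_le
    _ = ∑ m ∈ M, r := sum_congr rfl fun m hm => hunif m (hMsub hm)
    _ = M.card * r := by rw [sum_const, smul_eq_mul]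
    _ ≤ s * r := Nat.mul_le_mul_right _ hMcard
    _ = r * s := Nat.mul_comm _ _
  have hmeet : ∀ f ∈ H, ∃ w ∈ f, w ∈ VM := by
    intro f hf
    by_cases hfM : f ∈ M
    · have hfne : f.Nonempty := card_pos.mp (by rw [hunif f hf]; omega)
      obtain ⟨w, hw⟩ := hfne
      exact ⟨w, hw, mem_biUnion.mpr ⟨f, hfM, hw⟩⟩
    · by_contra hcon
      push_neg at hcon
      have hdisj : ∀ m ∈ M, Disjoint f m := by
        intro m hm
        rw [Finset.disjoint_left]
        intro w hwf hwm
        exact hcon w hwf (mem_biUnion.mpr ⟨m, hm, hwm⟩)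
      have hins : insert f M ∈ 𝒮 := by
        rw [h𝒮, mem_filter, mem_powerset]
        refine ⟨insert_subset hf hMsub, ?_⟩
        intro a ha b hb hab
        simp only [coe_insert, Set.mem_insert_iff, mem_coe] at ha hb
        rcases ha with rfl | ha <;> rcases hb with rfl | hb
        · exact absurd rfl hab
        · exact hdisj b hb
        · exact (hdisj a ha).symm
        · exact hMpair (mem_coe.mpr ha) (mem_coe.mpr hb) hab
      have hle := hMmax _ hins
      rw [card_insert_of_notMem hfM] at hle
      omega
  have hVMne : VM.Nonempty := by
    obtain ⟨w, _, hw2⟩ := hmeet e he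
    exact ⟨w, hw2⟩
  obtain ⟨u, huVM, humax⟩ := Finset.exists_max_image VM (hdeg H) hVMne
  have hHle : H.card ≤ r * s * hdeg H u := by
    have hsub2 : H ⊆ VM.biUnion (fun w => H.filter (fun f => w ∈ f)) := by
      intro f hf
      obtain ⟨w, hwf, hwVM⟩ := hmeet f hf
      exact mem_biUnion.mpr ⟨w, hwVM, mem_filter.mpr ⟨hf, hwf⟩⟩
    calc H.card ≤ (VM.biUnion (fun w => H.filter (fun f => w ∈ f))).card := card_le_card hsub2
    _ ≤ ∑ w ∈ VM, (H.filter (fun f => w ∈ f)).card := card_biUnion_le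
    _ ≤ ∑ _w ∈ VM, hdeg H u := sum_le_sum fun w hw => humax w hw
    _ = VM.card * hdeg H u := by rw [sum_const, smul_eq_mul]
    _ ≤ r * s * hdeg H u := Nat.mul_le_mul_right _ hVMcard
  have hdegu : r*D + r*n^(r-2) < hdeg H u := by
    have hCeq : r^2*s*(r*s+r+1) * n^(r-2) = r*s*(r*D + r*n^(r-2)) := by rw [hD]; ring
    by_contra hcon
    push_neg at hcon
    have h2 : r*s*hdeg H u ≤ r*s*(r*D + r*n^(r-2)) := Nat.mul_le_mul_left _ hcon
    rw [hCeq] at hHbig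
    omega
  have hunotine : u ∉ e := by
    intro huE
    have h1 := hdegE u huE
    have h2 : D ≤ r*D := Nat.le_mul_of_pos_left _ (by omega)
    have h3 : (0:ℕ) ≤ r*n^(r-2) := Nat.zero_le _
    omega
  have hene : e.Nonempty := card_pos.mp (by rw [hunif e he]; omega)
  obtain ⟨v, hv⟩ := hene
  have huv : u ≠ v := fun h => hunotine (h ▸ hv)
  -- the pieces
  set Ht := H.filter (fun f => Disjoint f e) with hHt
  set L := (H.filter (fun f => u ∈ f)).filter (fun f => Disjoint f e) with hLdef
  have hsplit : Ht.card + (H.filter (fun f => ¬ Disjoint f e)).card = H.card := by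
    rw [hHt]
    exact card_filter_add_card_filter_not _
  have hmeet_e : (H.filter (fun f => ¬ Disjoint f e)).card ≤ r * D := by
    have hsub3 : H.filter (fun f => ¬ Disjoint f e) ⊆
        e.biUnion (fun x => H.filter (fun f => x ∈ f)) := by
      intro f hf
      rw [mem_filter] at hf
      obtain ⟨x, hxf, hxe⟩ := Finset.not_disjoint_iff.mp hf.2
      exact mem_biUnion.mpr ⟨x, hxe, mem_filter.mpr ⟨hf.1, hxf⟩⟩
    calc _ ≤ (e.biUnion (fun x => H.filter (fun f => x ∈ f))).card := card_le_card hsub3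
    _ ≤ ∑ x ∈ e, (H.filter (fun f => x ∈ f)).card := card_biUnion_le
    _ ≤ ∑ _x ∈ e, D := sum_le_sum fun x hx => hdegE x hx
    _ = e.card * D := by rw [sum_const, smul_eq_mul]
    _ = r * D := by rw [hunif e he]
  have hdeg_split : L.card + ((H.filter (fun f => u ∈ f)).filter (fun f => ¬ Disjoint f e)).card
      = hdeg H u := by
    rw [hLdef, hdeg]
    exact card_filter_add_card_filter_not _
  have hpair_card : ((H.filter (fun f => u ∈ f)).filter (fun f => ¬ Disjoint f e)).card
      ≤ r * n^(r-2) := by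
    have hsub4 : (H.filter (fun f => u ∈ f)).filter (fun f => ¬ Disjoint f e) ⊆
        e.biUnion (fun x => H.filter (fun f => u ∈ f ∧ x ∈ f)) := by
      intro f hf
      rw [mem_filter, mem_filter] at hf
      obtain ⟨⟨hfH, hfu⟩, hfd⟩ := hf
      obtain ⟨x, hxf, hxe⟩ := Finset.not_disjoint_iff.mp hfd
      exact mem_biUnion.mpr ⟨x, hxe, mem_filter.mpr ⟨hfH, hfu, hxf⟩⟩
    have hpd : ∀ x ∈ e, (H.filter (fun f => u ∈ f ∧ x ∈ f)).card ≤ n^(r-2) := by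
      intro x hx
      have hux : u ≠ x := fun h => hunotine (h ▸ hx)
      have hinj : Set.InjOn (fun f : Finset (Fin n) => (f.erase u).erase x)
          (H.filter (fun f => u ∈ f ∧ x ∈ f)) := by
        intro f hf g hg hfg
        rw [mem_coe, mem_filter] at hf hg
        have hrec : ∀ h : Finset (Fin n), h ∈ H → u ∈ h → x ∈ h →
            insert u (insert x ((h.erase u).erase x)) = h := by
          intro h _ hu hx'
          rw [insert_erase (mem_erase.mpr ⟨fun hxu => hux hxu.symm, hx'⟩),
            insert_erase hu]
        have hfg' : (f.erase u).erase x = (g.erase u).erase x := hfg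
        calc f = insert u (insert x ((f.erase u).erase x)) :=
              (hrec f hf.1 hf.2.1 hf.2.2).symm
        _ = insert u (insert x ((g.erase u).erase x)) := by rw [hfg']
        _ = g := hrec g hg.1 hg.2.1 hg.2.2
      have hmaps : ∀ f ∈ H.filter (fun f => u ∈ f ∧ x ∈ f),
          (f.erase u).erase x ∈ (univ : Finset (Fin n)).powersetCard (r-2) := by
        intro f hf
        rw [mem_filter] at hf
        rw [mem_powersetCard]
        refine ⟨subset_univ _, ?_⟩
        rw [card_erase_of_mem (mem_erase.mpr ⟨fun h => hux (h.symm), hf.2.2⟩),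
          card_erase_of_mem hf.2.1, hunif f hf.1]
        omega
      calc (H.filter (fun f => u ∈ f ∧ x ∈ f)).card
          ≤ ((univ : Finset (Fin n)).powersetCard (r-2)).card :=
            card_le_card_of_injOn _ hmaps hinj
      _ = (Fintype.card (Fin n)).choose (r-2) := by rw [card_powersetCard, card_univ]
      _ = n.choose (r-2) := by rw [Fintype.card_fin]
      _ ≤ n^(r-2) := Nat.choose_le_pow _ _
    calc _ ≤ (e.biUnion (fun x => H.filter (fun f => u ∈ f ∧ x ∈ f))).card :=
          card_le_card hsub4
    _ ≤ ∑ x ∈ e, (H.filter (fun f => u ∈ f ∧ x ∈ f)).card := card_biUnion_le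
    _ ≤ ∑ _x ∈ e, n^(r-2) := sum_le_sum hpd
    _ = e.card * n^(r-2) := by rw [sum_const, smul_eq_mul]
    _ = r * n^(r-2) := by rw [hunif e he]
  have hLbig : r*D < L.card := by omega
  -- build the new hypergraph
  set ρ : Finset (Fin n) → Finset (Fin n) := fun f => insert v (f.erase u) with hρ
  set New := L.image ρ with hNewdef
  have hLspec : ∀ f ∈ L, f ∈ H ∧ u ∈ f ∧ Disjoint f e := by
    intro f hf
    rw [hLdef, mem_filter, mem_filter] at hf
    exact ⟨hf.1.1, hf.1.2, hf.2⟩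
  have hvnotf : ∀ f ∈ L, v ∉ f := by
    intro f hf h
    exact Finset.disjoint_left.mp (hLspec f hf).2.2 h hv
  have hkey : ∀ f ∈ L, insert u ((ρ f).erase v) = f := by
    intro f hf
    have h1 : v ∉ f.erase u := fun h => hvnotf f hf (mem_of_mem_erase h)
    rw [hρ]
    simp only []
    rw [Finset.erase_insert h1, insert_erase (hLspec f hf).2.1]
  have hρinj : Set.InjOn ρ L := by
    intro f hf g hg hfg
    rw [← hkey f (mem_coe.mp hf), ← hkey g (mem_coe.mp hg), hfg]
  have hNewcard : New.card = L.card := card_image_of_injOn hρinj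
  have hNewv : ∀ E ∈ New, v ∈ E := by
    intro E hE
    obtain ⟨f, _, rfl⟩ := mem_image.mp hE
    exact mem_insert_self _ _
  have hHtv : ∀ f ∈ Ht, v ∉ f := by
    intro f hf h
    rw [hHt, mem_filter] at hf
    exact Finset.disjoint_left.mp hf.2 h hv
  set Hstar := Ht ∪ New with hHstardef
  have hdisjHN : Disjoint Ht New := by
    rw [Finset.disjoint_left]
    intro f hf hfN
    exact hHtv f hf (hNewv f hfN)
  have hHstarcard : Hstar.card = Ht.card + New.card := card_union_of_disjoint hdisjHN
  have hHstaru : IsUniform r Hstar := by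
    intro f hf
    rcases mem_union.mp hf with h | h
    · exact hunif f (mem_of_mem_filter f h)
    · obtain ⟨g, hg, rfl⟩ := mem_image.mp h
      have hug := (hLspec g hg).2.1
      have h1 : v ∉ g.erase u := fun h' => hvnotf g hg (mem_of_mem_erase h')
      rw [hρ]
      simp only []
      rw [card_insert_of_notMem h1, card_erase_of_mem hug, hunif g (hLspec g hg).1]
      omega
  have hHstarm : MatchingLE Hstar s := by
    intro M' hM' hp'
    set M1 := M'.filter (fun f => ¬ v ∈ f) with hM1
    set M2 := M'.filter (fun f => v ∈ f) with hM2
    have hM2c : M2.card ≤ 1 := by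
      rw [card_le_one]
      intro a ha b hb
      rw [hM2, mem_filter] at ha hb
      by_contra hne
      exact (Finset.disjoint_left.mp
        (hp' (mem_coe.mpr ha.1) (mem_coe.mpr hb.1) hne) ha.2) hb.2
    have hM1Ht : ∀ f ∈ M1, f ∈ Ht := by
      intro f hf
      rw [hM1, mem_filter] at hf
      rcases mem_union.mp (hM' hf.1) with h | h
      · exact h
      · exact absurd (hNewv f h) hf.2
    have heM1 : e ∉ M1 := by
      intro h
      rw [hM1, mem_filter] at h
      exact h.2 hv
    have hinssub : insert e M1 ⊆ H := by
      intro f hf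
      rcases mem_insert.mp hf with rfl | hf'
      · exact he
      · exact mem_of_mem_filter f (hM1Ht f hf')
    have hinspair : ((insert e M1 : Finset (Finset (Fin n))) : Set (Finset (Fin n))).Pairwise
        (fun a b => Disjoint a b) := by
      intro a ha b hb hab
      simp only [coe_insert, Set.mem_insert_iff, mem_coe] at ha hb
      rcases ha with rfl | ha <;> rcases hb with rfl | hb
      · exact absurd rfl hab
      · have := hM1Ht b hb
        rw [hHt, mem_filter] at this
        exact this.2.symm
      · have := hM1Ht a ha
        rw [hHt, mem_filter] at this
        exact this.2
      · exact hp' (mem_coe.mpr (mem_of_mem_filter a ha)) (mem_coe.mpr (mem_of_mem_filter b hb)) hab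
    have h1 : (insert e M1).card ≤ s := hmatch _ hinssub hinspair
    have h2 : (insert e M1).card = M1.card + 1 := card_insert_of_notMem heM1
    have h3 : M2.card + M1.card = M'.card := by
      rw [hM1, hM2]
      exact card_filter_add_card_filter_not _
    omega
  have hHstarf : ¬ HasK (ℓ+1) Hstar := by
    rintro ⟨K, hK, S, hSsub, hScard, hcov⟩
    set φ : Finset (Fin n) → Finset (Fin n) :=
      fun E => if h : ∃ f ∈ L, ρ f = E then h.choose else E with hφ
    have hφ_new : ∀ E, (h : ∃ f ∈ L, ρ f = E) → φ E ∈ L ∧ ρ (φ E) = E := by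
      intro E h
      rw [hφ]
      simp only [dif_pos h]
      exact ⟨h.choose_spec.1, h.choose_spec.2⟩
    have hφ_Ht : ∀ E ∈ Ht, φ E = E := by
      intro E hE
      rw [hφ]
      simp only []
      rw [dif_neg]
      rintro ⟨f, hf, rfl⟩
      exact hHtv _ hE (mem_insert_self v _)
    have hedge : ∀ E ∈ S, φ E ∈ H ∧ (∀ x ∈ E, x ≠ v → x ∈ φ E) ∧
        (v ∈ E → (u ∈ φ E ∧ ∀ x ∈ E, x ≠ v → x ≠ u)) := by
      intro E hE
      rcases mem_union.mp (hSsub hE) with h | h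
      · refine ⟨by rw [hφ_Ht E h]; exact mem_of_mem_filter E h, ?_, ?_⟩
        · intro x hx _
          rw [hφ_Ht E h]
          exact hx
        · intro hvE
          exact absurd hvE (hHtv E h)
      · have hex : ∃ f ∈ L, ρ f = E := mem_image.mp h
        obtain ⟨hfL, hfρ⟩ := hφ_new E hex
        have hu : u ∈ φ E := (hLspec _ hfL).2.1
        refine ⟨(hLspec _ hfL).1, ?_, fun _ => ⟨hu, ?_⟩⟩
        · intro x hx hxv
          rw [← hfρ, hρ] at hx
          simp only [mem_insert] at hx
          rcases hx with rfl | hx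
          · exact absurd rfl hxv
          · exact mem_of_mem_erase hx
        · intro x hx hxv
          rw [← hfρ, hρ] at hx
          simp only [mem_insert] at hx
          rcases hx with rfl | hx
          · exact absurd rfl hxv
          · exact ne_of_mem_erase hx
    have hφS : ∀ E' ∈ S.image φ, E' ∈ H := by
      intro E' hE'
      obtain ⟨E, hE, rfl⟩ := mem_image.mp hE'
      exact (hedge E hE).1
    by_cases hvK : v ∈ K
    · have hcov_vx : ∀ x ∈ K.erase v, ∃ E ∈ S, v ∈ E ∧ x ∈ E := by
        intro x hx
        obtain ⟨E, hE, hvE, hxE⟩ := hcov v hvK x (mem_of_mem_erase hx)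
          (Ne.symm (ne_of_mem_erase hx))
        exact ⟨E, hE, hvE, hxE⟩
      have huK : u ∉ K.erase v := by
        intro hu
        obtain ⟨E, hE, hvE, huE⟩ := hcov_vx u hu
        exact ((hedge E hE).2.2 hvE).2 u huE huv rfl
      apply hfree
      refine ⟨insert u (K.erase v), ?_, S.image φ, hφS, ?_, ?_⟩
      · rw [card_insert_of_notMem huK, card_erase_of_mem hvK, hK]
        omega
      · exact le_trans card_image_le hScard
      · intro x hx y hy hxy
        rcases mem_insert.mp hx with rfl | hx' <;> rcases mem_insert.mp hy with rfl | hy'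
        · exact absurd rfl hxy
        · obtain ⟨E, hE, hvE, hyE⟩ := hcov_vx y hy'
          exact ⟨φ E, mem_image_of_mem φ hE, ((hedge E hE).2.2 hvE).1,
            (hedge E hE).2.1 y hyE (ne_of_mem_erase hy')⟩
        · obtain ⟨E, hE, hvE, hxE⟩ := hcov_vx x hx'
          exact ⟨φ E, mem_image_of_mem φ hE,
            (hedge E hE).2.1 x hxE (ne_of_mem_erase hx'), ((hedge E hE).2.2 hvE).1⟩
        · obtain ⟨E, hE, hxE, hyE⟩ := hcov x (mem_of_mem_erase hx') y (mem_of_mem_erase hy') hxy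
          exact ⟨φ E, mem_image_of_mem φ hE,
            (hedge E hE).2.1 x hxE (ne_of_mem_erase hx'),
            (hedge E hE).2.1 y hyE (ne_of_mem_erase hy')⟩
    · apply hfree
      refine ⟨K, hK, S.image φ, hφS, le_trans card_image_le hScard, ?_⟩
      intro x hx y hy hxy
      obtain ⟨E, hE, hxE, hyE⟩ := hcov x hx y hy hxy
      exact ⟨φ E, mem_image_of_mem φ hE,
        (hedge E hE).2.1 x hxE (fun h => hvK (h ▸ hx)),
        (hedge E hE).2.1 y hyE (fun h => hvK (h ▸ hy))⟩
  have hfinal := hmax Hstar hHstaru hHstarf hHstarm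
  omega
end

section
/- Let s ≥ 1 and n ≥ 20s(s+1). The 3-uniform hypergraph ℱ(n,s) is Fano-plane-free, has matching number at most s, and has exactly C(s,2)·(n−s) + s·C(n−s,2) edges. -/
open Finset

variable {V : Type*}

/-- The edge set of the Fano plane on `Fin 7` (vertices `1,…,7` renamed `0,…,6`). -/
def fanoEdges : Finset (Finset (Fin 7)) :=
  {{0,1,2}, {2,3,4}, {4,5,0}, {0,6,3}, {1,6,4}, {2,6,5}, {1,3,5}}

/-- `G` contains a copy of the Fano plane: an injection of its vertices sending every
edge of the Fano plane to an edge of `G`. -/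
def ContainsFano [DecidableEq V] (G : Finset (Finset V)) : Prop :=
  ∃ f : Fin 7 ↪ V, ∀ e ∈ fanoEdges, e.map f ∈ G

/-- The extremal hypergraph `ℱ(n,s)` realized on `Fin n` with `X = {0,…,s-1}` and
`Y = {s,…,n-1}`: the edges are all triples with exactly one or exactly two vertices in `X`. -/
def calF (n s : ℕ) : Finset (Finset (Fin n)) :=
  Finset.univ.filter fun e => e.card = 3 ∧
    ((e.filter fun v => v.val < s).card = 1 ∨ (e.filter fun v => v.val < s).card = 2)

lemma cardX (n s : ℕ) (h : s ≤ n) :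
    (univ.filter fun v : Fin n => v.val < s).card = s := by
  have : (univ.filter fun v : Fin n => v.val < s)
      = map ⟨Fin.castLE h, Fin.castLE_injective h⟩ univ := by
    ext v
    simp only [mem_map, mem_univ, true_and, mem_filter, Function.Embedding.coeFn_mk]
    constructor
    · intro hv; exact ⟨⟨v.val, hv⟩, rfl⟩
    · rintro ⟨a, rfl⟩; exact a.isLt
  rw [this, card_map, card_univ, Fintype.card_fin]

set_option maxRecDepth 20000 in
lemma fano2col : ∀ g : Fin 7 → Bool, ∃ e ∈ fanoEdges,
    (∀ v ∈ e, g v = true) ∨ (∀ v ∈ e, g v = false) := by decide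

lemma count_k (n s k : ℕ) (hk : k ≤ 3) (hsn : s ≤ n) :
    (univ.filter fun e : Finset (Fin n) =>
        e.card = 3 ∧ (e.filter fun v => v.val < s).card = k).card
    = s.choose k * (n - s).choose (3 - k) := by
  set X := univ.filter fun v : Fin n => v.val < s with hX
  set Y := univ.filter fun v : Fin n => ¬ v.val < s with hY
  have hXc : X.card = s := cardX n s hsn
  have hYc : Y.card = n - s := by
    rw [hY, filter_not, card_sdiff_of_subset (filter_subset _ _), card_univ, Fintype.card_fin, ← hX, hXc]
  have key : (univ.filter fun e : Finset (Fin n) =>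
        e.card = 3 ∧ (e.filter fun v => v.val < s).card = k).card
      = (X.powersetCard k ×ˢ Y.powersetCard (3 - k)).card := by
    apply Finset.card_nbij' (fun e => (e.filter fun v => v.val < s, e.filter fun v => ¬ v.val < s))
      (fun p => p.1 ∪ p.2)
    · intro e he
      simp only [mem_coe, mem_filter, mem_univ, true_and] at he
      obtain ⟨h3, hfk⟩ := he
      have hsum := card_filter_add_card_filter_not (s := e)
        (p := fun v : Fin n => v.val < s)
      simp only [mem_coe, mem_product, mem_powersetCard, hX, hY]
      refine ⟨⟨fun v hv => mem_filter.2 ⟨mem_univ _, (mem_filter.1 hv).2⟩, hfk⟩,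
        fun v hv => mem_filter.2 ⟨mem_univ _, (mem_filter.1 hv).2⟩, by omega⟩
    · intro p hp
      simp only [mem_coe, mem_product, mem_powersetCard, hX, hY] at hp
      obtain ⟨⟨h1s, h1c⟩, h2s, h2c⟩ := hp
      have hd : Disjoint p.1 p.2 := by
        refine disjoint_left.2 fun v hv1 hv2 => ?_
        exact absurd (mem_filter.1 (h1s hv1)).2 (mem_filter.1 (h2s hv2)).2
      have hf1 : p.1.filter (fun v => v.val < s) = p.1 :=
        filter_true_of_mem fun v hv => (mem_filter.1 (h1s hv)).2
      have hf2 : p.2.filter (fun v => v.val < s) = ∅ :=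
        filter_false_of_mem fun v hv => (mem_filter.1 (h2s hv)).2
      simp only [mem_coe, mem_filter, mem_univ, true_and, filter_union, hf1, hf2, union_empty,
        card_union_of_disjoint hd]
      exact ⟨by omega, h1c⟩
    · intro e he
      exact filter_union_filter_not_eq _ e
    · intro p hp
      simp only [mem_coe, mem_product, mem_powersetCard, hX, hY] at hp
      obtain ⟨⟨h1s, h1c⟩, h2s, h2c⟩ := hp
      have hf1 : p.1.filter (fun v => v.val < s) = p.1 :=
        filter_true_of_mem fun v hv => (mem_filter.1 (h1s hv)).2
      have hf2 : p.2.filter (fun v => v.val < s) = ∅ :=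
        filter_false_of_mem fun v hv => (mem_filter.1 (h2s hv)).2
      have hg1 : p.1.filter (fun v => ¬ v.val < s) = ∅ :=
        filter_false_of_mem fun v hv => not_not_intro (mem_filter.1 (h1s hv)).2
      have hg2 : p.2.filter (fun v => ¬ v.val < s) = p.2 :=
        filter_true_of_mem fun v hv => (mem_filter.1 (h2s hv)).2
      have e1 : ((p.1 ∪ p.2).filter fun v => v.val < s) = p.1 := by
        rw [filter_union, hf1, hf2, union_empty]
      have e2 : ((p.1 ∪ p.2).filter fun v => ¬ v.val < s) = p.2 := by
        rw [filter_union, hg1, hg2, empty_union]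
      simp only [e1, e2]
  rw [key, card_product, card_powersetCard, card_powersetCard, hXc, hYc]

theorem statement13 (s n : ℕ) (hs : 1 ≤ s) (hn : 20 * s * (s + 1) ≤ n) :
    IsUniform 3 (calF n s) ∧ ¬ ContainsFano (calF n s) ∧ MatchingLE (calF n s) s ∧
      (calF n s).card = s.choose 2 * (n - s) + s * (n - s).choose 2 := by
  have hsn : s ≤ n := by nlinarith
  refine ⟨fun e he => ((mem_filter.1 he).2).1, ?_, ?_, ?_⟩
  · rintro ⟨f, hf⟩
    obtain ⟨e, he, hmono⟩ := fano2col (fun v => decide ((f v).val < s))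
    have hmem := hf e he
    simp only [calF, mem_filter, mem_univ, true_and] at hmem
    obtain ⟨h3, hc⟩ := hmem
    rw [Finset.filter_map, card_map] at hc
    rw [card_map] at h3
    rcases hmono with h | h
    · have : e.filter ((fun v : Fin n => v.val < s) ∘ f) = e :=
        filter_true_of_mem fun v hv => by simpa using h v hv
      rw [this, h3] at hc
      omega
    · have : e.filter ((fun v : Fin n => v.val < s) ∘ f) = ∅ :=
        filter_false_of_mem fun v hv => by simpa using h v hv
      rw [this, card_empty] at hc
      omega
  · intro M hM hpair
    have hsub : ∀ e ∈ M, 1 ≤ (e.filter fun v : Fin n => v.val < s).card := by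
      intro e he
      have := hM he
      simp only [calF, mem_filter, mem_univ, true_and] at this
      omega
    have hdisj : ∀ x ∈ M, ∀ y ∈ M, x ≠ y →
        Disjoint (x.filter fun v : Fin n => v.val < s) (y.filter fun v => v.val < s) :=
      fun x hx y hy hxy => disjoint_filter_filter (hpair hx hy hxy)
    calc M.card = ∑ _e ∈ M, 1 := by simp
      _ ≤ ∑ e ∈ M, (e.filter fun v : Fin n => v.val < s).card := sum_le_sum hsub
      _ = (M.biUnion fun e => e.filter fun v : Fin n => v.val < s).card :=
          (card_biUnion hdisj).symm
      _ ≤ (univ.filter fun v : Fin n => v.val < s).card := by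
          apply card_le_card
          intro v hv
          obtain ⟨e, _, hv2⟩ := mem_biUnion.1 hv
          exact mem_filter.2 ⟨mem_univ _, (mem_filter.1 hv2).2⟩
      _ = s := cardX n s hsn
  · have hsplit : calF n s
        = (univ.filter fun e : Finset (Fin n) =>
            e.card = 3 ∧ (e.filter fun v => v.val < s).card = 1)
        ∪ (univ.filter fun e : Finset (Fin n) =>
            e.card = 3 ∧ (e.filter fun v => v.val < s).card = 2) := by
      rw [← filter_or]
      apply filter_congr
      intro e _
      tauto
    have hd : Disjoint
        (univ.filter fun e : Finset (Fin n) =>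
            e.card = 3 ∧ (e.filter fun v => v.val < s).card = 1)
        (univ.filter fun e : Finset (Fin n) =>
            e.card = 3 ∧ (e.filter fun v => v.val < s).card = 2) := by
      refine disjoint_left.2 fun e h1 h2 => ?_
      simp only [mem_filter] at h1 h2
      omega
    rw [hsplit, card_union_of_disjoint hd, count_k n s 1 (by omega) hsn,
      count_k n s 2 (by omega) hsn]
    simp only [Nat.choose_one_right]
    rw [Nat.choose_one_right]
    ring
end

section
/- Let s ≥ 1 and n ≥ 20s(s+1). Let G be an n-vertex Fano-plane-free 3-uniform hypergraph with matching number at most s that has the maximum number of edges among all such hypergraphs. Then the set X of vertices of G whose degree is at least 3(s+1)n + 1 has size exactly s. -/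
open Finset

variable {V : Type*}

/-! ### Auxiliary lemmas -/

lemma two_mul_choose_two (m : ℕ) : 2 * m.choose 2 = m * (m - 1) := by
  rw [Nat.choose_two_right]
  refine Nat.mul_div_cancel' ?_
  rcases m with _ | k
  · simp
  · simpa [Nat.mul_comm] using (Nat.even_mul_succ_self k).two_dvd

lemma arith_key (t k : ℕ) (h : 20 * (t + 1) * (t + 2) ≤ t + k + 3) :
    t * ((t + k + 3) * (t + k + 2)) + 18 * (t + 1) * (t + 2) * (t + k + 3)
      < (t + 1) * ((k + 2) * (k + 1)) := by
  have key : 20 * (t + 1) * (t + 2) * (t + k + 3) ≤ (t + k + 3) * (t + k + 3) :=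
    Nat.mul_le_mul_right _ h
  nlinarith [key, Nat.zero_le t, Nat.zero_le k]

lemma final_contra (s n c : ℕ) (hs : 1 ≤ s) (hn : 20 * s * (s + 1) ≤ n)
    (hsn : s + 2 ≤ n)
    (hlow : s * ((n - s).choose 2) ≤ c)
    (hhigh : c ≤ (s - 1) * n.choose 2 + 9 * s * (s + 1) * n) : False := by
  obtain ⟨t, rfl⟩ : ∃ t, s = t + 1 := ⟨s - 1, by omega⟩
  obtain ⟨k, hk⟩ : ∃ k, n = t + k + 3 := ⟨n - (t + 3), by omega⟩
  subst hk
  have hh : 20 * (t + 1) * (t + 2) ≤ t + k + 3 := by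
    have : 20 * (t + 1) * (t + 2) = 20 * (t + 1) * (t + 1 + 1) := by ring
    omega
  have key := arith_key t k hh
  have c1 : 2 * ((t + k + 3 - (t + 1)).choose 2) = (k + 2) * (k + 1) := by
    rw [show t + k + 3 - (t + 1) = k + 2 by omega, two_mul_choose_two]
    rfl
  have c2 : 2 * ((t + k + 3).choose 2) = (t + k + 3) * (t + k + 2) := by
    rw [two_mul_choose_two]
    rfl
  have A1 : (t + 1) * ((k + 2) * (k + 1)) ≤ 2 * c := by
    calc (t + 1) * ((k + 2) * (k + 1))
        = (t + 1) * (2 * ((t + k + 3 - (t + 1)).choose 2)) := by rw [c1]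
      _ = 2 * ((t + 1) * ((t + k + 3 - (t + 1)).choose 2)) := by ring
      _ ≤ 2 * c := Nat.mul_le_mul_left 2 hlow
  have A2 : 2 * c ≤ t * ((t + k + 3) * (t + k + 2))
      + 18 * (t + 1) * (t + 2) * (t + k + 3) := by
    calc 2 * c ≤ 2 * ((t + 1 - 1) * (t + k + 3).choose 2
          + 9 * (t + 1) * (t + 1 + 1) * (t + k + 3)) := Nat.mul_le_mul_left 2 hhigh
      _ = t * (2 * ((t + k + 3).choose 2)) + 18 * (t + 1) * (t + 2) * (t + k + 3) := by
          rw [show t + 1 - 1 = t by omega]; ring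
      _ = t * ((t + k + 3) * (t + k + 2)) + 18 * (t + 1) * (t + 2) * (t + k + 3) := by
          rw [c2]
  omega

lemma pair_count_s14 {n : ℕ} (G : Finset (Finset (Fin n))) (h3 : ∀ e ∈ G, e.card = 3)
    (x b : Fin n) (hbx : b ≠ x) :
    (G.filter fun e => x ∈ e ∧ b ∈ e).card ≤ n := by
  have hmain : (G.filter fun e => x ∈ e ∧ b ∈ e).card
      ≤ ((univ : Finset (Fin n)).powersetCard 1).card := by
    apply Finset.card_le_card_of_injOn (fun e => (e.erase x).erase b)
    · intro e he
      rw [mem_coe, mem_filter] at he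
      obtain ⟨heG, hxe, hbe⟩ := he
      rw [mem_coe, mem_powersetCard]
      refine ⟨subset_univ _, ?_⟩
      rw [card_erase_of_mem (mem_erase.2 ⟨hbx, hbe⟩), card_erase_of_mem hxe, h3 e heG]
    · intro e₁ h₁ e₂ h₂ heq
      simp only [coe_filter, Set.mem_setOf_eq] at h₁ h₂
      have key : ∀ e : Finset (Fin n), x ∈ e → b ∈ e →
          insert x (insert b ((e.erase x).erase b)) = e := by
        intro e hxe hbe
        rw [insert_erase (mem_erase.2 ⟨hbx, hbe⟩), insert_erase hxe]
      simp only [] at heq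
      rw [← key e₁ h₁.2.1 h₁.2.2, ← key e₂ h₂.2.1 h₂.2.2, heq]
  simpa using hmain

lemma star_meet_count {n : ℕ} (G : Finset (Finset (Fin n))) (h3 : ∀ e ∈ G, e.card = 3)
    (x : Fin n) (B : Finset (Fin n)) (hx : x ∉ B) :
    (G.filter fun e => x ∈ e ∧ ¬ Disjoint e B).card ≤ B.card * n := by
  have hsub : (G.filter fun e => x ∈ e ∧ ¬ Disjoint e B)
      ⊆ B.biUnion (fun b => G.filter fun e => x ∈ e ∧ b ∈ e) := by
    intro e he
    rw [mem_filter] at he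
    obtain ⟨heG, hxe, hnd⟩ := he
    obtain ⟨a, hae, haB⟩ := Finset.not_disjoint_iff.1 hnd
    exact mem_biUnion.2 ⟨a, haB, mem_filter.2 ⟨heG, hxe, hae⟩⟩
  calc (G.filter fun e => x ∈ e ∧ ¬ Disjoint e B).card
      ≤ (B.biUnion (fun b => G.filter fun e => x ∈ e ∧ b ∈ e)).card := card_le_card hsub
    _ ≤ ∑ b ∈ B, (G.filter fun e => x ∈ e ∧ b ∈ e).card := card_biUnion_le
    _ ≤ ∑ _b ∈ B, n := by
        refine Finset.sum_le_sum fun b hb => pair_count_s14 G h3 x b ?_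
        rintro rfl; exact hx hb
    _ = B.card * n := by rw [Finset.sum_const, smul_eq_mul]

lemma deg_le_choose {n : ℕ} (G : Finset (Finset (Fin n))) (h3 : ∀ e ∈ G, e.card = 3)
    (x : Fin n) : hdeg G x ≤ n.choose 2 := by
  have hmain : (G.filter fun e => x ∈ e).card
      ≤ ((univ : Finset (Fin n)).powersetCard 2).card := by
    apply Finset.card_le_card_of_injOn (fun e => e.erase x)
    · intro e he
      rw [mem_coe, mem_filter] at he
      rw [mem_coe, mem_powersetCard]
      exact ⟨subset_univ _, by rw [card_erase_of_mem he.2, h3 e he.1]⟩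
    · intro e₁ h₁ e₂ h₂ heq
      simp only [coe_filter, Set.mem_setOf_eq] at h₁ h₂
      simp only [] at heq
      rw [← insert_erase h₁.2, ← insert_erase h₂.2, heq]
  simpa [hdeg] using hmain

set_option maxRecDepth 40000 in
lemma fano_no_exact_transversal :
    ∀ T : Finset (Fin 7), ¬ ∀ ℓ ∈ fanoEdges, (ℓ ∩ T).card = 1 := by decide

/-! ### The extremal construction -/

/-- All triples meeting a fixed set `S` in exactly one vertex. -/
def Gc {n : ℕ} (S : Finset (Fin n)) : Finset (Finset (Fin n)) :=
  univ.filter fun e => e.card = 3 ∧ (e ∩ S).card = 1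

lemma Gc_unif {n : ℕ} (S : Finset (Fin n)) : IsUniform 3 (Gc S) :=
  fun _ he => ((mem_filter.1 he).2).1

lemma Gc_fano_free {n : ℕ} (S : Finset (Fin n)) : ¬ ContainsFano (Gc S) := by
  rintro ⟨f, hf⟩
  set T : Finset (Fin 7) := univ.filter fun i => f i ∈ S with hT
  refine fano_no_exact_transversal T (fun ℓ hℓ => ?_)
  have h1 : (ℓ.map f ∩ S).card = 1 := ((mem_filter.1 (hf ℓ hℓ)).2).2
  have h2 : (ℓ ∩ T).map f = ℓ.map f ∩ S := by
    ext x
    simp only [mem_map, mem_inter, hT, mem_filter, mem_univ, true_and]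
    constructor
    · rintro ⟨i, ⟨hiℓ, hiS⟩, rfl⟩
      exact ⟨⟨i, hiℓ, rfl⟩, hiS⟩
    · rintro ⟨⟨i, hiℓ, rfl⟩, hxS⟩
      exact ⟨i, ⟨hiℓ, hxS⟩, rfl⟩
  rw [← h2, card_map] at h1
  exact h1

lemma Gc_matching {s n : ℕ} (S : Finset (Fin n)) (hS : S.card = s) :
    MatchingLE (Gc S) s := by
  intro M hM hpair
  classical
  have hne : ∀ e ∈ M, (e ∩ S).Nonempty := by
    intro e he
    have := ((mem_filter.1 (hM he)).2).2
    exact card_pos.1 (by omega)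
  rw [← hS]
  rcases M.eq_empty_or_nonempty with rfl | ⟨e0, he0⟩
  · simp
  have hv0 := hne e0 he0
  apply Finset.card_le_card_of_injOn
    (fun e => if h : (e ∩ S).Nonempty then (e ∩ S).min' h else (e0 ∩ S).min' hv0)
  · intro e he
    simp only [dif_pos (hne e he)]
    exact mem_of_mem_inter_right (min'_mem _ (hne e he))
  · intro e₁ h₁ e₂ h₂ heq
    simp only [mem_coe] at h₁ h₂
    simp only [dif_pos (hne e₁ h₁), dif_pos (hne e₂ h₂)] at heq
    by_contra hne'
    have hd := hpair h₁ h₂ hne'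
    have hv1 : (e₁ ∩ S).min' (hne e₁ h₁) ∈ e₁ := mem_of_mem_inter_left (min'_mem _ _)
    have hv2 : (e₁ ∩ S).min' (hne e₁ h₁) ∈ e₂ := by
      rw [heq]; exact mem_of_mem_inter_left (min'_mem _ _)
    exact (Finset.disjoint_left.1 hd hv1) hv2

lemma Gc_card {s n : ℕ} (S : Finset (Fin n)) (hS : S.card = s) :
    s * ((n - s).choose 2) ≤ (Gc S).card := by
  classical
  have hsrc : (S ×ˢ (Sᶜ.powersetCard 2)).card = s * ((n - s).choose 2) := by
    rw [card_product, card_powersetCard, card_compl, hS, Fintype.card_fin]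
  rw [← hsrc]
  apply Finset.card_le_card_of_injOn (fun q => insert q.1 q.2)
  · rintro ⟨v, p⟩ hq
    rw [mem_coe, mem_product] at hq
    obtain ⟨hvS, hp⟩ := hq
    rw [mem_powersetCard] at hp
    obtain ⟨hpsub, hpcard⟩ := hp
    have hvp : v ∉ p := fun hvp => (mem_compl.1 (hpsub hvp)) hvS
    rw [mem_coe, Gc, mem_filter]
    refine ⟨mem_univ _, ?_, ?_⟩
    · rw [card_insert_of_notMem hvp, hpcard]
    · have : (insert v p) ∩ S = {v} := by
        ext a
        simp only [mem_inter, mem_insert, mem_singleton]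
        constructor
        · rintro ⟨(rfl | hap), haS⟩
          · rfl
          · exact absurd haS (mem_compl.1 (hpsub hap))
        · rintro rfl; exact ⟨Or.inl rfl, hvS⟩
      rw [this, card_singleton]
  · rintro ⟨v, p⟩ h₁ ⟨v', p'⟩ h₂ heq
    simp only [coe_product, Set.mem_prod, mem_coe] at h₁ h₂
    rw [mem_powersetCard] at h₁ h₂
    simp only [] at heq
    have hvp : v ∉ p := fun hvp => (mem_compl.1 (h₁.2.1 hvp)) h₁.1
    have hvp' : v' ∉ p' := fun hvp => (mem_compl.1 (h₂.2.1 hvp)) h₂.1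
    have hvv : v = v' := by
      have hv' : v' ∈ insert v p := by rw [heq]; exact mem_insert_self _ _
      rcases mem_insert.1 hv' with h | h
      · exact h.symm
      · exact absurd h₂.1 (mem_compl.1 (h₁.2.1 h))
    subst hvv
    have : p = p' := by
      rw [← erase_insert hvp, heq, erase_insert hvp']
    rw [this]

/-! ### The greedy matching argument -/

lemma greedy_s14 {n s : ℕ} (G : Finset (Finset (Fin n))) (h3 : ∀ e ∈ G, e.card = 3)
    (hν : ∀ M ⊆ G, ((M : Set (Finset (Fin n))).Pairwise fun a b => Disjoint a b) → M.card ≤ s)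
    (T : Finset (Fin n)) (hTcard : T.card = s + 1)
    (hbig : ∀ x ∈ T, 3 * (s + 1) * n + 1 ≤ hdeg G x) : False := by
  classical
  have claim : ∀ k, k ≤ s + 1 → ∃ M : Finset (Finset (Fin n)), M ⊆ G ∧ M.card = k ∧
      ((M : Set (Finset (Fin n))).Pairwise fun a b => Disjoint a b) ∧
      ((M.biUnion id) ∩ T).card = k := by
    intro k
    induction k with
    | zero => exact fun _ => ⟨∅, by simp, by simp, by simp, by simp⟩
    | succ k ih =>
      intro hk1
      obtain ⟨M, hMG, hMcard, hMpair, hMT⟩ := ih (by omega)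
      set U := M.biUnion id with hUdef
      have hUcard : U.card ≤ 3 * k := by
        calc U.card ≤ ∑ e ∈ M, e.card := card_biUnion_le
          _ = ∑ _e ∈ M, 3 := Finset.sum_congr rfl (fun e he => h3 e (hMG he))
          _ = 3 * k := by rw [Finset.sum_const, smul_eq_mul, hMcard, Nat.mul_comm]
      have hTU : (T \ U).Nonempty := by
        rw [← card_pos]
        have h1 := Finset.card_sdiff_add_card_inter T U
        have h2 : (T ∩ U).card = k := by rw [Finset.inter_comm]; exact hMT
        omega
      obtain ⟨x, hx⟩ := hTU
      rw [mem_sdiff] at hx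
      obtain ⟨hxT, hxU⟩ := hx
      set B := U ∪ T.erase x with hBdef
      have hxB : x ∉ B := by
        rw [hBdef, mem_union]
        rintro (h | h)
        · exact hxU h
        · exact (mem_erase.1 h).1 rfl
      have hBcard : B.card ≤ 3 * s + 1 := by
        have h1 : B ⊆ U ∪ T := union_subset_union_right (erase_subset _ _)
        have h2 := Finset.card_le_card h1
        have h3' := Finset.card_union_add_card_inter U T
        omega
      have hdegx := hbig x hxT
      have hF2 : (G.filter fun e => x ∈ e ∧ ¬ Disjoint e B).card ≤ (3 * s + 1) * n := by
        calc (G.filter fun e => x ∈ e ∧ ¬ Disjoint e B).card ≤ B.card * n :=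
              star_meet_count G h3 x B hxB
          _ ≤ (3 * s + 1) * n := Nat.mul_le_mul_right n hBcard
      have hlt : (3 * s + 1) * n < 3 * (s + 1) * n + 1 := by
        have : (3 * s + 1) * n ≤ (3 * (s + 1)) * n :=
          Nat.mul_le_mul_right n (by omega)
        omega
      have hnotsub : ¬ (G.filter fun e => x ∈ e) ⊆
          (G.filter fun e => x ∈ e ∧ ¬ Disjoint e B) := by
        intro hsub
        have := Finset.card_le_card hsub
        rw [hdeg] at hdegx
        omega
      obtain ⟨e, he1, he2⟩ := Finset.not_subset.1 hnotsub
      rw [mem_filter] at he1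
      obtain ⟨heG, hxe⟩ := he1
      have hdisj : Disjoint e B := by
        by_contra hc
        exact he2 (mem_filter.2 ⟨heG, hxe, hc⟩)
      have heM : e ∉ M := by
        intro heM
        exact hxU (mem_biUnion.2 ⟨e, heM, hxe⟩)
      refine ⟨insert e M, insert_subset heG hMG, ?_, ?_, ?_⟩
      · rw [card_insert_of_notMem heM, hMcard]
      · rw [coe_insert]
        rw [Set.pairwise_insert_of_symmetric]
        refine ⟨hMpair, fun b hb _ => ?_⟩
        refine hdisj.mono_right ?_
        refine Finset.Subset.trans ?_ Finset.subset_union_left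
        exact fun a ha => mem_biUnion.2 ⟨b, hb, ha⟩
      · rw [Finset.biUnion_insert]
        have hseteq : (id e ∪ U) ∩ T = insert x (U ∩ T) := by
          ext a
          simp only [mem_inter, mem_union, mem_insert, id]
          constructor
          · rintro ⟨(hae | haU), haT⟩
            · by_cases hax : a = x
              · exact Or.inl hax
              · exact absurd (Finset.disjoint_left.1 hdisj hae)
                  (by simp [hBdef, mem_union, mem_erase, hax, haT])
            · exact Or.inr ⟨haU, haT⟩
          · rintro (rfl | ⟨haU, haT⟩)
            · exact ⟨Or.inl hxe, hxT⟩
            · exact ⟨Or.inr haU, haT⟩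
        rw [hseteq, card_insert_of_notMem (fun hc => hxU (mem_inter.1 hc).1), hMT]
  obtain ⟨M, hMG, hMcard, hMpair, -⟩ := claim (s + 1) le_rfl
  have := hν M hMG hMpair
  omega

theorem statement14 (s n : ℕ) (hs : 1 ≤ s) (hn : 20 * s * (s + 1) ≤ n)
    (G : Finset (Finset (Fin n))) (hunif : IsUniform 3 G) (hfree : ¬ ContainsFano G)
    (hν : MatchingLE G s)
    (hmax : ∀ G' : Finset (Finset (Fin n)),
      IsUniform 3 G' → ¬ ContainsFano G' → MatchingLE G' s → G'.card ≤ G.card) :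
    (Finset.univ.filter fun v => 3 * (s + 1) * n + 1 ≤ hdeg G v).card = s := by
  classical
  set X := Finset.univ.filter fun v : Fin n => 3 * (s + 1) * n + 1 ≤ hdeg G v with hXdef
  -- Part A : |X| ≤ s
  have hA : X.card ≤ s := by
    by_contra hc
    push_neg at hc
    obtain ⟨T, hTX, hTcard⟩ := Finset.exists_subset_card_eq hc
    exact greedy_s14 G hunif hν T hTcard (fun x hx => (mem_filter.1 (hTX hx)).2)
  by_contra hXs
  have hXlt : X.card + 1 ≤ s := by omega
  -- basic size facts
  have hsn : s + 2 ≤ n := by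
    have h1 : 20 * s ≤ 20 * s * (s + 1) := Nat.le_mul_of_pos_right _ (by omega)
    omega
  -- Lower bound from the extremal construction
  obtain ⟨S, -, hS⟩ := Finset.exists_subset_card_eq
    (show s ≤ (univ : Finset (Fin n)).card by
      rw [card_univ, Fintype.card_fin]; omega)
  have hlow : s * ((n - s).choose 2) ≤ G.card :=
    le_trans (Gc_card S hS)
      (hmax _ (Gc_unif S) (Gc_fano_free S) (Gc_matching S hS))
  -- Upper bound
  set G₂ := G.filter fun e => Disjoint e X with hG2def
  set G₁ := G.filter fun e => ¬ Disjoint e X with hG1def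
  have hsplit : G₂.card + G₁.card = G.card :=
    Finset.card_filter_add_card_filter_not (p := fun e => Disjoint e X)
  have hG1 : G₁.card ≤ X.card * n.choose 2 := by
    have hsub : G₁ ⊆ X.biUnion (fun x => G.filter fun e => x ∈ e) := by
      intro e he
      rw [hG1def, mem_filter] at he
      obtain ⟨heG, hnd⟩ := he
      obtain ⟨a, hae, haX⟩ := Finset.not_disjoint_iff.1 hnd
      exact mem_biUnion.2 ⟨a, haX, mem_filter.2 ⟨heG, hae⟩⟩
    calc G₁.card ≤ (X.biUnion (fun x => G.filter fun e => x ∈ e)).card :=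
          card_le_card hsub
      _ ≤ ∑ x ∈ X, (G.filter fun e => x ∈ e).card := card_biUnion_le
      _ ≤ ∑ _x ∈ X, n.choose 2 :=
          Finset.sum_le_sum fun x _ => deg_le_choose G hunif x
      _ = X.card * n.choose 2 := by rw [Finset.sum_const, smul_eq_mul]
  have hG2 : G₂.card ≤ 3 * s * (3 * (s + 1) * n) := by
    -- take a maximum matching inside G₂
    set P : Finset (Finset (Fin n)) → Prop :=
      fun M => (↑M : Set (Finset (Fin n))).Pairwise fun a b => Disjoint a b with hPdef
    have hCne : (G₂.powerset.filter P).Nonempty :=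
      ⟨∅, mem_filter.2 ⟨mem_powerset.2 (empty_subset _), by simp [hPdef]⟩⟩
    obtain ⟨M, hMC, hMmax⟩ := Finset.exists_max_image _ Finset.card hCne
    rw [mem_filter, hPdef] at hMC
    obtain ⟨hMP, hMpair⟩ := hMC
    have hM2 : M ⊆ G₂ := mem_powerset.1 hMP
    have hMG : M ⊆ G := hM2.trans (filter_subset _ _)
    set U := M.biUnion id with hUdef
    have hMs : M.card ≤ s := hν M hMG hMpair
    have hUcard : U.card ≤ 3 * s := by
      calc U.card ≤ ∑ e ∈ M, e.card := card_biUnion_le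
        _ = ∑ _e ∈ M, 3 := Finset.sum_congr rfl (fun e he => hunif e (hMG he))
        _ = 3 * M.card := by rw [Finset.sum_const, smul_eq_mul, Nat.mul_comm]
        _ ≤ 3 * s := by omega
    have hUdeg : ∀ u ∈ U, hdeg G u ≤ 3 * (s + 1) * n := by
      intro u hu
      obtain ⟨e, heM, hue⟩ := mem_biUnion.1 hu
      have heX : Disjoint e X := (mem_filter.1 (hM2 heM)).2
      have huX : u ∉ X := Finset.disjoint_left.1 heX hue
      rw [hXdef, mem_filter] at huX
      push_neg at huX
      have := huX (mem_univ u)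
      omega
    have hcover : G₂ ⊆ U.biUnion (fun u => G.filter fun e => u ∈ e) := by
      intro e he
      have hnd : ¬ Disjoint e U := by
        intro hd
        have heM : e ∉ M := by
          intro heM
          have hcard3 : e.card = 3 := hunif e (mem_filter.1 he).1
          have hene : e.Nonempty := card_pos.1 (by omega)
          obtain ⟨a, hae⟩ := hene
          exact (Finset.disjoint_left.1 hd hae) (mem_biUnion.2 ⟨e, heM, hae⟩)
        have hins : insert e M ∈ G₂.powerset.filter P := by
          rw [mem_filter, mem_powerset, hPdef]
          refine ⟨insert_subset he hM2, ?_⟩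
          show ((insert e M : Finset (Finset (Fin n))) : Set (Finset (Fin n))).Pairwise
            fun a b => Disjoint a b
          rw [coe_insert, Set.pairwise_insert_of_symmetric]
          refine ⟨hMpair, fun b hb _ => ?_⟩
          refine hd.mono_right ?_
          exact fun a ha => mem_biUnion.2 ⟨b, hb, ha⟩
        have := hMmax _ hins
        rw [card_insert_of_notMem heM] at this
        omega
      obtain ⟨a, hae, haU⟩ := Finset.not_disjoint_iff.1 hnd
      exact mem_biUnion.2 ⟨a, haU, mem_filter.2 ⟨(mem_filter.1 he).1, hae⟩⟩
    calc G₂.card ≤ (U.biUnion (fun u => G.filter fun e => u ∈ e)).card :=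
          card_le_card hcover
      _ ≤ ∑ u ∈ U, (G.filter fun e => u ∈ e).card := card_biUnion_le
      _ ≤ ∑ u ∈ U, 3 * (s + 1) * n := Finset.sum_le_sum fun u hu => hUdeg u hu
      _ = U.card * (3 * (s + 1) * n) := by rw [Finset.sum_const, smul_eq_mul]
      _ ≤ 3 * s * (3 * (s + 1) * n) := Nat.mul_le_mul_right _ hUcard
  -- combine
  have hhigh : G.card ≤ (s - 1) * n.choose 2 + 9 * s * (s + 1) * n := by
    have h1 : X.card * n.choose 2 ≤ (s - 1) * n.choose 2 :=
      Nat.mul_le_mul_right _ (by omega)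
    have h2 : 3 * s * (3 * (s + 1) * n) = 9 * s * (s + 1) * n := by ring
    omega
  exact final_contra s n G.card hs hn hsn hlow hhigh
end

section
/- Let s ≥ 1 and n ≥ 20s(s+1). Let G be an n-vertex Fano-plane-free 3-uniform hypergraph with matching number at most s that has the maximum number of edges among all such hypergraphs, let X be the set of vertices of degree at least 3(s+1)n + 1, and let Y = V(G) ∖ X. Then Y is weakly independent, i.e., no edge of G is entirely contained in Y. -/
open Finset

variable {V : Type*}

/-! ### Auxiliary material -/

section Aux

/-- The set of the first `s` vertices of `Fin n`. -/
def Sset (n s : ℕ) : Finset (Fin n) := univ.filter (fun v => (v:ℕ) < s)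

/-- The comparison construction: all triples meeting `Sset n s` in exactly one vertex. -/
def Gcon (n s : ℕ) : Finset (Finset (Fin n)) :=
  univ.filter (fun e => e.card = 3 ∧ (e ∩ Sset n s).card = 1)

lemma Sset_card (n s : ℕ) (hsn : s ≤ n) : (Sset n s).card = s := by
  have h : Sset n s = (univ : Finset (Fin s)).image (Fin.castLE hsn) := by
    ext v
    simp only [Sset, mem_filter, mem_univ, true_and, mem_image]
    constructor
    · intro hv; exact ⟨⟨v.val, hv⟩, by simp [Fin.castLE, Fin.ext_iff]⟩
    · rintro ⟨i, -, rfl⟩; exact i.isLt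
  rw [h, Finset.card_image_of_injective _ (Fin.castLE_injective hsn), card_univ, Fintype.card_fin]

lemma Gcon_uniform (n s : ℕ) : IsUniform 3 (Gcon n s) := by
  intro e he
  exact ((mem_filter.1 he).2).1

lemma Gcon_matching (n s : ℕ) (hsn : s ≤ n) : MatchingLE (Gcon n s) s := by
  intro M hM hpair
  classical
  have key : ∀ e ∈ M, ∃ v, e ∩ Sset n s = {v} := by
    intro e he
    exact Finset.card_eq_one.1 ((mem_filter.1 (hM he)).2).2
  calc M.card ≤ ((Sset n s).image (fun v => WithTop.some v)).card := by
        apply Finset.card_le_card_of_injOn (fun e => (e ∩ Sset n s).min)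
        · intro e he
          obtain ⟨v, hv⟩ := key e (Finset.mem_coe.1 he)
          beta_reduce
          rw [hv]
          simp only [Finset.mem_coe, Finset.min_singleton, mem_image]
          have : v ∈ Sset n s := by
            have : v ∈ e ∩ Sset n s := by rw [hv]; exact mem_singleton_self v
            exact (mem_inter.1 this).2
          exact ⟨v, this, rfl⟩
        · intro e₁ h₁ e₂ h₂ heq
          obtain ⟨v₁, hv₁⟩ := key e₁ (Finset.mem_coe.1 h₁)
          obtain ⟨v₂, hv₂⟩ := key e₂ (Finset.mem_coe.1 h₂)
          simp only at heq
          rw [hv₁, hv₂] at heq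
          simp only [Finset.min_singleton] at heq
          have heq2 : v₁ = v₂ := by exact_mod_cast heq
          subst heq2
          by_contra hne
          have hd := hpair (Finset.mem_coe.1 h₁) (Finset.mem_coe.1 h₂) hne
          have m1 : v₁ ∈ e₁ := (mem_inter.1 (hv₁ ▸ mem_singleton_self v₁)).1
          have m2 : v₁ ∈ e₂ := (mem_inter.1 (hv₂ ▸ mem_singleton_self v₁)).1
          exact (Finset.disjoint_left.1 hd m1) m2
    _ ≤ (Sset n s).card := Finset.card_image_le
    _ = s := Sset_card n s hsn

set_option maxRecDepth 10000 in
lemma fano_count : ∀ c : Fin 7 → Bool, ¬ (∀ e ∈ fanoEdges, (e.filter fun i => c i).card = 1) := by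
  decide

lemma Gcon_fano_free (n s : ℕ) : ¬ ContainsFano (Gcon n s) := by
  rintro ⟨φ, hφ⟩
  classical
  apply fano_count (fun i => decide (φ i ∈ Sset n s))
  intro e he
  have h1 : (e.map φ ∩ Sset n s) = (e.filter fun i => φ i ∈ Sset n s).map φ := by
    ext v
    simp only [mem_inter, mem_map, mem_filter]
    constructor
    · rintro ⟨⟨i, hi, rfl⟩, hv⟩; exact ⟨i, ⟨hi, hv⟩, rfl⟩
    · rintro ⟨i, ⟨hi, hv⟩, rfl⟩; exact ⟨⟨i, hi, rfl⟩, hv⟩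
  have h2 : (e.map φ ∩ Sset n s).card = 1 := ((mem_filter.1 (hφ e he)).2).2
  rw [h1, Finset.card_map] at h2
  rw [← h2]
  congr 1
  apply Finset.filter_congr
  intro i _
  simp

lemma Gcon_card_ge (n s : ℕ) (hsn : s ≤ n) : s * (n - s).choose 2 ≤ (Gcon n s).card := by
  classical
  set S := Sset n s with hS
  set T := ((S ×ˢ ((univ \ S).powersetCard 2)).image (fun p => insert p.1 p.2)) with hT
  have hsub : T ⊆ Gcon n s := by
    intro e he
    simp only [hT, mem_image, mem_product, mem_powersetCard] at he
    obtain ⟨⟨v, p⟩, ⟨hv, hp2, hpc⟩, rfl⟩ := he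
    have hvp : v ∉ p := by
      intro hmem
      have := hp2 hmem
      simp only [mem_sdiff] at this
      exact this.2 hv
    have hpS : p ∩ S = ∅ := by
      apply Finset.eq_empty_of_forall_notMem
      intro w hw
      rcases mem_inter.1 hw with ⟨hw1, hw2⟩
      exact (mem_sdiff.1 (hp2 hw1)).2 hw2
    simp only [Gcon, mem_filter, mem_univ, true_and]
    constructor
    · rw [Finset.card_insert_of_notMem hvp, hpc]
    · have : insert v p ∩ S = {v} := by
        rw [Finset.insert_inter_of_mem hv, hpS]
        rfl
      rw [this, Finset.card_singleton]
  have hinj : Set.InjOn (fun p : Fin n × Finset (Fin n) => insert p.1 p.2)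
      ((S ×ˢ ((univ \ S).powersetCard 2) : Finset _) : Set _) := by
    rintro ⟨v₁, p₁⟩ h₁ ⟨v₂, p₂⟩ h₂ heq
    rw [Finset.mem_coe, Finset.mem_product] at h₁ h₂
    simp only [mem_powersetCard] at h₁ h₂
    have hv₁ := h₁.1
    have hp₁ := h₁.2.1
    have hv₂ := h₂.1
    have hp₂ := h₂.2.1
    have hd₁ : ∀ w ∈ p₁, w ∉ S := fun w hw => (mem_sdiff.1 (hp₁ hw)).2
    have hd₂ : ∀ w ∈ p₂, w ∉ S := fun w hw => (mem_sdiff.1 (hp₂ hw)).2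
    simp only at heq
    have hvv : v₁ = v₂ := by
      have h1 : v₁ ∈ insert v₂ p₂ := heq ▸ mem_insert_self v₁ p₁
      rcases mem_insert.1 h1 with h | h
      · exact h
      · exact absurd hv₁ (hd₂ _ h)
    subst hvv
    have hv₁p : v₁ ∉ p₁ := fun h => hd₁ _ h hv₁
    have hv₂p : v₁ ∉ p₂ := fun h => hd₂ _ h hv₁
    have := congrArg (fun t => Finset.erase t v₁) heq
    simpa [Finset.erase_insert hv₁p, Finset.erase_insert hv₂p] using this
  have hcard : T.card = s * (n - s).choose 2 := by
    rw [hT, Finset.card_image_of_injOn hinj, Finset.card_product, Finset.card_powersetCard,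
      Finset.card_sdiff_of_subset (subset_univ S), card_univ, Fintype.card_fin, Sset_card n s hsn]
  calc s * (n - s).choose 2 = T.card := hcard.symm
    _ ≤ (Gcon n s).card := Finset.card_le_card hsub

/-- codegree bound -/
lemma codeg_le {n : ℕ} (G : Finset (Finset (Fin n))) (hunif : IsUniform 3 G) (x t : Fin n)
    (hxt : x ≠ t) : (G.filter fun e => x ∈ e ∧ t ∈ e).card ≤ n - 2 := by
  classical
  have hxt2 : ({x, t} : Finset (Fin n)).card = 2 := by
    rw [Finset.card_insert_of_notMem (by simpa using hxt), Finset.card_singleton]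
  have h := Finset.card_le_card_of_injOn (fun e => e \ ({x, t} : Finset (Fin n)))
    (t := ((univ \ ({x, t} : Finset (Fin n))).powersetCard 1))
    (s := G.filter fun e => x ∈ e ∧ t ∈ e) ?_ ?_
  · refine h.trans ?_
    rw [Finset.card_powersetCard, Finset.card_sdiff_of_subset (subset_univ _), card_univ,
      Fintype.card_fin, hxt2, Nat.choose_one_right]
  · intro e he
    beta_reduce
    rw [mem_coe, mem_filter] at he
    obtain ⟨heG, hex, het⟩ := he
    rw [mem_coe, mem_powersetCard]
    constructor
    · exact Finset.sdiff_subset_sdiff (subset_univ e) le_rfl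
    · have hsub : ({x, t} : Finset (Fin n)) ⊆ e := by
        intro v hv
        rcases Finset.mem_insert.1 hv with rfl | hv
        · exact hex
        · rw [Finset.mem_singleton.1 hv]; exact het
      rw [Finset.card_sdiff_of_subset hsub, hunif e heG, hxt2]
  · intro e₁ h₁ e₂ h₂ heq
    simp only [mem_coe, mem_filter] at h₁ h₂
    have hsub₁ : ({x, t} : Finset (Fin n)) ⊆ e₁ := by
      intro v hv
      rcases Finset.mem_insert.1 hv with rfl | hv
      · exact h₁.2.1
      · rw [Finset.mem_singleton.1 hv]; exact h₁.2.2
    have hsub₂ : ({x, t} : Finset (Fin n)) ⊆ e₂ := by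
      intro v hv
      rcases Finset.mem_insert.1 hv with rfl | hv
      · exact h₂.2.1
      · rw [Finset.mem_singleton.1 hv]; exact h₂.2.2
    simp only at heq
    calc e₁ = e₁ \ {x, t} ∪ {x, t} := (Finset.sdiff_union_of_subset hsub₁).symm
      _ = e₂ \ {x, t} ∪ {x, t} := by rw [heq]
      _ = e₂ := Finset.sdiff_union_of_subset hsub₂

/-- star bound: edges at `x` meeting `T` -/
lemma star_bound {n : ℕ} (G : Finset (Finset (Fin n))) (hunif : IsUniform 3 G) (x : Fin n)
    (T : Finset (Fin n)) (hx : x ∉ T) :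
    (G.filter fun e => x ∈ e ∧ ¬ Disjoint e T).card ≤ T.card * (n - 2) := by
  classical
  have hsub : (G.filter fun e => x ∈ e ∧ ¬ Disjoint e T)
      ⊆ T.biUnion (fun t => G.filter fun e => x ∈ e ∧ t ∈ e) := by
    intro e he
    rw [mem_filter] at he
    obtain ⟨heG, hex, hnd⟩ := he
    obtain ⟨v, hv1, hv2⟩ := Finset.not_disjoint_iff.1 hnd
    exact Finset.mem_biUnion.2 ⟨v, hv2, mem_filter.2 ⟨heG, hex, hv1⟩⟩
  calc (G.filter fun e => x ∈ e ∧ ¬ Disjoint e T).card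
      ≤ (T.biUnion (fun t => G.filter fun e => x ∈ e ∧ t ∈ e)).card := Finset.card_le_card hsub
    _ ≤ ∑ t ∈ T, (G.filter fun e => x ∈ e ∧ t ∈ e).card := Finset.card_biUnion_le
    _ ≤ T.card * (n - 2) := by
        apply Finset.sum_le_card_nsmul
        intro t ht
        exact codeg_le G hunif x t (fun h => hx (h ▸ ht))

/-- absorbing lemma -/
lemma absorb {n : ℕ} (G : Finset (Finset (Fin n))) (hunif : IsUniform 3 G) {s : ℕ} (x : Fin n)
    (hdegx : 3 * (s+1) * n + 1 ≤ hdeg G x) (T : Finset (Fin n)) (hT : T.card ≤ 3*s+3)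
    (hx : x ∉ T) : ∃ e ∈ G, x ∈ e ∧ Disjoint e T := by
  classical
  by_contra hcon
  push_neg at hcon
  have hsub : (G.filter fun e => x ∈ e) ⊆ (G.filter fun e => x ∈ e ∧ ¬ Disjoint e T) := by
    intro e he
    rw [mem_filter] at he ⊢
    exact ⟨he.1, he.2, hcon e he.1 he.2⟩
  have h1 : hdeg G x ≤ T.card * (n - 2) :=
    (Finset.card_le_card hsub).trans (star_bound G hunif x T hx)
  have h2 : T.card * (n - 2) ≤ (3*s+3) * n := by
    calc T.card * (n-2) ≤ (3*s+3) * (n-2) := Nat.mul_le_mul_right _ hT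
      _ ≤ (3*s+3) * n := Nat.mul_le_mul_left _ (Nat.sub_le n 2)
  have h3 : (3*s+3) * n = 3 * (s+1) * n := by ring
  omega

/-- degree bound -/
lemma deg_le {n : ℕ} (G : Finset (Finset (Fin n))) (hunif : IsUniform 3 G) (v : Fin n) :
    hdeg G v ≤ (n-1).choose 2 := by
  classical
  have h := Finset.card_le_card_of_injOn (fun e => e.erase v)
    (t := ((univ.erase v).powersetCard 2)) (s := G.filter fun e => v ∈ e) ?_ ?_
  · refine h.trans ?_
    rw [Finset.card_powersetCard, Finset.card_erase_of_mem (mem_univ v), card_univ,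
      Fintype.card_fin]
  · intro e he
    beta_reduce
    rw [mem_coe, mem_filter] at he
    rw [mem_coe, mem_powersetCard]
    constructor
    · exact Finset.erase_subset_erase v (subset_univ e)
    · rw [Finset.card_erase_of_mem he.2, hunif e he.1]
  · intro e₁ h₁ e₂ h₂ heq
    simp only [mem_coe, mem_filter] at h₁ h₂
    simp only at heq
    calc e₁ = insert v (e₁.erase v) := (Finset.insert_erase h₁.2).symm
      _ = insert v (e₂.erase v) := by rw [heq]
      _ = e₂ := Finset.insert_erase h₂.2

/-- cover sum bound -/
lemma cover_sum {n : ℕ} (G : Finset (Finset (Fin n))) (W : Finset (Fin n))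
    (hcov : ∀ e ∈ G, ∃ v ∈ W, v ∈ e) : G.card ≤ ∑ v ∈ W, hdeg G v := by
  classical
  have hsub : G ⊆ W.biUnion (fun v => G.filter fun e => v ∈ e) := by
    intro e he
    obtain ⟨v, hvW, hve⟩ := hcov e he
    exact Finset.mem_biUnion.2 ⟨v, hvW, mem_filter.2 ⟨he, hve⟩⟩
  calc G.card ≤ (W.biUnion (fun v => G.filter fun e => v ∈ e)).card := Finset.card_le_card hsub
    _ ≤ ∑ v ∈ W, (G.filter fun e => v ∈ e).card := Finset.card_biUnion_le

/-- existence of a maximum matching -/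
lemma exists_max_matching {n : ℕ} (G : Finset (Finset (Fin n))) (hunif : IsUniform 3 G) :
    ∃ M ⊆ G, (∀ a ∈ M, ∀ b ∈ M, a ≠ b → Disjoint a b) ∧
      (∀ g ∈ G, ¬ Disjoint g (M.biUnion id)) := by
  classical
  set P : Finset (Finset (Fin n)) → Prop :=
    fun M => ∀ a ∈ M, ∀ b ∈ M, a ≠ b → Disjoint a b with hP
  obtain ⟨M, hMmem, hMmax⟩ := Finset.exists_max_image
    (G.powerset.filter P) Finset.card ⟨∅, by simp [hP]⟩
  rw [mem_filter, Finset.mem_powerset] at hMmem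
  obtain ⟨hMG, hMpair⟩ := hMmem
  refine ⟨M, hMG, hMpair, ?_⟩
  intro g hg hdisj
  have hgM : g ∉ M := by
    intro hgM
    have : g ⊆ M.biUnion id := fun v hv => Finset.mem_biUnion.2 ⟨g, hgM, hv⟩
    have hgempty : g = ∅ := Finset.eq_empty_of_forall_notMem
      (fun v hv => Finset.disjoint_left.1 hdisj hv (this hv))
    have := hunif g hg
    rw [hgempty] at this
    simp at this
  have hMem : insert g M ∈ G.powerset.filter P := by
    rw [mem_filter, Finset.mem_powerset]
    refine ⟨Finset.insert_subset hg hMG, ?_⟩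
    have hsubM : ∀ c ∈ M, c ⊆ M.biUnion id := by
      intro c hc v hv
      exact Finset.mem_biUnion.2 ⟨c, hc, hv⟩
    intro a ha b hb hab
    rcases Finset.mem_insert.1 ha with ha' | ha'
    · rcases Finset.mem_insert.1 hb with hb' | hb'
      · exact absurd (ha'.trans hb'.symm) hab
      · subst ha'
        exact hdisj.mono_right (Finset.le_iff_subset.2 (hsubM b hb'))
    · rcases Finset.mem_insert.1 hb with hb' | hb'
      · subst hb'
        exact (hdisj.mono_right (Finset.le_iff_subset.2 (hsubM a ha'))).symm
      · exact hMpair a ha' b hb' hab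
  have := hMmax _ hMem
  rw [Finset.card_insert_of_notMem hgM] at this
  omega

lemma two_mul_choose_two_s15 (k : ℕ) : 2 * k.choose 2 = k * (k-1) := by
  induction k with
  | zero => rfl
  | succ m ih =>
    rw [Nat.choose_succ_succ, Nat.mul_add, ih, Nat.choose_one_right]
    cases m with
    | zero => rfl
    | succ l => simp [Nat.succ_sub_one]; ring

lemma arith_key_s15 (s n : ℕ) (hs : 1 ≤ s) (hn : 20*s*(s+1) ≤ n) :
    (s-1) * ((n-1).choose 2) + 3*s*(3*(s+1)*n) < s * ((n-s).choose 2) := by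
  have h40 : 40 ≤ n := le_trans (by nlinarith) hn
  have hsn : s + 1 ≤ n := le_trans (by nlinarith) hn
  have h4 : 1 ≤ n - s := by omega
  have key : (s-1)*((n-1)*(n-2)) + 18*(s*((s+1)*n)) < s*((n-s)*(n-s-1)) := by
    have h1 : (1:ℕ) ≤ n := by omega
    have h2 : (2:ℕ) ≤ n := by omega
    have h3 : s ≤ n := by omega
    zify [hs, h1, h2, h3, h4]
    have hn' : (20*s*(s+1) : ℤ) ≤ n := by exact_mod_cast hn
    have hs' : (1:ℤ) ≤ s := by exact_mod_cast hs
    have hn0 : (0:ℤ) ≤ n := by positivity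
    nlinarith [mul_le_mul_of_nonneg_right hn' hn0, mul_nonneg (sub_nonneg.2 hs') hn0,
      mul_nonneg (mul_nonneg (sub_nonneg.2 hs') (by linarith : (0:ℤ) ≤ s)) (by linarith : (0:ℤ) ≤ s + 2)]
  have hA : 2 * ((n-1).choose 2) = (n-1)*(n-2) := by
    rw [two_mul_choose_two_s15, Nat.sub_sub]
  have hB : 2 * ((n-s).choose 2) = (n-s)*(n-s-1) := by
    rw [two_mul_choose_two_s15]
  have goal2 : 2*((s-1) * ((n-1).choose 2) + 3*s*(3*(s+1)*n)) < 2*(s * ((n-s).choose 2)) := by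
    have e1 : 2*((s-1) * ((n-1).choose 2) + 3*s*(3*(s+1)*n))
        = (s-1)*(2*((n-1).choose 2)) + 18*(s*((s+1)*n)) := by ring
    have e2 : 2*(s * ((n-s).choose 2)) = s*(2*((n-s).choose 2)) := by ring
    rw [e1, e2, hA, hB]
    exact key
  omega

end Aux

theorem statement15 (s n : ℕ) (hs : 1 ≤ s) (hn : 20 * s * (s + 1) ≤ n)
    (G : Finset (Finset (Fin n))) (hunif : IsUniform 3 G) (hfree : ¬ ContainsFano G)
    (hν : MatchingLE G s)
    (hmax : ∀ G' : Finset (Finset (Fin n)),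
      IsUniform 3 G' → ¬ ContainsFano G' → MatchingLE G' s → G'.card ≤ G.card) :
    ∀ e ∈ G, ¬ (e ⊆ Finset.univ.filter fun v => hdeg G v < 3 * (s + 1) * n + 1) := by
  classical
  intro e₀ he₀ hsubY
  have hsn : s ≤ n := le_trans (by nlinarith) hn
  -- the set of high-degree vertices
  set X : Finset (Fin n) := univ.filter (fun v => 3 * (s+1) * n + 1 ≤ hdeg G v) with hXdef
  have hXdeg : ∀ x ∈ X, 3 * (s+1) * n + 1 ≤ hdeg G x := fun x hx => (mem_filter.1 hx).2
  have hXe₀ : ∀ x ∈ X, x ∉ e₀ := by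
    intro x hx hxe
    have h1 := hsubY hxe
    rw [mem_filter] at h1
    have h2 := hXdeg x hx
    omega
  -- lower bound on the number of edges via the comparison construction
  have hlow : s * (n - s).choose 2 ≤ G.card :=
    le_trans (Gcon_card_ge n s hsn)
      (hmax _ (Gcon_uniform n s) (Gcon_fano_free n s) (Gcon_matching n s hsn))
  -- a maximum matching and the associated cover
  obtain ⟨M, hMG, hMpair, hMcov⟩ := exists_max_matching G hunif
  have hMcard : M.card ≤ s := hν M hMG
    (fun a ha b hb hab => hMpair a (Finset.mem_coe.1 ha) b (Finset.mem_coe.1 hb) hab)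
  set Vm : Finset (Fin n) := M.biUnion id with hVmdef
  have hVmcard : Vm.card ≤ 3 * s := by
    calc Vm.card ≤ ∑ e ∈ M, (id e).card := Finset.card_biUnion_le
      _ = ∑ e ∈ M, 3 := Finset.sum_congr rfl (fun e he => hunif e (hMG he))
      _ = M.card * 3 := Finset.sum_const 3
      _ ≤ 3 * s := by omega
  -- all high-degree vertices lie in the cover
  have hXV : X ⊆ Vm := by
    intro x hx
    by_contra hxV
    have hsub2 : (G.filter fun e => x ∈ e) ⊆ (G.filter fun e => x ∈ e ∧ ¬ Disjoint e Vm) := by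
      intro e he
      rw [mem_filter] at he ⊢
      exact ⟨he.1, he.2, hMcov e he.1⟩
    have h1 : hdeg G x ≤ Vm.card * (n-2) :=
      (Finset.card_le_card hsub2).trans (star_bound G hunif x Vm hxV)
    have h2 : Vm.card * (n-2) ≤ 3*s*(n-2) := Nat.mul_le_mul_right _ hVmcard
    have h3 : 3*s*(n-2) ≤ 3*s*n := Nat.mul_le_mul_left _ (Nat.sub_le n 2)
    have h4 : 3*s*n ≤ 3*(s+1)*n := Nat.mul_le_mul_right _ (by omega)
    have h5 := hXdeg x hx
    omega
  -- there are at least s high-degree vertices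
  have hXcard : s ≤ X.card := by
    by_contra hcon
    push_neg at hcon
    have hG1 : G.card ≤ ∑ v ∈ Vm, hdeg G v := by
      apply cover_sum G Vm
      intro e he
      obtain ⟨v, hv1, hv2⟩ := Finset.not_disjoint_iff.1 (hMcov e he)
      exact ⟨v, hv2, hv1⟩
    have hsplit : ∑ v ∈ Vm, hdeg G v
        = ∑ v ∈ Vm.filter (· ∈ X), hdeg G v + ∑ v ∈ Vm.filter (¬ · ∈ X), hdeg G v :=
      (Finset.sum_filter_add_sum_filter_not Vm _ _).symm
    have hbound1 : ∑ v ∈ Vm.filter (· ∈ X), hdeg G v ≤ (s-1) * ((n-1).choose 2) := by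
      calc ∑ v ∈ Vm.filter (· ∈ X), hdeg G v
          ≤ (Vm.filter (· ∈ X)).card * ((n-1).choose 2) :=
            Finset.sum_le_card_nsmul _ _ _ (fun v _ => deg_le G hunif v)
        _ ≤ (s-1) * ((n-1).choose 2) := by
            apply Nat.mul_le_mul_right
            have hsub3 : Vm.filter (· ∈ X) ⊆ X := fun v hv => (mem_filter.1 hv).2
            have := Finset.card_le_card hsub3
            omega
    have hbound2 : ∑ v ∈ Vm.filter (¬ · ∈ X), hdeg G v ≤ 3*s*(3*(s+1)*n) := by
      calc ∑ v ∈ Vm.filter (¬ · ∈ X), hdeg G v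
          ≤ (Vm.filter (¬ · ∈ X)).card * (3*(s+1)*n) := by
            apply Finset.sum_le_card_nsmul
            intro v hv
            have hvX : v ∉ X := (mem_filter.1 hv).2
            have : ¬ (3 * (s+1) * n + 1 ≤ hdeg G v) := by
              intro hcontra
              exact hvX (mem_filter.2 ⟨mem_univ v, hcontra⟩)
            omega
        _ ≤ 3*s*(3*(s+1)*n) := by
            apply Nat.mul_le_mul_right
            exact le_trans (Finset.card_le_card (Finset.filter_subset _ _)) hVmcard
    have harith := arith_key_s15 s n hs hn
    omega
  -- select s high-degree vertices
  obtain ⟨X₀, hX₀X, hX₀card⟩ := Finset.exists_subset_card_eq hXcard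
  -- greedily build a matching threading through X₀, avoiding e₀
  have build : ∀ W : Finset (Fin n), W ⊆ X₀ → ∃ N : Finset (Finset (Fin n)),
      N ⊆ G ∧ N.card = W.card ∧ (∀ a ∈ N, ∀ b ∈ N, a ≠ b → Disjoint a b) ∧
      (∀ e ∈ N, Disjoint e (e₀ ∪ (X₀ \ W))) := by
    intro W
    induction W using Finset.induction_on with
    | empty => intro _; exact ⟨∅, by simp, by simp, by simp, by simp⟩
    | @insert x W' hxW' ih =>
      intro hWX₀
      obtain ⟨N', hN'G, hN'card, hN'pair, hN'disj⟩ :=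
        ih ((Finset.subset_insert x W').trans hWX₀)
      set V' : Finset (Fin n) := N'.biUnion id with hV'def
      have hV'sub : ∀ c ∈ N', c ⊆ V' := by
        intro c hc v hv
        exact Finset.mem_biUnion.2 ⟨c, hc, hv⟩
      have hxX₀ : x ∈ X₀ := hWX₀ (Finset.mem_insert_self x W')
      have hxX : x ∈ X := hX₀X hxX₀
      have hxV' : x ∉ V' := by
        intro hxV'
        obtain ⟨e', he'N, hxe'⟩ := Finset.mem_biUnion.1 hxV'
        have hd := hN'disj e' he'N
        have hxmem : x ∈ e₀ ∪ (X₀ \ W') :=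
          Finset.mem_union_right _ (Finset.mem_sdiff.2 ⟨hxX₀, hxW'⟩)
        exact Finset.disjoint_left.1 hd hxe' hxmem
      set T : Finset (Fin n) := (e₀ ∪ (X₀ \ insert x W')) ∪ V' with hTdef
      have hxT : x ∉ T := by
        intro hxT
        rcases Finset.mem_union.1 hxT with h | h
        · rcases Finset.mem_union.1 h with h' | h'
          · exact hXe₀ x hxX h'
          · exact (Finset.mem_sdiff.1 h').2 (Finset.mem_insert_self x W')
        · exact hxV' h
      have hW'card : W'.card + 1 ≤ s := by
        have h1 : insert x W' ⊆ X₀ := hWX₀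
        have := Finset.card_le_card h1
        rw [Finset.card_insert_of_notMem hxW', hX₀card] at this
        omega
      have hTcard : T.card ≤ 3*s+3 := by
        have h1 : T.card ≤ (e₀.card + (X₀ \ insert x W').card) + V'.card :=
          le_trans (Finset.card_union_le _ _)
            (Nat.add_le_add_right (Finset.card_union_le _ _) _)
        have h2 : e₀.card = 3 := hunif e₀ he₀
        have h3 : (X₀ \ insert x W').card = s - (W'.card + 1) := by
          rw [Finset.card_sdiff_of_subset hWX₀, hX₀card, Finset.card_insert_of_notMem hxW']
        have h4 : V'.card ≤ 3 * W'.card := by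
          calc V'.card ≤ ∑ e ∈ N', (id e).card := Finset.card_biUnion_le
            _ = ∑ e ∈ N', 3 := Finset.sum_congr rfl (fun e he => hunif e (hN'G he))
            _ = N'.card * 3 := Finset.sum_const 3
            _ = 3 * W'.card := by rw [hN'card]; ring
        omega
      obtain ⟨ex, hexG, hxex, hexT⟩ := absorb G hunif x (hXdeg x hxX) T hTcard hxT
      have hexN' : ex ∉ N' := by
        intro hmem
        exact Finset.disjoint_left.1 hexT hxex
          (Finset.mem_union_right _ (hV'sub ex hmem hxex))
      refine ⟨insert ex N', ?_, ?_, ?_, ?_⟩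
      · exact Finset.insert_subset hexG hN'G
      · rw [Finset.card_insert_of_notMem hexN', hN'card,
          Finset.card_insert_of_notMem hxW']
      · intro a ha b hb hab
        rcases Finset.mem_insert.1 ha with ha' | ha'
        · rcases Finset.mem_insert.1 hb with hb' | hb'
          · exact absurd (ha'.trans hb'.symm) hab
          · subst ha'
            exact hexT.mono_right (Finset.le_iff_subset.2
              ((hV'sub b hb').trans (Finset.subset_union_right)))
        · rcases Finset.mem_insert.1 hb with hb' | hb'
          · subst hb'
            exact (hexT.mono_right (Finset.le_iff_subset.2
              ((hV'sub a ha').trans (Finset.subset_union_right)))).symm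
          · exact hN'pair a ha' b hb' hab
      · intro e he
        rcases Finset.mem_insert.1 he with he' | he'
        · subst he'
          exact hexT.mono_right (Finset.le_iff_subset.2 Finset.subset_union_left)
        · refine (hN'disj e he').mono_right (Finset.le_iff_subset.2 ?_)
          apply Finset.union_subset_union_right
          exact Finset.sdiff_subset_sdiff Finset.Subset.rfl (Finset.subset_insert x W')
  obtain ⟨N, hNG, hNcard, hNpair, hNdisj⟩ := build X₀ Finset.Subset.rfl
  rw [hX₀card] at hNcard
  have hNdisj' : ∀ e ∈ N, Disjoint e e₀ := by
    intro e he
    refine (hNdisj e he).mono_right (Finset.le_iff_subset.2 ?_)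
    exact Finset.subset_union_left
  have he₀N : e₀ ∉ N := by
    intro h
    have hd := hNdisj' e₀ h
    have h3 := hunif e₀ he₀
    have hd2 : e₀ = ∅ := Finset.eq_empty_of_forall_notMem
      (fun v hv => Finset.disjoint_left.1 hd hv hv)
    rw [hd2] at h3
    simp at h3
  have hfinal := hν (insert e₀ N) (Finset.insert_subset he₀ hNG) ?_
  · rw [Finset.card_insert_of_notMem he₀N, hNcard] at hfinal
    omega
  · intro a ha b hb hab
    rw [Finset.mem_coe, Finset.mem_insert] at ha hb
    rcases ha with ha' | ha'
    · rcases hb with hb' | hb'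
      · exact absurd (ha'.trans hb'.symm) hab
      · subst ha'
        exact (hNdisj' b hb').symm
    · rcases hb with hb' | hb'
      · subst hb'
        exact hNdisj' a ha'
      · exact hNpair a ha' b hb' hab
end

section
/- Let G be a Fano-plane-free 3-uniform hypergraph containing an edge e = {x_1, x_2, x_3}. Define the simple graph G_1 on the vertex set V(G) ∖ {x_1, x_2, x_3} whose edges are all pairs {y_1, y_2} such that {y_1, y_2, x_i} is an edge of G for every i ∈ {1,2,3}. Then G_1 contains no complete graph K_4. -/
open Finset

variable {V : Type*}

section

variable [DecidableEq V]

lemma pairwise_ne_of_card_eq_three {a b c : V} (h : ({a, b, c} : Finset V).card = 3) :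
    a ≠ b ∧ a ≠ c ∧ b ≠ c := by
  refine ⟨?_, ?_, ?_⟩ <;> rintro rfl <;>
    simp only [mem_insert, mem_singleton, true_or, or_true, insert_eq_of_mem] at h <;>
    exact (card_le_two.trans_lt (by norm_num)).ne h

lemma exists_eq_of_card_eq_four {T : Finset V} (h : T.card = 4) :
    ∃ a b c d : V, a ≠ b ∧ a ≠ c ∧ a ≠ d ∧ b ≠ c ∧ b ≠ d ∧ c ≠ d ∧ T = {a, b, c, d} := by
  obtain ⟨a, t, ha, rfl, ht⟩ := card_eq_succ.mp h
  obtain ⟨b, c, d, hbc, hbd, hcd, rfl⟩ := card_eq_three.mp ht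
  simp only [mem_insert, mem_singleton, not_or] at ha
  exact ⟨a, b, c, d, ha.1, ha.2.1, ha.2.2, hbc, hbd, hcd, rfl⟩

/-- The Fano plane seen from its line `x₁x₂x₃`: the other two lines through each `xᵢ` form one of
the three perfect matchings of the four points `a, b, c, d` off that line. -/
lemma containsFano_of_line_of_pairs {G : Finset (Finset V)} {x₁ x₂ x₃ a b c d : V}
    (hnodup : [x₁, x₂, x₃, a, b, c, d].Nodup) (hx : {x₁, x₂, x₃} ∈ G)
    (hab : {a, b, x₃} ∈ G) (hbc : {b, c, x₁} ∈ G) (hac : {a, c, x₂} ∈ G)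
    (hda : {d, a, x₁} ∈ G) (hdb : {d, b, x₂} ∈ G) (hdc : {d, c, x₃} ∈ G) :
    ContainsFano G := by
  refine ⟨⟨![x₁, x₂, x₃, a, b, c, d],
    List.nodup_ofFn.mp (by simpa [List.ofFn_succ] using hnodup)⟩, ?_⟩
  intro e he
  fin_cases he <;>
    simp only [map_insert, map_singleton, Function.Embedding.coeFn_mk, Matrix.cons_val_zero,
      Matrix.cons_val_one, Matrix.cons_val]
  all_goals first | assumption | (rw [insert_comm, pair_comm]; assumption)

end

theorem statement17 {V : Type*} [DecidableEq V] (G : Finset (Finset V))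
    (hunif : IsUniform 3 G) (hfree : ¬ ContainsFano G) (x₁ x₂ x₃ : V)
    (he : ({x₁, x₂, x₃} : Finset V) ∈ G) :
    ¬ ∃ T : Finset V, T.card = 4 ∧ (∀ y ∈ T, y ∉ ({x₁, x₂, x₃} : Finset V)) ∧
      ∀ y₁ ∈ T, ∀ y₂ ∈ T, y₁ ≠ y₂ →
        ({y₁, y₂, x₁} : Finset V) ∈ G ∧ ({y₁, y₂, x₂} : Finset V) ∈ G ∧
          ({y₁, y₂, x₃} : Finset V) ∈ G := by
  rintro ⟨T, hT, hTx, hpair⟩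
  obtain ⟨hx₁₂, hx₁₃, hx₂₃⟩ := pairwise_ne_of_card_eq_three (hunif _ he)
  obtain ⟨a, b, c, d, hab, hac, had, hbc, hbd, hcd, rfl⟩ := exists_eq_of_card_eq_four hT
  simp only [mem_insert, mem_singleton, forall_eq_or_imp, forall_eq, not_or] at hTx
  have hnodup : [x₁, x₂, x₃, a, b, c, d].Nodup := by
    simp only [List.nodup_cons, List.mem_cons, List.not_mem_nil, List.nodup_nil, or_false, not_or]
    grind
  exact hfree <| containsFano_of_line_of_pairs hnodup he
    (hpair a (by simp) b (by simp) hab).2.2 (hpair b (by simp) c (by simp) hbc).1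
    (hpair a (by simp) c (by simp) hac).2.1 (hpair d (by simp) a (by simp) had.symm).1
    (hpair d (by simp) b (by simp) hbd.symm).2.1 (hpair d (by simp) c (by simp) hcd.symm).2.2
end

section
/- Let ℓ ≥ r ≥ 3 be integers and let s satisfy ℓ − 1 ≤ s ≤ C(ℓ,2) − 1. Then for all sufficiently large n, there exists an n-vertex r-uniform hypergraph that is H_{ℓ+1}^r-free, has matching number at most s, and has s · t_{r−1}(n−s, ℓ−1) + 1 edges; in particular, ex_r(n, {H_{ℓ+1}^r, M_{s+1}^r}) ≥ s · t_{r−1}(n−s, ℓ−1) + 1. -/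
open Finset

variable {V : Type*}

/-- `G` contains a copy of `H_m^r` (the expansion of `K_m`, with core of size `m`): a core `K`
of `m` vertices together with, for each pair `p ⊆ K`, an edge `f p ∈ G` meeting `K` exactly in
`p`, such that edges assigned to distinct pairs meet exactly in the intersection of the pairs
(so the `r-2` enlargement vertices are new and pairwise distinct for distinct pairs). -/
def ContainsHext [DecidableEq V] (m : ℕ) (G : Finset (Finset V)) : Prop :=
  ∃ K : Finset V, K.card = m ∧ ∃ f : Finset V → Finset V,
    (∀ p ∈ K.powersetCard 2, f p ∈ G ∧ f p ∩ K = p) ∧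
    ∀ p ∈ K.powersetCard 2, ∀ q ∈ K.powersetCard 2, p ≠ q → f p ∩ f q = p ∩ q

/-!
Put `s` apex vertices next to `n - s` further ones carrying the Turán family
`T_{r-1}(n - s, ℓ - 1)`; take every edge `{a} ∪ e` with `a` an apex and `e` in the Turán family,
plus one edge `{a₀} ∪ B` with `B` an `(r-1)`-set outside it, which accounts for the `+ 1`.
Every edge contains exactly one apex. Hence a matching has at most `s` edges, and the core `K` of a
copy of `H_{ℓ+1}^r` contains at most one apex; the edges through the pairs of non-apex core
vertices then use pairwise distinct apexes outside `K`, so `C(|K \ A|, 2) ≤ s - |K ∩ A|`,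
which fails for `s ≤ C(ℓ, 2)`.
-/

section Hypergraph

variable [DecidableEq V]

theorem matchingLE_card_of_forall_inter_nonempty {H : Finset (Finset V)} {A : Finset V}
    (hH : ∀ e ∈ H, (e ∩ A).Nonempty) : MatchingLE H A.card := by
  intro M hMH hM
  refine card_le_card_of_forall_subsingleton (fun e x => x ∈ e) (fun e he => ?_) fun x _ => ?_
  · obtain ⟨x, hx⟩ := hH e (hMH he)
    exact ⟨x, (mem_inter.1 hx).2, (mem_inter.1 hx).1⟩
  · rintro e ⟨he, hxe⟩ e' ⟨he', hxe'⟩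
    by_contra hne
    exact disjoint_left.1 (hM he he' hne) hxe hxe'

section HextCore

variable {G : Finset (Finset V)} {A K : Finset V} {f : Finset V → Finset V}

theorem card_inter_le_one_of_hextCore (hG : ∀ e ∈ G, (e ∩ A).card = 1)
    (hfG : ∀ p ∈ K.powersetCard 2, f p ∈ G ∧ f p ∩ K = p) : (K ∩ A).card ≤ 1 := by
  refine card_le_one.2 fun a ha b hb => ?_
  by_contra hab
  have hp : {a, b} ∈ K.powersetCard 2 := mem_powersetCard.2 ⟨by grind, card_pair hab⟩
  obtain ⟨hpG, hpK⟩ := hfG _ hp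
  have hsub : {a, b} ⊆ f {a, b} ∩ A := by
    intro x hx
    have hxf : x ∈ f {a, b} ∩ K := by rw [hpK]; exact hx
    grind
  have := card_le_card hsub
  rw [card_pair hab, hG _ hpG] at this
  omega

theorem choose_card_sdiff_le_of_hextCore (hG : ∀ e ∈ G, (e ∩ A).card = 1)
    (hfG : ∀ p ∈ K.powersetCard 2, f p ∈ G ∧ f p ∩ K = p)
    (hf : ∀ p ∈ K.powersetCard 2, ∀ q ∈ K.powersetCard 2, p ≠ q → f p ∩ f q = p ∩ q) :
    (K \ A).card.choose 2 ≤ (A \ K).card := by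
  have hsub : ∀ p ∈ (K \ A).powersetCard 2, p ∈ K.powersetCard 2 :=
    fun p hp => powersetCard_mono sdiff_subset hp
  rw [← card_powersetCard]
  refine card_le_card_of_forall_subsingleton (fun p x => x ∈ f p) (fun p hp => ?_)
    fun x hx => ?_
  · obtain ⟨hpG, hpK⟩ := hfG p (hsub p hp)
    obtain ⟨x, hx⟩ := card_eq_one.1 (hG _ hpG)
    have hxA : x ∈ f p ∩ A := by rw [hx]; exact mem_singleton_self x
    refine ⟨x, mem_sdiff.2 ⟨(mem_inter.1 hxA).2, fun hxK => ?_⟩, (mem_inter.1 hxA).1⟩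
    have hxp : x ∈ f p ∩ K := mem_inter.2 ⟨(mem_inter.1 hxA).1, hxK⟩
    rw [hpK] at hxp
    exact (mem_sdiff.1 ((mem_powersetCard.1 hp).1 hxp)).2 (mem_inter.1 hxA).2
  · rintro p ⟨hp, hxp⟩ q ⟨hq, hxq⟩
    by_contra hpq
    have hxpq : x ∈ f p ∩ f q := mem_inter.2 ⟨hxp, hxq⟩
    rw [hf p (hsub p hp) q (hsub q hq) hpq] at hxpq
    exact (mem_sdiff.1 hx).2 ((mem_powersetCard.1 (hsub p hp)).1 (mem_inter.1 hxpq).1)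

end HextCore

theorem not_containsHext_of_forall_card_inter_eq_one {m : ℕ} {G : Finset (Finset V)}
    {A : Finset V} (hm : 2 ≤ m) (hA : A.card ≤ (m - 1).choose 2)
    (hG : ∀ e ∈ G, (e ∩ A).card = 1) : ¬ ContainsHext m G := by
  rintro ⟨K, hK, f, hfG, hf⟩
  have hKA := card_inter_le_one_of_hextCore hG hfG
  have hpairs := choose_card_sdiff_le_of_hextCore hG hfG hf
  have hKsplit := card_sdiff_add_card_inter K A
  have hAsplit := card_sdiff_add_card_inter A K
  rw [inter_comm] at hAsplit
  obtain ⟨t, rfl⟩ : ∃ t, m = t + 1 := ⟨m - 1, by omega⟩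
  have hchoose : (t + 1).choose 2 = t + t.choose 2 := by
    rw [Nat.choose_succ_succ, Nat.choose_one_right]
  rw [Nat.add_sub_cancel] at hA
  obtain hKA' | hKA' : (K \ A).card = t + 1 ∨ (K \ A).card = t := by omega
  all_goals rw [hKA'] at hpairs; omega

theorem insert_inter_eq_singleton_of_disjoint {A e : Finset V} {a : V} (ha : a ∈ A)
    (he : Disjoint e A) : insert a e ∩ A = {a} := by
  rw [insert_inter_of_mem ha, disjoint_iff_inter_eq_empty.1 he, insert_empty]

theorem insert_eq_insert_iff_of_disjoint {A e e' : Finset V} {a a' : V} (ha : a ∈ A)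
    (ha' : a' ∈ A) (he : Disjoint e A) (he' : Disjoint e' A) :
    insert a e = insert a' e' ↔ a = a' ∧ e = e' := by
  refine ⟨fun h => ⟨singleton_injective ?_, ?_⟩, fun ⟨rfl, rfl⟩ => rfl⟩
  · rw [← insert_inter_eq_singleton_of_disjoint ha he,
      ← insert_inter_eq_singleton_of_disjoint ha' he', h]
  · rw [← sdiff_eq_self_of_disjoint he, ← sdiff_eq_self_of_disjoint he',
      ← insert_sdiff_of_mem e ha, ← insert_sdiff_of_mem e' ha', h]

def cone (A : Finset V) (F : Finset (Finset V)) : Finset (Finset V) :=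
  (A ×ˢ F).image fun p => insert p.1 p.2

theorem card_cone {A : Finset V} {F : Finset (Finset V)} (hF : ∀ e ∈ F, Disjoint e A) :
    (cone A F).card = A.card * F.card := by
  rw [cone, card_image_of_injOn, card_product]
  rintro ⟨a, e⟩ hae ⟨a', e'⟩ hae' h
  simp only [coe_product, Set.mem_prod, mem_coe] at hae hae'
  obtain ⟨rfl, rfl⟩ :=
    (insert_eq_insert_iff_of_disjoint hae.1 hae'.1 (hF e hae.2) (hF e' hae'.2)).1 h
  rfl

theorem exists_hypergraph_of_cone {k m : ℕ} {A B : Finset V} {F : Finset (Finset V)} {a₀ : V}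
    (hm : 2 ≤ m) (hA : A.card ≤ (m - 1).choose 2) (ha₀ : a₀ ∈ A)
    (hF : ∀ e ∈ F, e.card = k ∧ Disjoint e A) (hB : B.card = k) (hBA : Disjoint B A)
    (hBF : B ∉ F) :
    ∃ H : Finset (Finset V), IsUniform (k + 1) H ∧ ¬ ContainsHext m H ∧ MatchingLE H A.card ∧
      H.card = A.card * F.card + 1 := by
  set H := insert (insert a₀ B) (cone A F)
  have hedge : ∀ e ∈ H, ∃ a ∈ A, ∃ f : Finset V, f.card = k ∧ Disjoint f A ∧ e = insert a f := by
    simp only [H, cone, mem_insert, mem_image, mem_product]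
    rintro e (rfl | ⟨⟨a, f⟩, ⟨ha, hf⟩, rfl⟩)
    · exact ⟨a₀, ha₀, B, hB, hBA, rfl⟩
    · exact ⟨a, ha, f, (hF f hf).1, (hF f hf).2, rfl⟩
  have hinter : ∀ e ∈ H, (e ∩ A).card = 1 := by
    intro e he
    obtain ⟨a, ha, f, -, hf, rfl⟩ := hedge e he
    rw [insert_inter_eq_singleton_of_disjoint ha hf, card_singleton]
  refine ⟨H, fun e he => ?_, not_containsHext_of_forall_card_inter_eq_one hm hA hinter,
    matchingLE_card_of_forall_inter_nonempty fun e he => one_le_card.1 (hinter e he).ge, ?_⟩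
  · obtain ⟨a, ha, f, hfk, hf, rfl⟩ := hedge e he
    rw [card_insert_of_notMem (disjoint_right.1 hf ha), hfk]
  · rw [card_insert_of_notMem, card_cone fun e he => (hF e he).2]
    simp only [cone, mem_image, mem_product]
    rintro ⟨⟨a, f⟩, ⟨ha, hf⟩, h⟩
    exact hBF ((insert_eq_insert_iff_of_disjoint ha ha₀ (hF f hf).2 hBA).1 h |>.2 ▸ hf)

end Hypergraph

def turanFamily (r n ℓ : ℕ) : Finset (Finset (Fin n)) :=
  univ.filter fun e => e.card = r ∧ ∀ x ∈ e, ∀ y ∈ e, x.val % ℓ = y.val % ℓ → x = y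

theorem turanCount_eq_card_turanFamily (r n ℓ : ℕ) :
    turanCount r n ℓ = (turanFamily r n ℓ).card := rfl

theorem exists_card_eq_notMem_turanFamily {k n ℓ : ℕ} (hk : 2 ≤ k) (hkn : k ≤ n) (hℓ : 0 < ℓ)
    (hℓn : ℓ < n) : ∃ B : Finset (Fin n), B.card = k ∧ B ∉ turanFamily k n ℓ := by
  let x : Fin n := ⟨0, by omega⟩
  let y : Fin n := ⟨ℓ, hℓn⟩
  have hxy : x ≠ y := Fin.ne_of_val_ne hℓ.ne
  obtain ⟨B, hxyB, -, hB⟩ := exists_subsuperset_card_eq (n := k) (subset_univ {x, y})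
    (by rwa [card_pair hxy]) (by rwa [card_univ, Fintype.card_fin])
  refine ⟨B, hB, fun hBT => hxy ?_⟩
  exact (mem_filter.1 hBT).2.2 x (hxyB (mem_insert_self x {y})) y
    (hxyB (mem_insert_of_mem (mem_singleton_self y))) (by simp [x, y])

theorem disjoint_map_castAddEmb_map_natAddEmb {m s : ℕ} (e : Finset (Fin m))
    (a : Finset (Fin s)) : Disjoint (e.map (Fin.castAddEmb s)) (a.map (Fin.natAddEmb m)) := by
  simp only [disjoint_left, mem_map]
  rintro _ ⟨x, -, rfl⟩ ⟨y, -, h⟩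
  have := congrArg Fin.val h
  simp only [Fin.natAddEmb_apply, Fin.castAddEmb_apply, Fin.val_natAdd, Fin.val_castAdd] at this
  omega

theorem statement18 (r ℓ s : ℕ) (hr : 3 ≤ r) (hℓ : r ≤ ℓ)
    (hs₁ : ℓ - 1 ≤ s) (hs₂ : s ≤ ℓ.choose 2 - 1) :
    ∃ n₀ : ℕ, ∀ n ≥ n₀, ∃ H : Finset (Finset (Fin n)),
      IsUniform r H ∧ ¬ ContainsHext (ℓ + 1) H ∧ MatchingLE H s ∧
      H.card = s * turanCount (r - 1) (n - s) (ℓ - 1) + 1 := by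
  refine ⟨s + ℓ, fun n hn => ?_⟩
  obtain ⟨m, rfl⟩ : ∃ m, n = m + s := ⟨n - s, by omega⟩
  obtain ⟨B, hB, hBT⟩ := exists_card_eq_notMem_turanFamily (k := r - 1) (n := m) (ℓ := ℓ - 1)
    (by omega) (by omega) (by omega) (by omega)
  let low : Finset (Fin m) ↪ Finset (Fin (m + s)) := (mapEmbedding (Fin.castAddEmb s)).toEmbedding
  let A : Finset (Fin (m + s)) := univ.map (Fin.natAddEmb m)
  have hA : A.card = s := by simp [A]
  have hF : ∀ e ∈ (turanFamily (r - 1) m (ℓ - 1)).map low, e.card = r - 1 ∧ Disjoint e A := by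
    simp only [mem_map]
    rintro _ ⟨e, he, rfl⟩
    exact ⟨by simp [low, (mem_filter.1 he).2.1], disjoint_map_castAddEmb_map_natAddEmb _ _⟩
  obtain ⟨H, hunif, hfree, hmatch, hcard⟩ := exists_hypergraph_of_cone (m := ℓ + 1) (B := low B)
    (a₀ := Fin.natAdd m ⟨0, by omega⟩) (by omega) (by rw [hA, Nat.add_sub_cancel]; omega)
    (mem_map_of_mem _ (mem_univ _)) hF (by simp [low, hB])
    (disjoint_map_castAddEmb_map_natAddEmb _ _) (by rwa [mem_map'])
  refine ⟨H, ?_, hfree, (congrArg (MatchingLE H) hA).mp hmatch, ?_⟩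
  · rwa [Nat.sub_add_cancel (by omega)] at hunif
  · rw [hcard, hA, card_map, Nat.add_sub_cancel, turanCount_eq_card_turanFamily]
end
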